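/- arXiv:2203.04652 — 4 statements merged into one kernel-verified Lean document; each statement's English description precedes it below -/
import Mathlib

section
/- Let G be a graph and v ∈ V(G) a free vertex of G. If J_G is unmixed and G∖{v} is accessible, then G is accessible. -/
open SimpleGraph

universe u u'

/-- The number of connected components of the induced subgraph of `G` on the vertex set `A`. -/
noncomputable def cComp {V : Type u} (G : SimpleGraph V) (A : Set V) : ℕ :=
  Nat.card (G.induce A).ConnectedComponent

/-- `x` is a cut vertex of the induced subgraph of `G` on `A`: removing `x`
increases the number of connected components. -/
def CutVertexOn {V : Type u} (G : SimpleGraph V) (A : Set V) (x : V) : Prop :=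
  x ∈ A ∧ cComp G A < cComp G (A \ {x})

/-- `T` is a cutset of the induced subgraph of `G` on `A`: every `t ∈ T` is a
cut vertex of `G[A] ∖ (T ∖ {t})`. -/
def CutsetOn {V : Type u} [DecidableEq V] (G : SimpleGraph V) (A : Set V) (T : Finset V) :
    Prop :=
  ↑T ⊆ A ∧ ∀ t ∈ T, CutVertexOn G (A \ ↑(T.erase t)) t

/-- The binomial edge ideal of the induced subgraph of `G` on `A` is unmixed
(combinatorial characterization): `c(T) = |T| + c(∅)` for every cutset `T`. -/
def UnmixedOn {V : Type u} [DecidableEq V] (G : SimpleGraph V) (A : Set V) : Prop :=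
  ∀ T : Finset V, CutsetOn G A T → cComp G (A \ ↑T) = T.card + cComp G A

/-- The induced subgraph of `G` on `A` is accessible. -/
def AccessibleOn {V : Type u} [DecidableEq V] (G : SimpleGraph V) (A : Set V) : Prop :=
  UnmixedOn G A ∧
    ∀ T : Finset V, CutsetOn G A T → T.Nonempty → ∃ t ∈ T, CutsetOn G A (T.erase t)

/-- The graph `(G[A])_x`: add all edges between neighbours of `x` lying in `A`. -/
def cliqueAtOn {V : Type u} (G : SimpleGraph V) (A : Set V) (x : V) : SimpleGraph V :=
  G ⊔ SimpleGraph.fromRel (fun a b => a ∈ A ∧ b ∈ A ∧ G.Adj x a ∧ G.Adj x b)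

/-- The binomial edge ideal of the induced subgraph of `G` on `A` is strongly unmixed. -/
inductive StronglyUnmixedOn {V : Type u} [DecidableEq V] : SimpleGraph V → Set V → Prop
  | complete (G : SimpleGraph V) (A : Set V)
      (h : ∀ a b : A, (G.induce A).Reachable a b → a ≠ b → (G.induce A).Adj a b) :
      StronglyUnmixedOn G A
  | cut (G : SimpleGraph V) (A : Set V) (hU : UnmixedOn G A) (x : V)
      (hx : CutVertexOn G A x)
      (h1 : StronglyUnmixedOn G (A \ {x}))
      (h2 : StronglyUnmixedOn (cliqueAtOn G A x) A)
      (h3 : StronglyUnmixedOn (cliqueAtOn G A x) (A \ {x})) :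
      StronglyUnmixedOn G A

/-- `x` is a free vertex of `G`: the induced subgraph on `N(x) ∪ {x}` is complete. -/
def FreeVertex {V : Type u} (G : SimpleGraph V) (x : V) : Prop :=
  ∀ a b : V, G.Adj x a → G.Adj x b → a ≠ b → G.Adj a b

/-- Attach a whisker (pendant vertex) at each vertex of `Wv`.  `Sum.inl a` is the
original vertex `a` and `Sum.inr x` is the whisker vertex `f_x` attached at `x ∈ Wv`. -/
def whiskered {V : Type u} (G : SimpleGraph V) (Wv : Set V) : SimpleGraph (V ⊕ V) :=
  SimpleGraph.fromRel (fun a b =>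
    (∃ x y, G.Adj x y ∧ a = Sum.inl x ∧ b = Sum.inl y) ∨
    (∃ x ∈ Wv, a = Sum.inl x ∧ b = Sum.inr x))

/-- `B` is (the vertex set of) a block of `G`: a maximal connected induced
subgraph having no cut vertex. -/
def IsBlock {V : Type u} (G : SimpleGraph V) (B : Set V) : Prop :=
  (G.induce B).Connected ∧ (∀ x, ¬ CutVertexOn G B x) ∧
    ∀ B' : Set V, B ⊆ B' → (G.induce B').Connected → (∀ x, ¬ CutVertexOn G B' x) → B' = B

/-- Glue two graphs `G` and `H`, identifying the vertex `x` of `G` with the vertex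
`y` of `H` (the identified vertex is `Sum.inl x`). -/
def glueAt {V : Type u} {W : Type u'} (G : SimpleGraph V) (H : SimpleGraph W) (x : V) (y : W) :
    SimpleGraph (V ⊕ W) :=
  SimpleGraph.fromRel (fun a b =>
    (∃ p q, G.Adj p q ∧ a = Sum.inl p ∧ b = Sum.inl q) ∨
    (∃ p q, H.Adj p q ∧ p ≠ y ∧ q ≠ y ∧ a = Sum.inr p ∧ b = Sum.inr q) ∨
    (∃ q, H.Adj y q ∧ a = Sum.inl x ∧ b = Sum.inr q))

/-- The star product `K_m ⋆_r K_n`: two complete graphs, on `{x₁,…,x_m}` (the `inl`s)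
and `{y₁,…,y_n}` (the `inr`s), together with the matching edges `{x_i, y_i}` for `1 ≤ i ≤ r`
(indices `0,…,r-1` here). -/
def starProd (m n r : ℕ) : SimpleGraph (Fin m ⊕ Fin n) :=
  SimpleGraph.fromRel (fun a b =>
    (∃ x y : Fin m, a = Sum.inl x ∧ b = Sum.inl y) ∨
    (∃ x y : Fin n, a = Sum.inr x ∧ b = Sum.inr y) ∨
    (∃ (x : Fin m) (y : Fin n), (x : ℕ) = (y : ℕ) ∧ (x : ℕ) < r ∧
      a = Sum.inl x ∧ b = Sum.inr y))

/-- The vertices `x_i, y_i` for `2 ≤ i ≤ r` (indices `1,…,r-1` here), at which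
whiskers are attached to form `overline(K_m ⋆_r K_n)`. -/
def starWhisk (m n r : ℕ) : Set (Fin m ⊕ Fin n) :=
  {a | (∃ x : Fin m, a = Sum.inl x ∧ 1 ≤ (x : ℕ) ∧ (x : ℕ) < r) ∨
       (∃ y : Fin n, a = Sum.inr y ∧ 1 ≤ (y : ℕ) ∧ (y : ℕ) < r)}

/-- `a` and `b` both lie in `A` and are joined by a path of the induced subgraph of `G` on `A`. -/
def ReachIn {V : Type u} (G : SimpleGraph V) (A : Set V) (a b : V) : Prop :=
  ∃ (ha : a ∈ A) (hb : b ∈ A), (G.induce A).Reachable ⟨a, ha⟩ ⟨b, hb⟩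

/-- Auxiliary (connected case): `G[A]` has no cut vertex, or for every cut vertex `x`,
every connected component of `G[A] ∖ {x}` contains at most `r` cut vertices of `G[A] ∖ {x}`. -/
def RCutConnAux {V : Type u} (G : SimpleGraph V) (A : Set V) (r : ℕ) : Prop :=
  (∀ x, ¬ CutVertexOn G A x) ∨
    ∀ x, CutVertexOn G A x → ∀ a ∈ A \ {x},
      Set.ncard {w | CutVertexOn G (A \ {x}) w ∧ ReachIn G (A \ {x}) a w} ≤ r

/-- `G[A]` is `r`-cut-connected: every connected component of `G[A]` satisfies the
condition of `RCutConnAux`. -/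
def RCutConn {V : Type u} (G : SimpleGraph V) (A : Set V) (r : ℕ) : Prop :=
  ∀ a ∈ A, RCutConnAux G {b | ReachIn G A a b} r

/-- `G[A]` is strongly `r`-cut-connected: it is `r`-cut-connected and, recursively,
`G[A] ∖ {x}` is strongly `r`-cut-connected for every cut vertex `x`. -/
inductive StronglyRCutConn {V : Type u} (r : ℕ) : SimpleGraph V → Set V → Prop
  | mk (G : SimpleGraph V) (A : Set V) (h1 : RCutConn G A r)
      (h2 : ∀ x, CutVertexOn G A x → StronglyRCutConn r G (A \ {x})) :
      StronglyRCutConn r G A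

section
set_option linter.unusedSectionVars false

namespace BEIAux

open SimpleGraph

variable {V : Type u} [Fintype V] {G : SimpleGraph V}

def adjComps (G : SimpleGraph V) (W : Set V) (t : V) :
    Set (G.induce W).ConnectedComponent :=
  {c | ∃ w, ∃ hw : w ∈ W, G.Adj t w ∧ (G.induce W).connectedComponentMk ⟨w, hw⟩ = c}

def inclHom {W Y : Set V} (h : W ⊆ Y) : G.induce W →g G.induce Y where
  toFun x := ⟨x.1, h x.2⟩
  map_rel' := by intro a b hab; simpa using hab

lemma reachIn_refl {W : Set V} {a : V} (ha : a ∈ W) : ReachIn G W a a :=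
  ⟨ha, ha, Reachable.refl _⟩

lemma reachIn_trans {W : Set V} {a b c : V} :
    ReachIn G W a b → ReachIn G W b c → ReachIn G W a c := by
  rintro ⟨ha, hb, h⟩ ⟨hb', hc, h'⟩
  exact ⟨ha, hc, h.trans h'⟩

lemma reachIn_adj {W : Set V} {a b : V} (ha : a ∈ W) (hb : b ∈ W) (h : G.Adj a b) :
    ReachIn G W a b :=
  ⟨ha, hb, SimpleGraph.Adj.reachable (by simpa using h)⟩

lemma reachIn_mono {W Y : Set V} (hWY : W ⊆ Y) {a b : V} :
    ReachIn G W a b → ReachIn G Y a b := by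
  rintro ⟨ha, hb, h⟩
  exact ⟨hWY ha, hWY hb, h.map (inclHom hWY)⟩

lemma reachIn_mk {W : Set V} {a b : V} (ha : a ∈ W) (hb : b ∈ W) :
    ReachIn G W a b ↔
      (G.induce W).connectedComponentMk ⟨a, ha⟩ = (G.induce W).connectedComponentMk ⟨b, hb⟩ := by
  rw [ConnectedComponent.eq]
  exact ⟨fun ⟨_, _, h⟩ => h, fun h => ⟨ha, hb, h⟩⟩

lemma walk_escape {W Y : Set V} (hWY : W ⊆ Y) :
    ∀ {x y : ↥Y} (_ : (G.induce Y).Walk x y), x.1 ∈ W → y.1 ∉ W →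
      ∃ b ∈ Y, b ∉ W ∧ ∃ u ∈ W, G.Adj b u ∧ ReachIn G W x.1 u := by
  intro x y p
  induction p with
  | nil => intro hx hy; exact absurd hx hy
  | @cons x z y h p ih =>
      intro hx hy
      by_cases hz : z.1 ∈ W
      · obtain ⟨b, hbY, hbW, u, huW, hadj, hr⟩ := ih hz hy
        exact ⟨b, hbY, hbW, u, huW, hadj,
          reachIn_trans (reachIn_adj hx hz (by simpa using h)) hr⟩
      · exact ⟨z.1, z.2, hz, x.1, hx, (show G.Adj x.1 z.1 by simpa using h).symm,
          reachIn_refl hx⟩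

lemma walk_union {W Y : Set V} (hWY : W ⊆ Y) :
    ∀ {x y : ↥Y} (_ : (G.induce Y).Walk x y), x.1 ∈ W → y.1 ∈ W →
      ReachIn G W x.1 y.1 ∨
        ((∃ b ∈ Y, b ∉ W ∧ ∃ u ∈ W, G.Adj b u ∧ ReachIn G W x.1 u) ∧
         (∃ b ∈ Y, b ∉ W ∧ ∃ u ∈ W, G.Adj b u ∧ ReachIn G W y.1 u)) := by
  intro x y p
  induction p with
  | nil => intro hx _; exact .inl (reachIn_refl hx)
  | @cons x z y h p ih =>
      intro hx hy
      by_cases hz : z.1 ∈ W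
      · rcases ih hz hy with hr | ⟨hz', hy'⟩
        · exact .inl (reachIn_trans (reachIn_adj hx hz (by simpa using h)) hr)
        · obtain ⟨b, hbY, hbW, u, huW, hadj, hr⟩ := hz'
          exact .inr ⟨⟨b, hbY, hbW, u, huW, hadj,
            reachIn_trans (reachIn_adj hx hz (by simpa using h)) hr⟩, hy'⟩
      · refine .inr ⟨⟨z.1, z.2, hz, x.1, hx,
          (show G.Adj x.1 z.1 by simpa using h).symm, reachIn_refl hx⟩, ?_⟩
        exact walk_escape hWY p.reverse hy hz


lemma cComp_union_singleton {W : Set V} {t : V} (ht : t ∉ W) :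
    cComp G (W ∪ {t}) + (adjComps G W t).ncard = cComp G W + 1 := by
  classical
  have hWY : W ⊆ W ∪ {t} := Set.subset_union_left
  have htY : t ∈ W ∪ {t} := Set.mem_union_right _ rfl
  set Y : Set V := W ∪ {t}
  let F : (G.induce W).ConnectedComponent → (G.induce Y).ConnectedComponent :=
    ConnectedComponent.map (inclHom hWY)
  set ct := (G.induce Y).connectedComponentMk ⟨t, htY⟩ with hct
  set S := adjComps G W t with hS
  have hbt : ∀ b ∈ Y, b ∉ W → b = t := by
    intro b hb hbW; rcases hb with h | h
    · exact absurd h hbW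
    · simpa using h
  have hmapmk : ∀ (w : ↥W), F ((G.induce W).connectedComponentMk w)
      = (G.induce Y).connectedComponentMk ⟨w.1, hWY w.2⟩ := by
    intro w; exact ConnectedComponent.map_mk _ _
  have hFS : ∀ c ∈ S, F c = ct := by
    rintro c ⟨w, hw, hadj, rfl⟩
    rw [hmapmk ⟨w, hw⟩, hct, ConnectedComponent.eq]
    exact SimpleGraph.Adj.reachable (by simpa using hadj.symm)
  have hFnS : ∀ c ∉ S, F c ≠ ct := by
    intro c hc
    obtain ⟨w, rfl⟩ := c.exists_rep
    show F ((G.induce W).connectedComponentMk w) ≠ ct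
    rw [hmapmk w]
    intro hreach
    rw [hct, ConnectedComponent.eq] at hreach
    obtain ⟨p⟩ := hreach
    obtain ⟨b, hbY, hbW, u, huW, hadj, hr⟩ := walk_escape hWY p w.2 ht
    have hbt' := hbt b hbY hbW
    subst hbt'
    exact hc ⟨u, huW, hadj, ((reachIn_mk w.2 huW).mp hr).symm⟩
  have hinj : Set.InjOn F Sᶜ := by
    intro c₁ h₁ c₂ h₂ heq
    obtain ⟨w₁, rfl⟩ := c₁.exists_rep
    obtain ⟨w₂, rfl⟩ := c₂.exists_rep
    show (G.induce W).connectedComponentMk w₁ = (G.induce W).connectedComponentMk w₂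
    have heq' : F ((G.induce W).connectedComponentMk w₁) = F ((G.induce W).connectedComponentMk w₂) := heq
    rw [hmapmk w₁, hmapmk w₂, ConnectedComponent.eq] at heq'
    obtain ⟨p⟩ := heq'
    rcases walk_union hWY p w₁.2 w₂.2 with hr | ⟨⟨b, hbY, hbW, u, huW, hadj, hr⟩, _⟩
    · exact (reachIn_mk w₁.2 w₂.2).mp hr
    · have hbt' := hbt b hbY hbW
      subst hbt'
      exact absurd ⟨u, huW, hadj, ((reachIn_mk w₁.2 huW).mp hr).symm⟩ h₁
  have hsurj : ∀ d, d = ct ∨ d ∈ F '' Sᶜ := by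
    intro d
    obtain ⟨x, rfl⟩ := d.exists_rep
    show (G.induce Y).connectedComponentMk x = ct ∨ (G.induce Y).connectedComponentMk x ∈ F '' Sᶜ
    rcases x.2 with hxW | hxt
    · set c := (G.induce W).connectedComponentMk ⟨x.1, hxW⟩ with hc
      have hFc : F c = (G.induce Y).connectedComponentMk x := by
        rw [hc, hmapmk ⟨x.1, hxW⟩]
      by_cases hcS : c ∈ S
      · exact .inl (by rw [← hFc, hFS c hcS])
      · exact .inr ⟨c, hcS, hFc⟩
    · left
      rw [hct]
      congr 1
      exact Subtype.ext (by simpa using hxt)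
  have hctni : ct ∉ F '' Sᶜ := by
    rintro ⟨c, hc, hFc⟩
    exact hFnS c hc hFc
  have huniv : (Set.univ : Set (G.induce Y).ConnectedComponent) = insert ct (F '' Sᶜ) := by
    ext d
    simp only [Set.mem_univ, true_iff, Set.mem_insert_iff]
    exact hsurj d
  have h1 : cComp G Y = (F '' Sᶜ).ncard + 1 := by
    have : cComp G Y = (Set.univ : Set (G.induce Y).ConnectedComponent).ncard := by
      rw [Set.ncard_univ]; rfl
    rw [this, huniv, Set.ncard_insert_of_notMem hctni (Set.toFinite _)]
  have h2 : (F '' Sᶜ).ncard = Sᶜ.ncard := Set.ncard_image_of_injOn hinj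
  have h3 : S.ncard + Sᶜ.ncard = cComp G W := Set.ncard_add_ncard_compl S
  omega


lemma isolated_reach {X : Set V} {v : V} (hiso : ∀ u ∈ X, ¬ G.Adj v u) :
    ∀ {x y : ↥X} (_ : (G.induce X).Walk x y), y.1 = v → x.1 = v := by
  intro x y p
  induction p with
  | nil => intro h; exact h
  | @cons x z y h p ih =>
      intro hy
      have hzv := ih hy
      have hadj : G.Adj x.1 z.1 := by simpa using h
      rw [hzv] at hadj
      exact absurd hadj.symm (hiso x.1 x.2)

lemma diff_inj {X : Set V} {v : V}
    (hco : ∀ u₁ u₂, u₁ ∈ X \ {v} → u₂ ∈ X \ {v} → G.Adj v u₁ → G.Adj v u₂ →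
      ReachIn G (X \ {v}) u₁ u₂) :
    Function.Injective
      (ConnectedComponent.map (inclHom (Set.diff_subset : X \ {v} ⊆ X)) :
        (G.induce (X \ {v})).ConnectedComponent → (G.induce X).ConnectedComponent) := by
  intro c₁ c₂ heq
  obtain ⟨w₁, rfl⟩ := c₁.exists_rep
  obtain ⟨w₂, rfl⟩ := c₂.exists_rep
  show (G.induce (X \ {v})).connectedComponentMk w₁ = (G.induce (X \ {v})).connectedComponentMk w₂
  have heq' : ConnectedComponent.map (inclHom (Set.diff_subset : X \ {v} ⊆ X))
      ((G.induce (X \ {v})).connectedComponentMk w₁)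
      = ConnectedComponent.map (inclHom (Set.diff_subset : X \ {v} ⊆ X))
      ((G.induce (X \ {v})).connectedComponentMk w₂) := heq
  rw [ConnectedComponent.map_mk, ConnectedComponent.map_mk, ConnectedComponent.eq] at heq'
  obtain ⟨p⟩ := heq'
  rcases walk_union Set.diff_subset p w₁.2 w₂.2 with hr |
    ⟨⟨b₁, hb₁X, hb₁, u₁, hu₁, ha₁, hr₁⟩, ⟨b₂, hb₂X, hb₂, u₂, hu₂, ha₂, hr₂⟩⟩
  · exact (reachIn_mk w₁.2 w₂.2).mp hr
  · have hb₁v : b₁ = v := by by_contra hx; exact hb₁ ⟨hb₁X, by simp [hx]⟩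
    have hb₂v : b₂ = v := by by_contra hx; exact hb₂ ⟨hb₂X, by simp [hx]⟩
    subst hb₁v; subst hb₂v
    have hmid := hco u₁ u₂ hu₁ hu₂ ha₁ ha₂
    have e₁ := (reachIn_mk w₁.2 hu₁).mp hr₁
    have e₂ := (reachIn_mk w₂.2 hu₂).mp hr₂
    have e₃ := (reachIn_mk hu₁ hu₂).mp hmid
    rw [e₁, e₃, ← e₂]

lemma hco_of_free {X : Set V} {v : V} (hfree : FreeVertex G v) :
    ∀ u₁ u₂, u₁ ∈ X \ {v} → u₂ ∈ X \ {v} → G.Adj v u₁ → G.Adj v u₂ →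
      ReachIn G (X \ {v}) u₁ u₂ := by
  intro u₁ u₂ h₁ h₂ a₁ a₂
  by_cases e : u₁ = u₂
  · subst e; exact reachIn_refl h₁
  · exact reachIn_adj h₁ h₂ (hfree u₁ u₂ a₁ a₂ e)

lemma map_adjComps_subset {W Y : Set V} (hWY : W ⊆ Y) (s : V) :
    (ConnectedComponent.map (inclHom (G := G) hWY)) '' adjComps G W s ⊆ adjComps G Y s := by
  rintro d ⟨c, ⟨w, hw, hadj, rfl⟩, rfl⟩
  rw [ConnectedComponent.map_mk]
  exact ⟨w, hWY hw, hadj, rfl⟩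

lemma ncard_adjComps_diff_le {X : Set V} {v s : V}
    (hco : ∀ u₁ u₂, u₁ ∈ X \ {v} → u₂ ∈ X \ {v} → G.Adj v u₁ → G.Adj v u₂ →
      ReachIn G (X \ {v}) u₁ u₂) :
    (adjComps G (X \ {v}) s).ncard ≤ (adjComps G X s).ncard := by
  rw [← Set.ncard_image_of_injOn ((diff_inj hco).injOn : Set.InjOn _ (adjComps G (X \ {v}) s))]
  exact Set.ncard_le_ncard (map_adjComps_subset Set.diff_subset s) (Set.toFinite _)

lemma ncard_adjComps_diff_eq_of_nbr {X : Set V} {v u₀ s : V} (hfree : FreeVertex G v)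
    (hu₀ : u₀ ∈ X) (hadj₀ : G.Adj v u₀) (hs : s ∉ X) :
    (adjComps G (X \ {v}) s).ncard = (adjComps G X s).ncard := by
  rw [← Set.ncard_image_of_injOn ((diff_inj (hco_of_free hfree)).injOn :
    Set.InjOn _ (adjComps G (X \ {v}) s))]
  congr 1
  refine Set.Subset.antisymm (map_adjComps_subset Set.diff_subset s) ?_
  rintro d ⟨w, hw, hadj, rfl⟩
  by_cases hwv : w = v
  · have hadj' : G.Adj s v := hwv ▸ hadj
    have hsu : G.Adj s u₀ := hfree s u₀ hadj'.symm hadj₀ (fun hh => hs (hh ▸ hu₀))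
    have hu₀' : u₀ ∈ X \ {v} := ⟨hu₀, by simp [hadj₀.ne']⟩
    refine ⟨(G.induce (X \ {v})).connectedComponentMk ⟨u₀, hu₀'⟩, ⟨u₀, hu₀', hsu, rfl⟩, ?_⟩
    rw [ConnectedComponent.map_mk, ConnectedComponent.eq]
    refine SimpleGraph.Adj.reachable ?_
    show G.Adj u₀ w
    rw [hwv]
    exact hadj₀.symm
  · refine ⟨(G.induce (X \ {v})).connectedComponentMk ⟨w, ⟨hw, by simp [hwv]⟩⟩,
      ⟨w, ⟨hw, by simp [hwv]⟩, hadj, rfl⟩, ?_⟩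
    rw [ConnectedComponent.map_mk]
    rfl

lemma ncard_adjComps_diff_eq_of_iso {X : Set V} {v s : V}
    (hiso : ∀ u ∈ X, ¬ G.Adj v u) (hsv : ¬ G.Adj s v) :
    (adjComps G (X \ {v}) s).ncard = (adjComps G X s).ncard := by
  have hco : ∀ u₁ u₂, u₁ ∈ X \ {v} → u₂ ∈ X \ {v} → G.Adj v u₁ → G.Adj v u₂ →
      ReachIn G (X \ {v}) u₁ u₂ := fun u₁ _ h₁ _ a₁ _ => absurd a₁ (hiso u₁ h₁.1)
  rw [← Set.ncard_image_of_injOn ((diff_inj hco).injOn :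
    Set.InjOn _ (adjComps G (X \ {v}) s))]
  congr 1
  refine Set.Subset.antisymm (map_adjComps_subset Set.diff_subset s) ?_
  rintro d ⟨w, hw, hadj, rfl⟩
  have hwv : w ≠ v := fun hh => hsv (hh ▸ hadj)
  refine ⟨(G.induce (X \ {v})).connectedComponentMk ⟨w, ⟨hw, by simp [hwv]⟩⟩,
    ⟨w, ⟨hw, by simp [hwv]⟩, hadj, rfl⟩, ?_⟩
  rw [ConnectedComponent.map_mk]
  rfl

lemma ncard_adjComps_succ_of_iso {X : Set V} {v s : V} (hv : v ∈ X)
    (hiso : ∀ u ∈ X, ¬ G.Adj v u) (hsv : G.Adj s v) :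
    (adjComps G X s).ncard = (adjComps G (X \ {v}) s).ncard + 1 := by
  have hco : ∀ u₁ u₂, u₁ ∈ X \ {v} → u₂ ∈ X \ {v} → G.Adj v u₁ → G.Adj v u₂ →
      ReachIn G (X \ {v}) u₁ u₂ := fun u₁ _ h₁ _ a₁ _ => absurd a₁ (hiso u₁ h₁.1)
  have himg : adjComps G X s =
      insert ((G.induce X).connectedComponentMk ⟨v, hv⟩)
        ((ConnectedComponent.map (inclHom (Set.diff_subset : X \ {v} ⊆ X))) ''
          adjComps G (X \ {v}) s) := by
    ext d
    constructor
    · rintro ⟨w, hw, hadj, rfl⟩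
      by_cases hwv : w = v
      · subst hwv; exact .inl rfl
      · refine .inr ⟨(G.induce (X \ {v})).connectedComponentMk ⟨w, ⟨hw, by simp [hwv]⟩⟩,
          ⟨w, ⟨hw, by simp [hwv]⟩, hadj, rfl⟩, ?_⟩
        rw [ConnectedComponent.map_mk]
        rfl
    · rintro (rfl | hd)
      · exact ⟨v, hv, hsv, rfl⟩
      · exact map_adjComps_subset Set.diff_subset s hd
  have hni : (G.induce X).connectedComponentMk ⟨v, hv⟩ ∉
      (ConnectedComponent.map (inclHom (Set.diff_subset : X \ {v} ⊆ X))) ''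
        adjComps G (X \ {v}) s := by
    rintro ⟨c, _, hFc⟩
    obtain ⟨w, rfl⟩ := c.exists_rep
    have hFc0 : ConnectedComponent.map (inclHom (Set.diff_subset : X \ {v} ⊆ X))
        ((G.induce (X \ {v})).connectedComponentMk w)
        = (G.induce X).connectedComponentMk ⟨v, hv⟩ := hFc
    rw [ConnectedComponent.map_mk] at hFc0
    have hFc' : (G.induce X).connectedComponentMk ⟨w.1, Set.diff_subset w.2⟩
        = (G.induce X).connectedComponentMk ⟨v, hv⟩ := hFc0
    rw [ConnectedComponent.eq] at hFc'
    obtain ⟨p⟩ := hFc'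
    exact absurd (isolated_reach hiso p rfl) (by simpa using w.2.2)
  rw [himg, Set.ncard_insert_of_notMem hni (Set.toFinite _),
    Set.ncard_image_of_injOn ((diff_inj hco).injOn : Set.InjOn _ (adjComps G (X \ {v}) s))]

lemma ncard_adjComps_free_le_one {v : V} (hfree : FreeVertex G v) (Y : Set V) :
    (adjComps G Y v).ncard ≤ 1 := by
  by_contra h
  push_neg at h
  have h2 : 1 < (adjComps G Y v).ncard := by omega
  obtain ⟨c₁, h₁, c₂, h₂, hne⟩ := (Set.one_lt_ncard (Set.toFinite _)).mp h2
  obtain ⟨w₁, hw₁, ha₁, rfl⟩ := h₁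
  obtain ⟨w₂, hw₂, ha₂, rfl⟩ := h₂
  apply hne
  by_cases e : w₁ = w₂
  · subst e; rfl
  · rw [ConnectedComponent.eq]
    exact SimpleGraph.Adj.reachable (by simpa using hfree w₁ w₂ ha₁ ha₂ e)

lemma free_not_cutVertex {v : V} (hfree : FreeVertex G v) (A : Set V) :
    ¬ CutVertexOn G A v := by
  rintro ⟨hv, hlt⟩
  have hL := cComp_union_singleton (G := G) (W := A \ {v}) (t := v) (by simp)
  rw [show (A \ {v}) ∪ {v} = A by
    rw [Set.diff_union_self]; exact Set.union_eq_self_of_subset_right (by simpa using hv)] at hL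
  have := ncard_adjComps_free_le_one hfree (A \ {v})
  omega

lemma cutVertexOn_iff {A : Set V} {t : V} (ht : t ∈ A) :
    CutVertexOn G A t ↔ 2 ≤ (adjComps G (A \ {t}) t).ncard := by
  have hL := cComp_union_singleton (G := G) (W := A \ {t}) (t := t) (by simp)
  rw [show (A \ {t}) ∪ {t} = A by
    rw [Set.diff_union_self]; exact Set.union_eq_self_of_subset_right (by simpa using ht)] at hL
  constructor
  · rintro ⟨_, hlt⟩; omega
  · intro h2; exact ⟨ht, by omega⟩

lemma cutsetOn_iff [DecidableEq V] {Z : Set V} {T : Finset V} (hTZ : ↑T ⊆ Z) :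
    CutsetOn G Z T ↔ ∀ t ∈ T, 2 ≤ (adjComps G (Z \ ↑T) t).ncard := by
  have hset : ∀ t ∈ T, (Z \ ↑(T.erase t)) \ {t} = Z \ ↑T := by
    intro t htT
    have hmem : ∀ x, x ∈ ((T.erase t : Finset V) : Set V) ↔ (x ≠ t ∧ x ∈ T) := by
      intro x; rw [Finset.mem_coe, Finset.mem_erase]
    ext x
    simp only [Set.mem_diff, Set.mem_singleton_iff, hmem, Finset.mem_coe]
    constructor
    · rintro ⟨⟨hxZ, hne⟩, hxt⟩
      exact ⟨hxZ, fun hxT => hne ⟨hxt, hxT⟩⟩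
    · rintro ⟨hxZ, hxT⟩
      exact ⟨⟨hxZ, fun h => hxT h.2⟩, fun h => hxT (h ▸ htT)⟩
  constructor
  · intro hcs t htT
    have h := hcs.2 t htT
    have htA : t ∈ Z \ ↑(T.erase t) := ⟨hTZ htT, by simp⟩
    have := (cutVertexOn_iff htA).mp h
    rwa [hset t htT] at this
  · intro h
    refine ⟨hTZ, fun t htT => ?_⟩
    have htA : t ∈ Z \ ↑(T.erase t) := ⟨hTZ htT, by simp⟩
    rw [cutVertexOn_iff htA, hset t htT]
    exact h t htT


end BEIAux

end

/-- if `v` is a free vertex of `G`, `J_G` is unmixed and `G∖{v}` is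
accessible, then `G` is accessible. -/

theorem accessible_of_free_vertex {V : Type u} [Fintype V] [DecidableEq V]
    (G : SimpleGraph V) (v : V) (hfree : FreeVertex G v)
    (hunm : UnmixedOn G Set.univ)
    (hacc : AccessibleOn G ({v}ᶜ : Set V)) :
    AccessibleOn G Set.univ := by
  classical
  obtain ⟨hunm', hacc2⟩ := hacc
  refine ⟨hunm, ?_⟩
  intro T hT hTne
  have hvT : v ∉ T := by
    intro hvT
    exact BEIAux.free_not_cutVertex hfree _ (hT.2 v hvT)
  have hcrit : ∀ t ∈ T, 2 ≤ (BEIAux.adjComps G (Set.univ \ ↑T) t).ncard :=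
    (BEIAux.cutsetOn_iff (Set.subset_univ _)).mp hT
  have hvW : v ∈ Set.univ \ (↑T : Set V) := ⟨trivial, by simpa using hvT⟩
  have hTW : ∀ s ∈ T, s ∉ Set.univ \ (↑T : Set V) := fun s hs h => h.2 hs
  have hdiffv : ∀ E : Set V, ({v}ᶜ : Set V) \ E = (Set.univ \ E) \ {v} := by
    intro E; ext x
    simp only [Set.mem_diff, Set.mem_compl_iff, Set.mem_singleton_iff, Set.mem_univ, true_and]
    tauto
  by_cases hcaseI : ∀ t ∈ T, 2 ≤ (BEIAux.adjComps G ((Set.univ \ ↑T) \ {v}) t).ncard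
  · -- Case I : T is a cutset of G - v
    have hTZ : (↑T : Set V) ⊆ ({v}ᶜ : Set V) := by
      intro x hx
      simp only [Set.mem_compl_iff, Set.mem_singleton_iff]
      rintro rfl; exact hvT hx
    have hTv : CutsetOn G ({v}ᶜ) T := by
      rw [BEIAux.cutsetOn_iff hTZ, hdiffv]; exact hcaseI
    obtain ⟨t, htT, ht'⟩ := hacc2 T hTv hTne
    refine ⟨t, htT, ?_⟩
    rw [BEIAux.cutsetOn_iff (Set.subset_univ _)]
    intro s hs
    have hTZ' : (↑(T.erase t) : Set V) ⊆ ({v}ᶜ : Set V) := fun x hx =>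
      hTZ (Finset.mem_coe.mpr (Finset.mem_of_mem_erase (Finset.mem_coe.mp hx)))
    have h2 := (BEIAux.cutsetOn_iff hTZ').mp ht' s hs
    have hset1 : Set.univ \ (↑(T.erase t) : Set V) = (Set.univ \ ↑T) ∪ {t} := by
      ext x
      simp only [Set.mem_diff, Set.mem_univ, true_and, Set.mem_union, Set.mem_singleton_iff,
        Finset.mem_coe, Finset.mem_erase]
      tauto
    rw [hset1]
    rw [hdiffv, hset1] at h2
    exact le_trans h2 (BEIAux.ncard_adjComps_diff_le (BEIAux.hco_of_free hfree))
  · -- Case II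
    push_neg at hcaseI
    obtain ⟨t, htT, hlt⟩ := hcaseI
    set W : Set V := Set.univ \ ↑T with hW
    have htW : t ∉ W := hTW t htT
    -- v is isolated in W
    have hiso : ∀ u ∈ W, ¬ G.Adj v u := by
      by_contra hcon
      push_neg at hcon
      obtain ⟨u₀, hu₀, hadj₀⟩ := hcon
      have heq := BEIAux.ncard_adjComps_diff_eq_of_nbr hfree hu₀ hadj₀ htW
      have h2 := hcrit t htT
      omega
    have htv : G.Adj t v := by
      by_contra hcon
      have heq := BEIAux.ncard_adjComps_diff_eq_of_iso hiso hcon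
      have h2 := hcrit t htT
      omega
    set K := BEIAux.adjComps G W t with hK
    have hK2 : K.ncard = 2 := by
      rw [hK]
      have heq := BEIAux.ncard_adjComps_succ_of_iso hvW hiso htv
      have h2 := hcrit t htT
      omega
    set Bad := T.filter (fun s => BEIAux.adjComps G W s ⊆ K) with hBad
    have htBad : t ∈ Bad := Finset.mem_filter.mpr ⟨htT, subset_rfl⟩
    have hBadT : Bad ⊆ T := Finset.filter_subset _ _
    have hBadK : ∀ b ∈ Bad, BEIAux.adjComps G W b = K := by
      intro b hb
      refine Set.eq_of_subset_of_ncard_le ((Finset.mem_filter.mp hb).2) ?_ (Set.toFinite _)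
      rw [hK2]
      exact hcrit b (hBadT hb)
    have hvmk : (G.induce W).connectedComponentMk ⟨v, hvW⟩ ∈ K := ⟨v, hvW, htv, rfl⟩
    have hBadv : ∀ b ∈ Bad, G.Adj b v := by
      intro b hb
      have hmem : (G.induce W).connectedComponentMk ⟨v, hvW⟩ ∈ BEIAux.adjComps G W b := by
        rw [hBadK b hb]; exact hvmk
      obtain ⟨w, hw, hadj, hmk⟩ := hmem
      have hr : ReachIn G W w v := (BEIAux.reachIn_mk hw hvW).mpr hmk
      obtain ⟨hw', hv', hreach⟩ := hr
      obtain ⟨p⟩ := hreach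
      have hwv : w = v := BEIAux.isolated_reach hiso p rfl
      rwa [hwv] at hadj
    have hWnotin : ∀ a ∈ Bad, a ∉ W := fun a ha => hTW a (hBadT ha)
    -- one new component when adding a Bad vertex
    have hstep : ∀ (S : Finset V), (↑S : Set V) ⊆ ↑Bad → t ∈ S → ∀ a ∈ Bad, a ∉ S →
        BEIAux.adjComps G (W ∪ ↑S) a =
          {(G.induce (W ∪ ↑S)).connectedComponentMk ⟨v, Set.mem_union_left _ hvW⟩} := by
      intro S hSB htS a haB haS
      apply Set.Subset.antisymm
      · rintro c ⟨w, hw, hadj, rfl⟩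
        simp only [Set.mem_singleton_iff]
        rw [← BEIAux.reachIn_mk hw (Set.mem_union_left _ hvW)]
        rcases hw with hwW | hwS
        · have hmem : (G.induce W).connectedComponentMk ⟨w, hwW⟩ ∈ K := by
            rw [← hBadK a haB]; exact ⟨w, hwW, hadj, rfl⟩
          obtain ⟨u₂, hu₂, hadj₂, hmk₂⟩ := hmem
          have hr : ReachIn G W w u₂ := (BEIAux.reachIn_mk hwW hu₂).mpr hmk₂.symm
          refine BEIAux.reachIn_trans (BEIAux.reachIn_mono Set.subset_union_left hr) ?_
          refine BEIAux.reachIn_trans (BEIAux.reachIn_adj (Set.mem_union_left _ hu₂)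
            (Set.mem_union_right _ (Finset.mem_coe.mpr htS)) hadj₂.symm) ?_
          exact BEIAux.reachIn_adj (Set.mem_union_right _ (Finset.mem_coe.mpr htS))
            (Set.mem_union_left _ hvW) htv
        · have hwBad : w ∈ Bad := Finset.mem_coe.mp (hSB hwS)
          exact BEIAux.reachIn_adj (Set.mem_union_right _ hwS) (Set.mem_union_left _ hvW)
            (hBadv w hwBad)
      · intro c hc
        rw [Set.mem_singleton_iff] at hc
        subst hc
        exact ⟨v, Set.mem_union_left _ hvW, hBadv a haB, rfl⟩
    -- component count of W ∪ Bad
    have hcard : ∀ S' : Finset V, S' ⊆ Bad.erase t →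
        cComp G (W ∪ ↑(insert t S')) + 1 = cComp G W := by
      intro S'
      induction S' using Finset.induction_on with
      | empty =>
          intro _
          have hL := BEIAux.cComp_union_singleton (G := G) (W := W) (t := t) htW
          have hco : ((insert t (∅ : Finset V) : Finset V) : Set V) = ({t} : Set V) := by simp
          rw [hco]
          rw [← hK] at hL
          omega
      | @insert a S'' haS'' ih =>
          intro hsub
          have haBe : a ∈ Bad.erase t := hsub (Finset.mem_insert_self _ _)
          have haB : a ∈ Bad := Finset.mem_of_mem_erase haBe
          have hat : a ≠ t := Finset.ne_of_mem_erase haBe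
          have hS''sub : S'' ⊆ Bad.erase t := fun x hx => hsub (Finset.mem_insert_of_mem hx)
          have hprev := ih hS''sub
          have hsetid : (W ∪ ↑(insert t (insert a S'')) : Set V)
              = (W ∪ ↑(insert t S'')) ∪ {a} := by
            ext x
            simp only [Set.mem_union, Finset.coe_insert, Set.mem_insert_iff,
              Set.mem_singleton_iff, Finset.mem_coe]
            tauto
          have hanotin : a ∉ W ∪ (↑(insert t S'') : Set V) := by
            rintro (h | h)
            · exact hWnotin a haB h
            · rcases Finset.mem_insert.mp (Finset.mem_coe.mp h) with h' | h'
              · exact hat h'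
              · exact haS'' h'
          have hL := BEIAux.cComp_union_singleton (G := G) (W := W ∪ ↑(insert t S''))
            (t := a) hanotin
          have hSsub : (↑(insert t S'') : Set V) ⊆ ↑Bad := by
            intro x hx
            rcases Finset.mem_insert.mp (Finset.mem_coe.mp hx) with h' | h'
            · exact Finset.mem_coe.mpr (h' ▸ htBad)
            · exact Finset.mem_coe.mpr (Finset.mem_of_mem_erase (hS''sub h'))
          have hone := hstep (insert t S'') hSsub (Finset.mem_insert_self _ _) a haB
            (fun h => by
              rcases Finset.mem_insert.mp h with h' | h'
              · exact hat h'
              · exact haS'' h')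
          rw [hone, Set.ncard_singleton] at hL
          rw [hsetid]
          omega
    have hWBad : cComp G (W ∪ ↑Bad) + 1 = cComp G W := by
      have h := hcard (Bad.erase t) (Finset.Subset.refl _)
      rwa [Finset.insert_erase htBad] at h
    -- U = T \ Bad is a cutset of G
    set U := T \ Bad with hU
    have hsetU : Set.univ \ (↑U : Set V) = W ∪ ↑Bad := by
      rw [hW, hU]
      ext x
      simp only [Set.mem_diff, Set.mem_univ, true_and, Set.mem_union, Finset.coe_sdiff,
        Set.mem_diff, Finset.mem_coe, Finset.mem_sdiff]
      by_cases hx : x ∈ Bad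
      · simp [hx, hBadT hx]
      · simp [hx]
    have hUcut : CutsetOn G Set.univ U := by
      rw [BEIAux.cutsetOn_iff (Set.subset_univ _), hsetU]
      intro u huU
      obtain ⟨huT, huB⟩ := Finset.mem_sdiff.mp huU
      have hune : ¬ BEIAux.adjComps G W u ⊆ K := fun hsub =>
        huB (Finset.mem_filter.mpr ⟨huT, hsub⟩)
      obtain ⟨cstar, hcin, hcnot⟩ := Set.not_subset.mp hune
      have h2u := hcrit u huT
      have hex : ∃ c' ∈ BEIAux.adjComps G W u, c' ≠ cstar := by
        by_contra hcon
        push_neg at hcon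
        have hsub : BEIAux.adjComps G W u ⊆ {cstar} := fun c hc => hcon c hc
        have hle := Set.ncard_le_ncard hsub (Set.toFinite _)
        rw [Set.ncard_singleton] at hle
        omega
      obtain ⟨c', hc'in, hc'ne⟩ := hex
      obtain ⟨wst, hwst, hadjst, hmkst⟩ := hcin
      obtain ⟨w', hw', hadj', hmk'⟩ := hc'in
      have hone : 1 < (BEIAux.adjComps G (W ∪ ↑Bad) u).ncard := by
        refine (Set.one_lt_ncard (Set.toFinite _)).mpr
          ⟨(G.induce (W ∪ ↑Bad)).connectedComponentMk ⟨wst, Set.mem_union_left _ hwst⟩,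
            ⟨wst, Set.mem_union_left _ hwst, hadjst, rfl⟩,
           (G.induce (W ∪ ↑Bad)).connectedComponentMk ⟨w', Set.mem_union_left _ hw'⟩,
            ⟨w', Set.mem_union_left _ hw', hadj', rfl⟩, ?_⟩
        intro heq
        rw [SimpleGraph.ConnectedComponent.eq] at heq
        obtain ⟨p⟩ := heq
        rcases BEIAux.walk_union Set.subset_union_left p hwst hw' with hr |
          ⟨⟨b, hbY, hbW, u₂, hu₂, hadj₂, hr₂⟩, _⟩
        · exact hc'ne (hmk'.symm.trans
            ((((BEIAux.reachIn_mk hwst hw').mp hr).symm).trans hmkst))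
        · have hbBad : b ∈ Bad := by
            rcases hbY with h | h
            · exact absurd h hbW
            · exact Finset.mem_coe.mp h
          have hmemK : (G.induce W).connectedComponentMk ⟨u₂, hu₂⟩ ∈ K := by
            rw [← hBadK b hbBad]
            exact ⟨u₂, hu₂, hadj₂, rfl⟩
          have hcK : cstar ∈ K := by
            rw [← hmkst, (BEIAux.reachIn_mk hwst hu₂).mp hr₂]
            exact hmemK
          exact hcnot hcK
      omega
    -- unmixedness forces |Bad| = 1
    have e1 := hunm T hT
    have e2 := hunm U hUcut
    rw [← hW] at e1
    rw [hsetU] at e2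
    have hcardle : Bad.card ≤ T.card := Finset.card_le_card hBadT
    have hUcard : U.card = T.card - Bad.card := Finset.card_sdiff_of_subset hBadT
    have hBad1 : Bad.card = 1 := by omega
    obtain ⟨b₀, hb₀⟩ := Finset.card_eq_one.mp hBad1
    have hbt : b₀ = t := by
      have hm := htBad
      rw [hb₀] at hm
      exact (Finset.mem_singleton.mp hm).symm
    refine ⟨t, htT, ?_⟩
    have hTU : T.erase t = U := by
      rw [Finset.erase_eq, hU, hb₀, hbt]
    rw [hTU]
    exact hUcut
end

section
/- Let G = G₁ ∪ G₂ be a graph with V(G₁) ∩ V(G₂) = {v}. Then the cutsets of G_v are exactly the sets T₁ ∪ T₂ with T₁ ∈ 𝔠((G₁)_v) and T₂ ∈ 𝔠((G₂)_v). In particular: J_{(G₁)_v} and J_{(G₂)_v} are both unmixed if and only if J_{G_v} is unmixed, and (G₁)_v and (G₂)_v are both accessible if and only if G_v is accessible. -/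
open SimpleGraph

universe u u'

section Helpers

variable {V : Type u}

lemma reachIn_refl (K : SimpleGraph V) {A : Set V} {a : V} (ha : a ∈ A) : ReachIn K A a a :=
  ⟨ha, ha, Reachable.refl _⟩

lemma reachIn_symm {K : SimpleGraph V} {A : Set V} {a b : V} :
    ReachIn K A a b → ReachIn K A b a := fun ⟨ha, hb, h⟩ => ⟨hb, ha, h.symm⟩

lemma reachIn_trans {K : SimpleGraph V} {A : Set V} {a b c : V} :
    ReachIn K A a b → ReachIn K A b c → ReachIn K A a c :=
  fun ⟨ha, _, h⟩ ⟨_, hc, h'⟩ => ⟨ha, hc, h.trans h'⟩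

lemma reachIn_adj {K : SimpleGraph V} {A : Set V} {a b : V} (hadj : K.Adj a b)
    (ha : a ∈ A) (hb : b ∈ A) : ReachIn K A a b :=
  ⟨ha, hb, Adj.reachable hadj⟩

lemma reachIn_mem {K : SimpleGraph V} {A : Set V} {a b : V} (h : ReachIn K A a b) :
    a ∈ A ∧ b ∈ A := ⟨h.1, h.2.1⟩

def inclHom (K : SimpleGraph V) {A B : Set V} (h : A ⊆ B) : K.induce A →g K.induce B :=
  ⟨Set.inclusion h, fun hadj => hadj⟩

lemma reachIn_mono {K : SimpleGraph V} {A B : Set V} (hAB : A ⊆ B) {a b : V}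
    (h : ReachIn K A a b) : ReachIn K B a b := by
  obtain ⟨ha, hb, hr⟩ := h
  exact ⟨hAB ha, hAB hb, hr.map (inclHom K hAB)⟩

lemma induce_congr {K K' : SimpleGraph V} {S : Set V}
    (h : ∀ a ∈ S, ∀ b ∈ S, K.Adj a b ↔ K'.Adj a b) : K.induce S = K'.induce S := by
  ext ⟨a, ha⟩ ⟨b, hb⟩
  exact h a ha b hb

lemma cComp_congr {K K' : SimpleGraph V} {S : Set V}
    (h : ∀ a ∈ S, ∀ b ∈ S, K.Adj a b ↔ K'.Adj a b) : cComp K S = cComp K' S := by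
  unfold cComp
  rw [induce_congr h]

lemma walk_avoid (K : SimpleGraph V) (S : Set V) (x : V)
    (hcl : ∀ a ∈ S, ∀ b ∈ S, K.Adj x a → K.Adj x b → a ≠ b → K.Adj a b)
    {a b : ↥S} (w : (K.induce S).Walk a b) (hb : (b : V) ≠ x) :
    ((a : V) ≠ x ∧ ReachIn K (S \ {x}) a b) ∨
      ((a : V) = x ∧ ∀ c ∈ S, c ≠ x → K.Adj x c → ReachIn K (S \ {x}) c b) := by
  induction w with
  | nil =>
    rename_i u
    exact Or.inl ⟨hb, reachIn_refl K ⟨u.2, hb⟩⟩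
  | @cons a d b h p ih =>
    have hd2 : (d : V) ∈ S := d.2
    rcases ih hb with ⟨hdx, hr⟩ | ⟨hdx, hfun⟩
    · by_cases hax : (a : V) = x
      · right
        refine ⟨hax, fun c hc hcx hadj => ?_⟩
        have hxd : K.Adj x d := by rw [← hax]; exact h
        by_cases hcd : c = (d : V)
        · subst hcd; exact hr
        · have : K.Adj c d := hcl c hc d hd2 hadj hxd hcd
          exact reachIn_trans (reachIn_adj this ⟨hc, hcx⟩ ⟨hd2, hdx⟩) hr
      · left
        refine ⟨hax, reachIn_trans (reachIn_adj h ⟨a.2, hax⟩ ⟨hd2, hdx⟩) hr⟩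
    · left
      have hax : (a : V) ≠ x := by
        intro hax
        have : K.Adj (a : V) (d : V) := h
        rw [hax, hdx] at this
        exact this.ne rfl
      have hadj : K.Adj x a := by
        have : K.Adj (a : V) (d : V) := h
        rw [hdx] at this
        exact this.symm
      exact ⟨hax, hfun a a.2 hax hadj⟩

lemma cComp_le_of_clique [Finite V] (K : SimpleGraph V) (S : Set V) (x : V)
    (hcl : ∀ a ∈ S, ∀ b ∈ S, K.Adj x a → K.Adj x b → a ≠ b → K.Adj a b) :
    cComp K (S \ {x}) ≤ cComp K (S) := by
  have hsub : S \ {x} ⊆ S := Set.diff_subset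
  set f : (K.induce (S \ {x})).ConnectedComponent → (K.induce S).ConnectedComponent :=
    SimpleGraph.ConnectedComponent.map (inclHom K hsub) with hf
  have hinj : Function.Injective f := by
    intro C D
    refine SimpleGraph.ConnectedComponent.ind₂ (fun c d => ?_) C D
    rw [hf, ConnectedComponent.map_mk, ConnectedComponent.map_mk]
    intro h
    rw [SimpleGraph.ConnectedComponent.eq] at h ⊢
    obtain ⟨wk⟩ := h
    rcases walk_avoid K S x hcl wk (d.2.2 : (d:V) ∉ ({x} : Set V)) with ⟨_, hr⟩ | ⟨hc, _⟩
    · obtain ⟨h1, h2, hr⟩ := hr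
      exact hr
    · exact absurd hc c.2.2
  exact Nat.card_le_card_of_injective f hinj

end Helpers

section Split

variable {V : Type u} [Finite V]

lemma cComp_split (K : SimpleGraph V) (S S₁ S₂ : Set V) (v : V)
    (hU : S₁ ∪ S₂ = S) (hI : S₁ ∩ S₂ = {v})
    (hcross : ∀ a b : V, K.Adj a b → a ∈ S₁ → b ∈ S₂ → a ≠ v → b ≠ v →
      K.Adj v a ∧ K.Adj v b) :
    cComp K S + 1 = cComp K S₁ + cComp K S₂ := by
  classical
  have hv12 : v ∈ S₁ ∩ S₂ := hI ▸ rfl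
  have hv₁ : v ∈ S₁ := hv12.1
  have hv₂ : v ∈ S₂ := hv12.2
  have hsub₁ : S₁ ⊆ S := hU ▸ Set.subset_union_left
  have hsub₂ : S₂ ⊆ S := hU ▸ Set.subset_union_right
  have heqv : ∀ x : V, x ∈ S₁ → x ∈ S₂ → x = v := by
    intro x h1 h2
    have : x ∈ S₁ ∩ S₂ := ⟨h1, h2⟩
    rwa [hI] at this
  -- the decomposition relation
  set R : V → V → Prop := fun a b =>
    ReachIn K S₁ a b ∨ ReachIn K S₂ a b ∨
      ((ReachIn K S₁ a v ∨ ReachIn K S₂ a v) ∧ (ReachIn K S₁ b v ∨ ReachIn K S₂ b v)) with hR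
  have hRrefl : ∀ x ∈ S, R x x := by
    intro x hx
    rcases (hU ▸ hx : x ∈ S₁ ∪ S₂) with h | h
    · exact Or.inl (reachIn_refl K h)
    · exact Or.inr (Or.inl (reachIn_refl K h))
  have hRtrans : ∀ a b c : V, R a b → R b c → R a c := by
    intro a b c p q
    rcases p with p | p | ⟨pa, pb⟩
    · rcases q with q | q | ⟨qb, qc⟩
      · exact Or.inl (reachIn_trans p q)
      · have hb : b = v := heqv b p.2.1 q.1
        subst hb
        exact Or.inr (Or.inr ⟨Or.inl p, Or.inr (reachIn_symm q)⟩)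
      · rcases qb with qb | qb
        · exact Or.inr (Or.inr ⟨Or.inl (reachIn_trans p qb), qc⟩)
        · have hb : b = v := heqv b p.2.1 qb.1
          subst hb
          exact Or.inr (Or.inr ⟨Or.inl p, qc⟩)
    · rcases q with q | q | ⟨qb, qc⟩
      · have hb : b = v := heqv b q.1 p.2.1
        subst hb
        exact Or.inr (Or.inr ⟨Or.inr p, Or.inl (reachIn_symm q)⟩)
      · exact Or.inr (Or.inl (reachIn_trans p q))
      · rcases qb with qb | qb
        · have hb : b = v := heqv b qb.1 p.2.1
          subst hb
          exact Or.inr (Or.inr ⟨Or.inr p, qc⟩)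
        · exact Or.inr (Or.inr ⟨Or.inr (reachIn_trans p qb), qc⟩)
    · rcases q with q | q | ⟨qb, qc⟩
      · rcases pb with pb | pb
        · exact Or.inr (Or.inr ⟨pa, Or.inl (reachIn_trans (reachIn_symm q) pb)⟩)
        · have hb : b = v := heqv b q.1 pb.1
          subst hb
          exact Or.inr (Or.inr ⟨pa, Or.inl (reachIn_symm q)⟩)
      · rcases pb with pb | pb
        · have hb : b = v := heqv b pb.1 q.1
          subst hb
          exact Or.inr (Or.inr ⟨pa, Or.inr (reachIn_symm q)⟩)
        · exact Or.inr (Or.inr ⟨pa, Or.inr (reachIn_trans (reachIn_symm q) pb)⟩)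
      · exact Or.inr (Or.inr ⟨pa, qc⟩)
  have hRstep : ∀ a c : V, a ∈ S → c ∈ S → K.Adj a c → R a c := by
    intro a c ha hc hadj
    rcases (hU ▸ ha : a ∈ S₁ ∪ S₂) with ha1 | ha2 <;>
      rcases (hU ▸ hc : c ∈ S₁ ∪ S₂) with hc1 | hc2
    · exact Or.inl (reachIn_adj hadj ha1 hc1)
    · by_cases hav : a = v
      · subst hav
        exact Or.inr (Or.inl (reachIn_adj hadj hv₂ hc2))
      · by_cases hcv : c = v
        · subst hcv
          exact Or.inl (reachIn_adj hadj ha1 hv₁)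
        · obtain ⟨h1, h2⟩ := hcross a c hadj ha1 hc2 hav hcv
          exact Or.inr (Or.inr ⟨Or.inl (reachIn_adj h1.symm ha1 hv₁),
            Or.inr (reachIn_adj h2.symm hc2 hv₂)⟩)
    · by_cases hcv : c = v
      · subst hcv
        exact Or.inr (Or.inl (reachIn_adj hadj ha2 hv₂))
      · by_cases hav : a = v
        · subst hav
          exact Or.inl (reachIn_adj hadj hv₁ hc1)
        · obtain ⟨h1, h2⟩ := hcross c a hadj.symm hc1 ha2 hcv hav
          exact Or.inr (Or.inr ⟨Or.inr (reachIn_adj h2.symm ha2 hv₂),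
            Or.inl (reachIn_adj h1.symm hc1 hv₁)⟩)
    · exact Or.inr (Or.inl (reachIn_adj hadj ha2 hc2))
  have hreach : ∀ a b : ↥S, (K.induce S).Reachable a b → R a b := by
    intro a b h
    obtain ⟨w⟩ := h
    induction w with
    | nil =>
      rename_i u
      exact hRrefl u u.2
    | @cons a d b h p ih =>
      exact hRtrans _ _ _ (hRstep a d a.2 d.2 h) ih
  -- build the bijection
  let C₁v : (K.induce S₁).ConnectedComponent := (K.induce S₁).connectedComponentMk ⟨v, hv₁⟩
  let m₁ : (K.induce S₁).ConnectedComponent → (K.induce S).ConnectedComponent :=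
    ConnectedComponent.map (inclHom K hsub₁)
  let m₂ : (K.induce S₂).ConnectedComponent → (K.induce S).ConnectedComponent :=
    ConnectedComponent.map (inclHom K hsub₂)
  have key₁₁ : ∀ a b : ↥S₁, m₁ ((K.induce S₁).connectedComponentMk a) =
      m₁ ((K.induce S₁).connectedComponentMk b) → R ↑a ↑b := by
    intro a b h
    rw [show m₁ = ConnectedComponent.map (inclHom K hsub₁) from rfl] at h
    rw [ConnectedComponent.map_mk, ConnectedComponent.map_mk, ConnectedComponent.eq] at h
    exact hreach _ _ h
  have key₂₂ : ∀ a b : ↥S₂, m₂ ((K.induce S₂).connectedComponentMk a) =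
      m₂ ((K.induce S₂).connectedComponentMk b) → R ↑a ↑b := by
    intro a b h
    rw [show m₂ = ConnectedComponent.map (inclHom K hsub₂) from rfl] at h
    rw [ConnectedComponent.map_mk, ConnectedComponent.map_mk, ConnectedComponent.eq] at h
    exact hreach _ _ h
  have key₁₂ : ∀ (a : ↥S₁) (b : ↥S₂), m₁ ((K.induce S₁).connectedComponentMk a) =
      m₂ ((K.induce S₂).connectedComponentMk b) → R ↑a ↑b := by
    intro a b h
    rw [show m₁ = ConnectedComponent.map (inclHom K hsub₁) from rfl,
      show m₂ = ConnectedComponent.map (inclHom K hsub₂) from rfl] at h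
    rw [ConnectedComponent.map_mk, ConnectedComponent.map_mk, ConnectedComponent.eq] at h
    exact hreach _ _ h
  have toS₁ : ∀ {a b : V}, ReachIn K S₁ a b →
      ∀ (ha : a ∈ S) (hb : b ∈ S), (K.induce S).connectedComponentMk ⟨a, ha⟩ =
        (K.induce S).connectedComponentMk ⟨b, hb⟩ := by
    intro a b h ha hb
    obtain ⟨ha', hb', hr⟩ := reachIn_mono hsub₁ h
    rw [ConnectedComponent.eq]
    exact hr
  have toS₂ : ∀ {a b : V}, ReachIn K S₂ a b →
      ∀ (ha : a ∈ S) (hb : b ∈ S), (K.induce S).connectedComponentMk ⟨a, ha⟩ =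
        (K.induce S).connectedComponentMk ⟨b, hb⟩ := by
    intro a b h ha hb
    obtain ⟨ha', hb', hr⟩ := reachIn_mono hsub₂ h
    rw [ConnectedComponent.eq]
    exact hr
  have mkC₁ : ∀ a : ↥S₁, ((K.induce S₁).connectedComponentMk a = C₁v ↔ ReachIn K S₁ ↑a v) := by
    intro a
    rw [show C₁v = (K.induce S₁).connectedComponentMk ⟨v, hv₁⟩ from rfl, ConnectedComponent.eq]
    exact ⟨fun h => ⟨a.2, hv₁, h⟩, fun ⟨_, _, h⟩ => h⟩
  let F : ((K.induce S₁).ConnectedComponent ⊕ (K.induce S₂).ConnectedComponent) →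
      ((K.induce S).ConnectedComponent ⊕ Unit) :=
    Sum.elim (fun D => if D = C₁v then Sum.inr Unit.unit else Sum.inl (m₁ D))
      (fun D => Sum.inl (m₂ D))
  have hFinl : ∀ D, F (Sum.inl D) = if D = C₁v then Sum.inr Unit.unit else Sum.inl (m₁ D) :=
    fun D => rfl
  have hFinr : ∀ D, F (Sum.inr D) = Sum.inl (m₂ D) := fun D => rfl
  -- from R to contradiction/facts for injectivity
  have hinj : Function.Injective F := by
    rintro (D | D) (E | E) h
    · rw [hFinl, hFinl] at h
      by_cases hD : D = C₁v
      · by_cases hE : E = C₁v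
        · rw [hD, hE]
        · rw [if_pos hD, if_neg hE] at h; exact absurd h (by simp)
      · by_cases hE : E = C₁v
        · rw [if_neg hD, if_pos hE] at h; exact absurd h (by simp)
        · rw [if_neg hD, if_neg hE] at h
          refine congrArg Sum.inl ?_
          obtain ⟨a, rfl⟩ := D.exists_rep
          obtain ⟨b, rfl⟩ := E.exists_rep
          have hr := key₁₁ a b (Sum.inl.inj h)
          rcases hr with p | p | ⟨pa, pb⟩
          · obtain ⟨_, _, hr⟩ := p
            exact ConnectedComponent.eq.mpr hr
          · have ha : (a : V) = v := heqv _ a.2 p.1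
            have hb : (b : V) = v := heqv _ b.2 p.2.1
            have hab : a = b := Subtype.ext (ha.trans hb.symm)
            rw [hab]
          · exfalso
            refine hD ((mkC₁ a).mpr ?_)
            rcases pa with pa | pa
            · exact pa
            · have ha : (a : V) = v := heqv _ a.2 pa.1
              rw [ha]; exact reachIn_refl K hv₁
    · rw [hFinl, hFinr] at h
      by_cases hD : D = C₁v
      · rw [if_pos hD] at h; exact absurd h (by simp)
      · rw [if_neg hD] at h
        exfalso
        obtain ⟨a, rfl⟩ := D.exists_rep
        obtain ⟨b, rfl⟩ := E.exists_rep
        have hr := key₁₂ a b (Sum.inl.inj h)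
        refine hD ((mkC₁ a).mpr ?_)
        rcases hr with p | p | ⟨pa, _⟩
        · have hb : (b : V) = v := heqv _ p.2.1 b.2
          exact hb ▸ p
        · have ha : (a : V) = v := heqv _ a.2 p.1
          rw [ha]; exact reachIn_refl K hv₁
        · rcases pa with pa | pa
          · exact pa
          · have ha : (a : V) = v := heqv _ a.2 pa.1
            rw [ha]; exact reachIn_refl K hv₁
    · rw [hFinl, hFinr] at h
      by_cases hE : E = C₁v
      · rw [if_pos hE] at h; exact absurd h (by simp)
      · rw [if_neg hE] at h
        exfalso
        obtain ⟨a, rfl⟩ := D.exists_rep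
        obtain ⟨b, rfl⟩ := E.exists_rep
        have hr := key₁₂ b a (Sum.inl.inj h.symm)
        refine hE ((mkC₁ b).mpr ?_)
        rcases hr with p | p | ⟨pa, _⟩
        · have ha : (a : V) = v := heqv _ p.2.1 a.2
          exact ha ▸ p
        · have hb : (b : V) = v := heqv _ b.2 p.1
          rw [hb]; exact reachIn_refl K hv₁
        · rcases pa with pa | pa
          · exact pa
          · have hb : (b : V) = v := heqv _ b.2 pa.1
            rw [hb]; exact reachIn_refl K hv₁
    · rw [hFinr, hFinr] at h
      refine congrArg Sum.inr ?_
      obtain ⟨a, rfl⟩ := D.exists_rep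
      obtain ⟨b, rfl⟩ := E.exists_rep
      have hr := key₂₂ a b (Sum.inl.inj h)
      have norm : ∀ (x : ↥S₂), (ReachIn K S₁ ↑x v ∨ ReachIn K S₂ ↑x v) → ReachIn K S₂ ↑x v := by
        intro x hx
        rcases hx with hx | hx
        · have hxv : (x : V) = v := heqv _ hx.1 x.2
          rw [hxv]; exact reachIn_refl K hv₂
        · exact hx
      rcases hr with p | p | ⟨pa, pb⟩
      · have ha : (a : V) = v := heqv _ p.1 a.2
        have hb : (b : V) = v := heqv _ p.2.1 b.2
        have hab : a = b := Subtype.ext (ha.trans hb.symm)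
        rw [hab]
      · obtain ⟨_, _, hr⟩ := p
        exact ConnectedComponent.eq.mpr hr
      · have h1 := norm a pa
        have h2 := norm b pb
        obtain ⟨_, _, hr⟩ := reachIn_trans h1 (reachIn_symm h2)
        exact ConnectedComponent.eq.mpr hr
  have hsurj : Function.Surjective F := by
    rintro (C | u)
    · obtain ⟨a, rfl⟩ := C.exists_rep
      rcases (hU ▸ a.2 : (a : V) ∈ S₁ ∪ S₂) with ha1 | ha2
      · by_cases hav : ReachIn K S₁ ↑a v
        · refine ⟨Sum.inr ((K.induce S₂).connectedComponentMk ⟨v, hv₂⟩), ?_⟩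
          rw [hFinr]
          refine congrArg Sum.inl ?_
          rw [show m₂ = ConnectedComponent.map (inclHom K hsub₂) from rfl,
            ConnectedComponent.map_mk]
          exact toS₁ (reachIn_symm hav) (hsub₂ hv₂) a.2
        · refine ⟨Sum.inl ((K.induce S₁).connectedComponentMk ⟨↑a, ha1⟩), ?_⟩
          rw [hFinl, if_neg (fun hh => hav ((mkC₁ _).mp hh))]
          refine congrArg Sum.inl ?_
          rw [show m₁ = ConnectedComponent.map (inclHom K hsub₁) from rfl,
            ConnectedComponent.map_mk]
          rfl
      · refine ⟨Sum.inr ((K.induce S₂).connectedComponentMk ⟨↑a, ha2⟩), ?_⟩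
        rw [hFinr]
        refine congrArg Sum.inl ?_
        rw [show m₂ = ConnectedComponent.map (inclHom K hsub₂) from rfl,
          ConnectedComponent.map_mk]
        rfl
    · exact ⟨Sum.inl C₁v, by rw [hFinl, if_pos rfl]⟩
  have hcard := Nat.card_congr (Equiv.ofBijective F ⟨hinj, hsurj⟩)
  rw [Nat.card_sum, Nat.card_sum] at hcard
  have hpu : Nat.card Unit = 1 := Nat.card_unique
  unfold cComp
  omega

end Split

section CliqueAtLayer

variable {V : Type u}

lemma adj_cliqueAt {G : SimpleGraph V} {A : Set V} {v a b : V} :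
    (cliqueAtOn G A v).Adj a b ↔
      G.Adj a b ∨ (a ≠ b ∧ a ∈ A ∧ b ∈ A ∧ G.Adj v a ∧ G.Adj v b) := by
  unfold cliqueAtOn
  rw [sup_adj, fromRel_adj]
  constructor
  · rintro (h | ⟨hne, ⟨h1, h2, h3, h4⟩ | ⟨h1, h2, h3, h4⟩⟩)
    · exact Or.inl h
    · exact Or.inr ⟨hne, h1, h2, h3, h4⟩
    · exact Or.inr ⟨hne, h2, h1, h4, h3⟩
  · rintro (h | ⟨hne, h1, h2, h3, h4⟩)
    · exact Or.inl h
    · exact Or.inr ⟨hne, Or.inl ⟨h1, h2, h3, h4⟩⟩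

lemma adj_cliqueAt_v {G : SimpleGraph V} {A : Set V} {v a : V} :
    (cliqueAtOn G A v).Adj v a ↔ G.Adj v a := by
  rw [adj_cliqueAt]
  constructor
  · rintro (h | ⟨_, _, _, h, _⟩)
    · exact h
    · exact absurd h (G.irrefl)
  · exact Or.inl

lemma clique_cond {G : SimpleGraph V} {A : Set V} {v : V} :
    ∀ a ∈ A, ∀ b ∈ A, (cliqueAtOn G A v).Adj v a → (cliqueAtOn G A v).Adj v b →
      a ≠ b → (cliqueAtOn G A v).Adj a b := by
  intro a ha b hb h1 h2 hne
  rw [adj_cliqueAt_v] at h1 h2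
  exact adj_cliqueAt.mpr (Or.inr ⟨hne, ha, hb, h1, h2⟩)

lemma agree_cliqueAt {G : SimpleGraph V} {A : Set V} {v : V} :
    ∀ a ∈ A, ∀ b ∈ A, ((cliqueAtOn G Set.univ v).Adj a b ↔ (cliqueAtOn G A v).Adj a b) := by
  intro a ha b hb
  rw [adj_cliqueAt, adj_cliqueAt]
  constructor
  · rintro (h | ⟨hne, _, _, h3, h4⟩)
    · exact Or.inl h
    · exact Or.inr ⟨hne, ha, hb, h3, h4⟩
  · rintro (h | ⟨hne, _, _, h3, h4⟩)
    · exact Or.inl h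
    · exact Or.inr ⟨hne, trivial, trivial, h3, h4⟩

lemma not_mem_cutset [Finite V] [DecidableEq V] (K : SimpleGraph V) (A : Set V) (x : V)
    (hcl : ∀ a ∈ A, ∀ b ∈ A, K.Adj x a → K.Adj x b → a ≠ b → K.Adj a b)
    {T : Finset V} (hT : CutsetOn K A T) : x ∉ T := by
  intro hx
  obtain ⟨hmem, hlt⟩ := hT.2 x hx
  have hSA : A \ ↑(T.erase x) ⊆ A := Set.diff_subset
  have hle : cComp K ((A \ ↑(T.erase x)) \ {x}) ≤ cComp K (A \ ↑(T.erase x)) :=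
    cComp_le_of_clique K _ x (fun a ha b hb => hcl a (hSA ha) b (hSA hb))
  omega

lemma mem_of_inter {A B : Set V} {v : V} (hI : A ∩ B = {v}) {x : V}
    (h1 : x ∈ A) (h2 : x ∈ B) : x = v := by
  have : x ∈ A ∩ B := ⟨h1, h2⟩
  rwa [hI, Set.mem_singleton_iff] at this

lemma split_eq [Finite V] (G : SimpleGraph V) (A B : Set V) (v : V)
    (hU : A ∪ B = Set.univ) (hI : A ∩ B = {v})
    (hE : ∀ a b : V, G.Adj a b → (a ∈ A ∧ b ∈ A) ∨ (a ∈ B ∧ b ∈ B))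
    (S : Set V) (hvS : v ∈ S) :
    cComp (cliqueAtOn G Set.univ v) S + 1 =
      cComp (cliqueAtOn G A v) (A ∩ S) + cComp (cliqueAtOn G B v) (B ∩ S) := by
  have hv : v ∈ A ∩ B := hI ▸ rfl
  have h1 : (A ∩ S) ∪ (B ∩ S) = S := by
    rw [← Set.union_inter_distrib_right, hU, Set.univ_inter]
  have h2 : (A ∩ S) ∩ (B ∩ S) = {v} := by
    rw [Set.inter_inter_inter_comm, hI, Set.inter_self,
      Set.inter_eq_self_of_subset_left (Set.singleton_subset_iff.mpr hvS)]
  have hcross : ∀ a b : V, (cliqueAtOn G Set.univ v).Adj a b → a ∈ A ∩ S → b ∈ B ∩ S →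
      a ≠ v → b ≠ v → (cliqueAtOn G Set.univ v).Adj v a ∧ (cliqueAtOn G Set.univ v).Adj v b := by
    rintro a b hadj ⟨haA, _⟩ ⟨hbB, _⟩ hav hbv
    rcases adj_cliqueAt.mp hadj with h | ⟨_, _, _, h3, h4⟩
    · rcases hE a b h with ⟨_, hbA⟩ | ⟨haB, _⟩
      · exact absurd (mem_of_inter hI hbA hbB) hbv
      · exact absurd (mem_of_inter hI haA haB) hav
    · exact ⟨adj_cliqueAt_v.mpr h3, adj_cliqueAt_v.mpr h4⟩
  have key := cComp_split (cliqueAtOn G Set.univ v) S (A ∩ S) (B ∩ S) v h1 h2 hcross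
  have e1 : cComp (cliqueAtOn G Set.univ v) (A ∩ S) = cComp (cliqueAtOn G A v) (A ∩ S) :=
    cComp_congr (fun a ha b hb => agree_cliqueAt a ha.1 b hb.1)
  have e2 : cComp (cliqueAtOn G Set.univ v) (B ∩ S) = cComp (cliqueAtOn G B v) (B ∩ S) :=
    cComp_congr (fun a ha b hb => agree_cliqueAt a ha.1 b hb.1)
  omega

lemma set_E4 [DecidableEq V] {A B : Set V} {v : V} (hI : A ∩ B = {v}) (T₁ T₂ : Finset V)
    (hT₁ : ↑T₁ ⊆ A \ {v}) (hT₂ : ↑T₂ ⊆ B \ {v}) :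
    A ∩ (Set.univ \ ↑(T₁ ∪ T₂)) = A \ ↑T₁ := by
  ext x
  simp only [Set.mem_inter_iff, Set.mem_diff, Set.mem_univ, true_and, Finset.coe_union,
    Set.mem_union, Finset.mem_coe]
  constructor
  · rintro ⟨hxA, h⟩
    exact ⟨hxA, fun m => h (Or.inl m)⟩
  · rintro ⟨hxA, h⟩
    refine ⟨hxA, fun m => ?_⟩
    rcases m with m | m
    · exact h m
    · exact (hT₂ m).2 (mem_of_inter hI hxA (hT₂ m).1)

lemma set_E1 [DecidableEq V] {A B : Set V} {v : V} (hI : A ∩ B = {v}) (T₁ T₂ : Finset V)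
    (hT₁ : ↑T₁ ⊆ A \ {v}) (hT₂ : ↑T₂ ⊆ B \ {v}) (t : V) :
    A ∩ (Set.univ \ ↑((T₁ ∪ T₂).erase t)) = A \ ↑(T₁.erase t) := by
  ext x
  simp only [Set.mem_inter_iff, Set.mem_diff, Set.mem_univ, true_and, Finset.mem_coe,
    Finset.mem_erase, Finset.mem_union]
  constructor
  · rintro ⟨hxA, h⟩
    exact ⟨hxA, fun ⟨hxt, m⟩ => h ⟨hxt, Or.inl m⟩⟩
  · rintro ⟨hxA, h⟩
    refine ⟨hxA, fun ⟨hxt, m⟩ => ?_⟩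
    rcases m with m | m
    · exact h ⟨hxt, m⟩
    · exact (hT₂ m).2 (mem_of_inter hI hxA (hT₂ m).1)

lemma set_E2 [DecidableEq V] {A B : Set V} {v : V} (hI : A ∩ B = {v}) (T₁ T₂ : Finset V)
    (hT₁ : ↑T₁ ⊆ A \ {v}) (hT₂ : ↑T₂ ⊆ B \ {v}) (t : V) (htB : t ∉ B) :
    B ∩ (Set.univ \ ↑((T₁ ∪ T₂).erase t)) = B \ ↑T₂ := by
  ext x
  simp only [Set.mem_inter_iff, Set.mem_diff, Set.mem_univ, true_and, Finset.mem_coe,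
    Finset.mem_erase, Finset.mem_union]
  constructor
  · rintro ⟨hxB, h⟩
    refine ⟨hxB, fun m => h ⟨fun e => htB (e ▸ hxB), Or.inr m⟩⟩
  · rintro ⟨hxB, h⟩
    refine ⟨hxB, fun ⟨hxt, m⟩ => ?_⟩
    rcases m with m | m
    · exact (hT₁ m).2 (mem_of_inter hI (hT₁ m).1 hxB ▸ rfl)
    · exact h m

lemma set_E3 [DecidableEq V] {T : Finset V} {t : V} (ht : t ∈ T) :
    (Set.univ \ ↑(T.erase t)) \ {t} = Set.univ \ ↑T := by
  ext x
  simp only [Set.mem_diff, Set.mem_univ, true_and, Finset.mem_coe, Finset.mem_erase,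
    Set.mem_singleton_iff]
  constructor
  · rintro ⟨h, hxt⟩
    exact fun m => h ⟨hxt, m⟩
  · intro h
    exact ⟨fun ⟨_, m⟩ => h m, fun e => h (e ▸ ht)⟩

lemma set_E6 [DecidableEq V] {A : Set V} {T₁ : Finset V} {t : V} (ht : t ∈ T₁) :
    (A \ ↑(T₁.erase t)) \ {t} = A \ ↑T₁ := by
  ext x
  simp only [Set.mem_diff, Finset.mem_coe, Finset.mem_erase, Set.mem_singleton_iff]
  constructor
  · rintro ⟨⟨hxA, h⟩, hxt⟩
    exact ⟨hxA, fun m => h ⟨hxt, m⟩⟩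
  · rintro ⟨hxA, h⟩
    exact ⟨⟨hxA, fun ⟨_, m⟩ => h m⟩, fun e => h (e ▸ ht)⟩

end CliqueAtLayer


section TransferLayer

variable {V : Type u} [Fintype V] [DecidableEq V]

lemma set_E5 {A B : Set V} {v : V} (hI : A ∩ B = {v}) (T₁ T₂ : Finset V)
    (hT₁ : ↑T₁ ⊆ A \ {v}) (hT₂ : ↑T₂ ⊆ B \ {v}) :
    B ∩ (Set.univ \ ↑(T₁ ∪ T₂)) = B \ ↑T₂ := by
  ext x
  simp only [Set.mem_inter_iff, Set.mem_diff, Set.mem_univ, true_and, Finset.coe_union,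
    Set.mem_union, Finset.mem_coe]
  constructor
  · rintro ⟨hxB, h⟩
    exact ⟨hxB, fun m => h (Or.inr m)⟩
  · rintro ⟨hxB, h⟩
    refine ⟨hxB, fun m => ?_⟩
    rcases m with m | m
    · exact (hT₁ m).2 (mem_of_inter hI (hT₁ m).1 hxB ▸ rfl)
    · exact h m

lemma cutvertex_iff (G : SimpleGraph V) (A B : Set V) (v : V)
    (hU : A ∪ B = Set.univ) (hI : A ∩ B = {v})
    (hE : ∀ a b : V, G.Adj a b → (a ∈ A ∧ b ∈ A) ∨ (a ∈ B ∧ b ∈ B))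
    (T₁ T₂ : Finset V) (hT₁ : ↑T₁ ⊆ A \ {v}) (hT₂ : ↑T₂ ⊆ B \ {v})
    (t : V) (htA : t ∈ A) (htv : t ≠ v) (ht1 : t ∈ T₁) :
    CutVertexOn (cliqueAtOn G A v) (A \ ↑(T₁.erase t)) t ↔
      CutVertexOn (cliqueAtOn G Set.univ v) (Set.univ \ ↑((T₁ ∪ T₂).erase t)) t := by
  have htB : t ∉ B := fun h => htv (mem_of_inter hI htA h)
  have hvT : v ∉ T₁ ∪ T₂ := by
    intro h
    rcases Finset.mem_union.mp h with h | h
    · exact (hT₁ h).2 rfl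
    · exact (hT₂ h).2 rfl
  have hv1 : (v : V) ∈ Set.univ \ ↑((T₁ ∪ T₂).erase t) :=
    ⟨trivial, fun h => hvT (Finset.mem_of_mem_erase (Finset.mem_coe.mp h))⟩
  have hv2 : (v : V) ∈ Set.univ \ (↑(T₁ ∪ T₂) : Set V) := ⟨trivial, hvT⟩
  have s1 := split_eq G A B v hU hI hE (Set.univ \ ↑((T₁ ∪ T₂).erase t)) hv1
  rw [set_E1 hI T₁ T₂ hT₁ hT₂ t, set_E2 hI T₁ T₂ hT₁ hT₂ t htB] at s1
  have s2 := split_eq G A B v hU hI hE (Set.univ \ ↑(T₁ ∪ T₂)) hv2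
  rw [set_E4 hI T₁ T₂ hT₁ hT₂, set_E5 hI T₁ T₂ hT₁ hT₂] at s2
  constructor
  · rintro ⟨hm, hlt⟩
    rw [set_E6 ht1] at hlt
    refine ⟨⟨trivial, fun h => (Finset.mem_erase.mp (Finset.mem_coe.mp h)).1 rfl⟩, ?_⟩
    rw [set_E3 (Finset.mem_union_left _ ht1)]
    omega
  · rintro ⟨hm, hlt⟩
    rw [set_E3 (Finset.mem_union_left _ ht1)] at hlt
    refine ⟨⟨htA, fun h => (Finset.mem_erase.mp (Finset.mem_coe.mp h)).1 rfl⟩, ?_⟩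
    rw [set_E6 ht1]
    omega

lemma cutset_vnotmem (G : SimpleGraph V) (A : Set V) (v : V) {T : Finset V}
    (hT : CutsetOn (cliqueAtOn G A v) A T) : v ∉ T :=
  not_mem_cutset (cliqueAtOn G A v) A v clique_cond hT

lemma cutset_sub (G : SimpleGraph V) (A : Set V) (v : V) {T : Finset V}
    (hT : CutsetOn (cliqueAtOn G A v) A T) : ↑T ⊆ A \ {v} := by
  intro x hx
  refine ⟨hT.1 hx, fun h => ?_⟩
  rw [Set.mem_singleton_iff] at h
  exact cutset_vnotmem G A v hT (h ▸ hx)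

lemma cutset_union (G : SimpleGraph V) (A B : Set V) (v : V)
    (hU : A ∪ B = Set.univ) (hI : A ∩ B = {v})
    (hE : ∀ a b : V, G.Adj a b → (a ∈ A ∧ b ∈ A) ∨ (a ∈ B ∧ b ∈ B))
    {T₁ T₂ : Finset V}
    (h₁ : CutsetOn (cliqueAtOn G A v) A T₁) (h₂ : CutsetOn (cliqueAtOn G B v) B T₂) :
    CutsetOn (cliqueAtOn G Set.univ v) Set.univ (T₁ ∪ T₂) := by
  have hU' : B ∪ A = Set.univ := by rw [Set.union_comm]; exact hU
  have hI' : B ∩ A = {v} := by rw [Set.inter_comm]; exact hI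
  have hE' : ∀ a b : V, G.Adj a b → (a ∈ B ∧ b ∈ B) ∨ (a ∈ A ∧ b ∈ A) :=
    fun a b h => (hE a b h).symm
  have hs₁ := cutset_sub G A v h₁
  have hs₂ := cutset_sub G B v h₂
  refine ⟨fun x _ => trivial, fun t ht => ?_⟩
  rcases Finset.mem_union.mp ht with ht1 | ht2
  · exact (cutvertex_iff G A B v hU hI hE T₁ T₂ hs₁ hs₂ t (hs₁ ht1).1
      (fun e => (hs₁ ht1).2 (e ▸ rfl)) ht1).mp (h₁.2 t ht1)
  · have := (cutvertex_iff G B A v hU' hI' hE' T₂ T₁ hs₂ hs₁ t (hs₂ ht2).1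
      (fun e => (hs₂ ht2).2 (e ▸ rfl)) ht2).mp (h₂.2 t ht2)
    rwa [Finset.union_comm T₂ T₁] at this

lemma cutset_left (G : SimpleGraph V) (A B : Set V) (v : V)
    (hU : A ∪ B = Set.univ) (hI : A ∩ B = {v})
    (hE : ∀ a b : V, G.Adj a b → (a ∈ A ∧ b ∈ A) ∨ (a ∈ B ∧ b ∈ B))
    {T₁ T₂ : Finset V} (hT₁ : ↑T₁ ⊆ A \ {v}) (hT₂ : ↑T₂ ⊆ B \ {v})
    (h : CutsetOn (cliqueAtOn G Set.univ v) Set.univ (T₁ ∪ T₂)) :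
    CutsetOn (cliqueAtOn G A v) A T₁ := by
  refine ⟨fun x hx => (hT₁ hx).1, fun t ht => ?_⟩
  exact (cutvertex_iff G A B v hU hI hE T₁ T₂ hT₁ hT₂ t (hT₁ ht).1
    (fun e => (hT₁ ht).2 (e ▸ rfl)) ht).mpr (h.2 t (Finset.mem_union_left _ ht))

lemma count_split (G : SimpleGraph V) (A B : Set V) (v : V)
    (hU : A ∪ B = Set.univ) (hI : A ∩ B = {v})
    (hE : ∀ a b : V, G.Adj a b → (a ∈ A ∧ b ∈ A) ∨ (a ∈ B ∧ b ∈ B))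
    {T₁ T₂ : Finset V} (hT₁ : ↑T₁ ⊆ A \ {v}) (hT₂ : ↑T₂ ⊆ B \ {v}) :
    cComp (cliqueAtOn G Set.univ v) (Set.univ \ ↑(T₁ ∪ T₂)) + 1 =
      cComp (cliqueAtOn G A v) (A \ ↑T₁) + cComp (cliqueAtOn G B v) (B \ ↑T₂) := by
  have hvT : v ∉ T₁ ∪ T₂ := by
    intro h
    rcases Finset.mem_union.mp h with h | h
    · exact (hT₁ h).2 rfl
    · exact (hT₂ h).2 rfl
  have := split_eq G A B v hU hI hE (Set.univ \ ↑(T₁ ∪ T₂)) ⟨trivial, hvT⟩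
  rwa [set_E4 hI T₁ T₂ hT₁ hT₂, set_E5 hI T₁ T₂ hT₁ hT₂] at this

lemma base_split (G : SimpleGraph V) (A B : Set V) (v : V)
    (hU : A ∪ B = Set.univ) (hI : A ∩ B = {v})
    (hE : ∀ a b : V, G.Adj a b → (a ∈ A ∧ b ∈ A) ∨ (a ∈ B ∧ b ∈ B)) :
    cComp (cliqueAtOn G Set.univ v) Set.univ + 1 =
      cComp (cliqueAtOn G A v) A + cComp (cliqueAtOn G B v) B := by
  have := split_eq G A B v hU hI hE Set.univ trivial
  rwa [Set.inter_univ, Set.inter_univ] at this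

end TransferLayer


/-- for `G = G₁ ∪ G₂` with `V(G₁) ∩ V(G₂) = {v}`, the cutsets of `G_v`
are exactly the sets `T₁ ∪ T₂` with `Tᵢ ∈ 𝔠((Gᵢ)_v)`; in particular `J_{(G₁)_v}` and
`J_{(G₂)_v}` are unmixed (resp. `(Gᵢ)_v` accessible) iff `J_{G_v}` is unmixed
(resp. `G_v` accessible). -/
theorem cutsets_cliqueAt_union {V : Type u} [Fintype V] [DecidableEq V]
    (G : SimpleGraph V) (A₁ A₂ : Set V) (v : V)
    (hunion : A₁ ∪ A₂ = Set.univ) (hinter : A₁ ∩ A₂ = {v})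
    (hedge : ∀ a b : V, G.Adj a b → (a ∈ A₁ ∧ b ∈ A₁) ∨ (a ∈ A₂ ∧ b ∈ A₂)) :
    (∀ T : Finset V, CutsetOn (cliqueAtOn G Set.univ v) Set.univ T ↔
       ∃ T₁ T₂ : Finset V, CutsetOn (cliqueAtOn G A₁ v) A₁ T₁ ∧
         CutsetOn (cliqueAtOn G A₂ v) A₂ T₂ ∧ T = T₁ ∪ T₂) ∧
    ((UnmixedOn (cliqueAtOn G A₁ v) A₁ ∧ UnmixedOn (cliqueAtOn G A₂ v) A₂) ↔
       UnmixedOn (cliqueAtOn G Set.univ v) Set.univ) ∧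
    ((AccessibleOn (cliqueAtOn G A₁ v) A₁ ∧ AccessibleOn (cliqueAtOn G A₂ v) A₂) ↔
       AccessibleOn (cliqueAtOn G Set.univ v) Set.univ) := by
  classical
  have hv : v ∈ A₁ ∩ A₂ := hinter ▸ rfl
  have hU' : A₂ ∪ A₁ = Set.univ := by rw [Set.union_comm]; exact hunion
  have hI' : A₂ ∩ A₁ = {v} := by rw [Set.inter_comm]; exact hinter
  have hE' : ∀ a b : V, G.Adj a b → (a ∈ A₂ ∧ b ∈ A₂) ∨ (a ∈ A₁ ∧ b ∈ A₁) :=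
    fun a b h => (hedge a b h).symm
  have hemp : ∀ (C : SimpleGraph V) (A : Set V), CutsetOn C A (∅ : Finset V) :=
    fun C A => ⟨by simp, fun t ht => absurd ht (Finset.notMem_empty t)⟩
  have part1 : ∀ T : Finset V, CutsetOn (cliqueAtOn G Set.univ v) Set.univ T ↔
      ∃ T₁ T₂ : Finset V, CutsetOn (cliqueAtOn G A₁ v) A₁ T₁ ∧
        CutsetOn (cliqueAtOn G A₂ v) A₂ T₂ ∧ T = T₁ ∪ T₂ := by
    intro T
    constructor
    · intro hT
      have hvT : v ∉ T := not_mem_cutset _ _ v clique_cond hT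
      set T₁ := T.filter (· ∈ A₁) with hT1def
      set T₂ := T.filter (· ∉ A₁) with hT2def
      have hTu : T₁ ∪ T₂ = T := Finset.filter_union_filter_not_eq _ T
      have hsub1 : ↑T₁ ⊆ A₁ \ {v} := by
        intro x hx
        have hxT := Finset.mem_filter.mp (Finset.mem_coe.mp hx)
        exact ⟨hxT.2, fun e => hvT (Set.mem_singleton_iff.mp e ▸ hxT.1)⟩
      have hsub2 : ↑T₂ ⊆ A₂ \ {v} := by
        intro x hx
        have hxT := Finset.mem_filter.mp (Finset.mem_coe.mp hx)
        have hx2 : x ∈ A₂ := by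
          have : x ∈ A₁ ∪ A₂ := hunion ▸ Set.mem_univ x
          rcases this with h | h
          · exact absurd h hxT.2
          · exact h
        exact ⟨hx2, fun e => hvT (Set.mem_singleton_iff.mp e ▸ hxT.1)⟩
      refine ⟨T₁, T₂, ?_, ?_, hTu.symm⟩
      · exact cutset_left G A₁ A₂ v hunion hinter hedge hsub1 hsub2 (by rwa [hTu])
      · exact cutset_left G A₂ A₁ v hU' hI' hE' hsub2 hsub1
          (by rw [Finset.union_comm T₂ T₁, hTu]; exact hT)
    · rintro ⟨T₁, T₂, h₁, h₂, rfl⟩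
      exact cutset_union G A₁ A₂ v hunion hinter hedge h₁ h₂
  have base := base_split G A₁ A₂ v hunion hinter hedge
  have part2 : (UnmixedOn (cliqueAtOn G A₁ v) A₁ ∧ UnmixedOn (cliqueAtOn G A₂ v) A₂) ↔
      UnmixedOn (cliqueAtOn G Set.univ v) Set.univ := by
    constructor
    · rintro ⟨U₁, U₂⟩ T hT
      obtain ⟨T₁, T₂, h₁, h₂, rfl⟩ := (part1 T).mp hT
      have hs₁ := cutset_sub G A₁ v h₁
      have hs₂ := cutset_sub G A₂ v h₂
      have hdisj : Disjoint T₁ T₂ := by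
        rw [Finset.disjoint_left]
        intro x hx1 hx2
        have hxv := mem_of_inter hinter (hs₁ hx1).1 (hs₂ hx2).1
        exact (hs₁ hx1).2 (hxv ▸ rfl)
      have hcard := Finset.card_union_of_disjoint hdisj
      have hc := count_split G A₁ A₂ v hunion hinter hedge hs₁ hs₂
      have u1 := U₁ T₁ h₁
      have u2 := U₂ T₂ h₂
      omega
    · intro U
      constructor
      · intro T₁ h₁
        have hs₁ := cutset_sub G A₁ v h₁
        have hs₂ : ↑(∅ : Finset V) ⊆ A₂ \ {v} := by simp
        have hT : CutsetOn (cliqueAtOn G Set.univ v) Set.univ T₁ := by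
          have := cutset_union G A₁ A₂ v hunion hinter hedge h₁ (hemp _ A₂)
          rwa [Finset.union_empty] at this
        have u := U T₁ hT
        have hc := count_split G A₁ A₂ v hunion hinter hedge hs₁ hs₂
        rw [Finset.union_empty] at hc
        simp only [Finset.coe_empty, Set.diff_empty] at hc
        omega
      · intro T₂ h₂
        have hs₂ := cutset_sub G A₂ v h₂
        have hs₁ : ↑(∅ : Finset V) ⊆ A₁ \ {v} := by simp
        have hT : CutsetOn (cliqueAtOn G Set.univ v) Set.univ T₂ := by
          have := cutset_union G A₁ A₂ v hunion hinter hedge (hemp _ A₁) h₂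
          rwa [Finset.empty_union] at this
        have u := U T₂ hT
        have hc := count_split G A₂ A₁ v hU' hI' hE' hs₂ hs₁
        rw [Finset.union_empty] at hc
        simp only [Finset.coe_empty, Set.diff_empty] at hc
        have base' := base_split G A₂ A₁ v hU' hI' hE'
        omega
  refine ⟨part1, part2, ?_⟩
  constructor
  · rintro ⟨⟨U₁, Acc₁⟩, ⟨U₂, Acc₂⟩⟩
    refine ⟨part2.mp ⟨U₁, U₂⟩, ?_⟩
    intro T hT hne
    obtain ⟨T₁, T₂, h₁, h₂, rfl⟩ := (part1 T).mp hT
    have hs₁ := cutset_sub G A₁ v h₁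
    have hs₂ := cutset_sub G A₂ v h₂
    by_cases h : T₁.Nonempty
    · obtain ⟨t, ht, hcut⟩ := Acc₁ T₁ h₁ h
      refine ⟨t, Finset.mem_union_left _ ht, ?_⟩
      have htT2 : t ∉ T₂ := by
        intro h2
        exact (hs₁ ht).2 (mem_of_inter hinter (hs₁ ht).1 (hs₂ h2).1 ▸ rfl)
      have herase : (T₁ ∪ T₂).erase t = T₁.erase t ∪ T₂ := by
        ext x
        simp only [Finset.mem_erase, Finset.mem_union]
        constructor
        · rintro ⟨hxt, hx⟩
          rcases hx with hx | hx
          · exact Or.inl ⟨hxt, hx⟩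
          · exact Or.inr hx
        · rintro (⟨hxt, hx⟩ | hx)
          · exact ⟨hxt, Or.inl hx⟩
          · exact ⟨fun e => htT2 (e ▸ hx), Or.inr hx⟩
      rw [herase]
      exact cutset_union G A₁ A₂ v hunion hinter hedge hcut h₂
    · have hne2 : T₂.Nonempty := by
        obtain ⟨x, hx⟩ := hne
        rcases Finset.mem_union.mp hx with hx | hx
        · exact absurd ⟨x, hx⟩ h
        · exact ⟨x, hx⟩
      obtain ⟨t, ht, hcut⟩ := Acc₂ T₂ h₂ hne2
      refine ⟨t, Finset.mem_union_right _ ht, ?_⟩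
      have htT1 : t ∉ T₁ := by
        intro h1
        exact (hs₂ ht).2 (mem_of_inter hI' (hs₂ ht).1 (hs₁ h1).1 ▸ rfl)
      have herase : (T₁ ∪ T₂).erase t = T₁ ∪ T₂.erase t := by
        ext x
        simp only [Finset.mem_erase, Finset.mem_union]
        constructor
        · rintro ⟨hxt, hx⟩
          rcases hx with hx | hx
          · exact Or.inl hx
          · exact Or.inr ⟨hxt, hx⟩
        · rintro (hx | ⟨hxt, hx⟩)
          · exact ⟨fun e => htT1 (e ▸ hx), Or.inl hx⟩
          · exact ⟨hxt, Or.inr hx⟩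
      rw [herase]
      exact cutset_union G A₁ A₂ v hunion hinter hedge h₁ hcut
  · rintro ⟨U, Acc⟩
    have U12 := part2.mpr U
    refine ⟨⟨U12.1, ?_⟩, ⟨U12.2, ?_⟩⟩
    · intro T₁ h₁ hne
      have hs₁ := cutset_sub G A₁ v h₁
      have hT : CutsetOn (cliqueAtOn G Set.univ v) Set.univ T₁ := by
        have := cutset_union G A₁ A₂ v hunion hinter hedge h₁ (hemp _ A₂)
        rwa [Finset.union_empty] at this
      obtain ⟨t, ht, hcut⟩ := Acc T₁ hT hne
      refine ⟨t, ht, ?_⟩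
      refine cutset_left G A₁ A₂ v hunion hinter hedge (T₂ := ∅)
        (fun x hx => hs₁ (Finset.mem_coe.mpr (Finset.mem_of_mem_erase (Finset.mem_coe.mp hx))))
        (by simp) ?_
      rwa [Finset.union_empty]
    · intro T₂ h₂ hne
      have hs₂ := cutset_sub G A₂ v h₂
      have hT : CutsetOn (cliqueAtOn G Set.univ v) Set.univ T₂ := by
        have := cutset_union G A₁ A₂ v hunion hinter hedge (hemp _ A₁) h₂
        rwa [Finset.empty_union] at this
      obtain ⟨t, ht, hcut⟩ := Acc T₂ hT hne
      refine ⟨t, ht, ?_⟩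
      refine cutset_left G A₂ A₁ v hU' hI' hE' (T₂ := ∅)
        (fun x hx => hs₂ (Finset.mem_coe.mpr (Finset.mem_of_mem_erase (Finset.mem_coe.mp hx))))
        (by simp) ?_
      rwa [Finset.union_empty]
end

section
/- Let G = G₁ ∪ G₂ be a graph with V(G₁) ∩ V(G₂) = {v}. If J_{G_v} is strongly unmixed, then J_{(G₁)_v} and J_{(G₂)_v} are strongly unmixed. -/
open SimpleGraph

universe u u'

/-!
In `G_v` the neighbourhood of `v` is a clique and every edge between `V(G₁) ∖ v` and
`V(G₂) ∖ v` joins two neighbours of `v` (`IsSplitAt`). Both properties survive deleting a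
vertex `x ≠ v` and passing from `H` to `H_x` for `x ∈ V(G₁) ∖ v`. They make the number of
components additive, `c(A₁ ∪ A₂) + 1 = c(A₁) + c(A₂)`, also after deleting vertices of
`A₁ ∖ v`: retracting `A₁ ∪ A₂` onto one side by collapsing the other side to `v` preserves
reachability. Hence cutsets, cut vertices and unmixedness pass from `A₁ ∪ A₂` to `A₁`, and
strong unmixedness follows along its recursive definition: a cut vertex `x` of the whole
graph is never `v` (its neighbourhood is a clique); if `x ∈ A₂` then `A₁` is a side of
`(A₁ ∪ A₂) ∖ x`, and if `x ∈ A₁` then `x` is a cut vertex of `A₁` whose three recursive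
pieces are the `A₁`-sides of the three pieces of the whole graph.
-/

open Function

variable {V : Type u}

theorem SimpleGraph.Reachable.map_of_adj {W : Type u'} {G : SimpleGraph V} {G' : SimpleGraph W}
    (f : V → W) (hf : ∀ ⦃a b⦄, G.Adj a b → G'.Reachable (f a) (f b)) {a b : V}
    (h : G.Reachable a b) : G'.Reachable (f a) (f b) := by
  rw [reachable_iff_reflTransGen] at h
  induction h with
  | refl => rfl
  | tail _ hab ih => exact ih.trans (hf hab)

section Induce

variable {H H' : SimpleGraph V} {A B : Set V}

theorem induce_eq_induce_iff :
    H.induce A = H'.induce A ↔ ∀ a ∈ A, ∀ b ∈ A, (H.Adj a b ↔ H'.Adj a b) := by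
  constructor
  · intro h a ha b hb
    simpa using congrArg (fun K : SimpleGraph A => K.Adj ⟨a, ha⟩ ⟨b, hb⟩) h
  · intro h
    ext a b
    simpa using h a a.2 b b.2

theorem induce_eq_of_subset (h : H.induce A = H'.induce A) (hB : B ⊆ A) :
    H.induce B = H'.induce B := by
  rw [induce_eq_induce_iff] at h ⊢
  exact fun a ha b hb => h a (hB ha) b (hB hb)

theorem cComp_congr_s5 (h : H.induce A = H'.induce A) : cComp H A = cComp H' A := by
  unfold cComp
  rw [h]

theorem cutVertexOn_congr (h : H.induce A = H'.induce A) (x : V) :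
    CutVertexOn H A x ↔ CutVertexOn H' A x := by
  unfold CutVertexOn
  rw [cComp_congr_s5 h, cComp_congr_s5 (induce_eq_of_subset h Set.sdiff_subset)]

theorem cutsetOn_congr [DecidableEq V] (h : H.induce A = H'.induce A) (T : Finset V) :
    CutsetOn H A T ↔ CutsetOn H' A T :=
  and_congr_right fun _ => forall₂_congr fun t _ =>
    cutVertexOn_congr (induce_eq_of_subset h Set.sdiff_subset) t

theorem unmixedOn_congr [DecidableEq V] (h : H.induce A = H'.induce A) :
    UnmixedOn H A ↔ UnmixedOn H' A :=
  forall_congr' fun T => by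
    rw [cutsetOn_congr h, cComp_congr_s5 h, cComp_congr_s5 (induce_eq_of_subset h Set.sdiff_subset)]

theorem adj_of_reachable_of_subset (hB : B ⊆ A)
    (hc : ∀ a b : A, (H.induce A).Reachable a b → a ≠ b → (H.induce A).Adj a b) :
    ∀ a b : B, (H.induce B).Reachable a b → a ≠ b → (H.induce B).Adj a b := by
  intro a b hab hne
  exact hc _ _ (hab.map (H.induceHomOfLE hB).toHom)
    fun h => hne ((H.induceHomOfLE hB).injective h)

end Induce

section CliqueAt

variable {G H H' : SimpleGraph V} {A A' B : Set V} {x a b : V}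

theorem cliqueAtOn_adj :
    (cliqueAtOn G A x).Adj a b ↔
      G.Adj a b ∨ (a ≠ b ∧ a ∈ A ∧ b ∈ A ∧ G.Adj x a ∧ G.Adj x b) := by
  simp only [cliqueAtOn, sup_adj, fromRel_adj]
  tauto

theorem le_cliqueAtOn : G ≤ cliqueAtOn G A x := le_sup_left

theorem cliqueAtOn_adj_self : (cliqueAtOn G A x).Adj x a ↔ G.Adj x a := by
  simp [cliqueAtOn_adj]

theorem isClique_cliqueAtOn : (cliqueAtOn G A x).IsClique (insert x (G.neighborSet x ∩ A)) :=
  isClique_insert.mpr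
    ⟨fun _ ha _ hb hab => cliqueAtOn_adj.mpr (Or.inr ⟨hab, ha.2, hb.2, ha.1, hb.1⟩),
      fun _ hb _ => le_cliqueAtOn hb.1⟩

theorem induce_cliqueAtOn_congr (hA : B ⊆ A) (hA' : B ⊆ A') :
    (cliqueAtOn G A x).induce B = (cliqueAtOn G A' x).induce B := by
  rw [induce_eq_induce_iff]
  intro a ha b hb
  simp only [cliqueAtOn_adj, hA ha, hA hb, hA' ha, hA' hb]

theorem induce_cliqueAtOn_eq (h : H.induce A = H'.induce A) (hx : x ∈ A) :
    (cliqueAtOn H A x).induce A = (cliqueAtOn H' A x).induce A := by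
  rw [induce_eq_induce_iff] at h ⊢
  intro a ha b hb
  simp only [cliqueAtOn_adj, h a ha b hb, h x hx a ha, h x hx b hb]

theorem StronglyUnmixedOn.congr [DecidableEq V] (hsu : StronglyUnmixedOn H A)
    (h : H.induce A = H'.induce A) : StronglyUnmixedOn H' A := by
  induction hsu generalizing H' with
  | complete H A hc => exact .complete H' A (h ▸ hc)
  | cut H A hU x hx _ _ _ ih₁ ih₂ ih₃ =>
    have hK := induce_cliqueAtOn_eq h hx.1
    exact .cut H' A ((unmixedOn_congr h).mp hU) x ((cutVertexOn_congr h x).mp hx)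
      (ih₁ (induce_eq_of_subset h Set.sdiff_subset)) (ih₂ hK)
      (ih₃ (induce_eq_of_subset hK Set.sdiff_subset))

end CliqueAt

section Retraction

variable {H : SimpleGraph V} {B B' B₁ B₂ : Set V} {v : V}

theorem injective_map_induceHomOfLE (hB : B' ⊆ B) (f : B → B')
    (hf : ∀ p : B', f (Set.inclusion hB p) = p)
    (hadj : ∀ ⦃p q : B⦄, (H.induce B).Adj p q → (H.induce B').Reachable (f p) (f q)) :
    Injective (ConnectedComponent.map (H.induceHomOfLE hB).toHom) := by
  intro c c'
  induction c, c' using ConnectedComponent.ind₂ with | _ p q => ?_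
  simp only [ConnectedComponent.map_mk, ConnectedComponent.eq]
  intro h
  convert h.map_of_adj f hadj <;> exact (hf _).symm

theorem not_cutVertexOn_of_isClique [Finite V] (h : H.IsClique (H.neighborSet v ∩ B)) :
    ¬ CutVertexOn H B v := by
  classical
  rintro ⟨-, hlt⟩
  obtain ⟨a₀, ha₀⟩ : (B \ {v}).Nonempty := by
    by_contra he
    rw [Set.not_nonempty_iff_eq_empty.mp he] at hlt
    simp [cComp] at hlt
  -- `v` is collapsed onto one of its neighbours, or anywhere if it has none
  obtain ⟨c, hc⟩ : ∃ c : ↥(B \ {v}), ∀ q ∈ B, H.Adj v q → q = c ∨ H.Adj q c := by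
    by_cases hN : ∃ w ∈ B, H.Adj v w
    · obtain ⟨w, hw, hvw⟩ := hN
      refine ⟨⟨w, hw, hvw.ne.symm⟩, fun q hq hvq => or_iff_not_imp_left.mpr fun hqw => ?_⟩
      exact h ⟨hvq, hq⟩ ⟨hvw, hw⟩ hqw
    · push Not at hN
      exact ⟨⟨a₀, ha₀⟩, fun q hq hvq => (hN q hq hvq).elim⟩
  let f : B → ↥(B \ {v}) := fun p => if hp : (p : V) = v then c else ⟨p, p.2, hp⟩
  have hfv : ∀ p q : B, (p : V) = v → H.Adj p q → (H.induce (B \ {v})).Reachable (f p) (f q) := by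
    intro p q hp hpq
    have hq : (q : V) ≠ v := fun hq => hpq.ne (hp.trans hq.symm)
    simp only [f, hp, hq, dite_true, dite_false]
    rcases hc q q.2 (hp ▸ hpq) with hqc | hqc
    · rw [show c = ⟨q, q.2, hq⟩ from Subtype.ext hqc.symm]
    · exact (Adj.reachable (show (H.induce (B \ {v})).Adj ⟨q, q.2, hq⟩ c from hqc)).symm
  have hinj := injective_map_induceHomOfLE (H := H) Set.sdiff_subset f
    (fun p => dif_neg p.2.2) fun p q hpq => by
      by_cases hp : (p : V) = v
      · exact hfv p q hp hpq
      by_cases hq : (q : V) = v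
      · exact (hfv q p hq hpq.symm).symm
      simp only [f, hp, hq, dite_false]
      exact Adj.reachable hpq
  have := Nat.card_le_card_of_injective _ hinj
  unfold cComp at hlt
  omega

open Classical in
noncomputable def retractTo (B₁ : Set V) (hv : v ∈ B₁) (B : Set V) (p : B) : B₁ :=
  if hp : (p : V) ∈ B₁ then ⟨p, hp⟩ else ⟨v, hv⟩

theorem retractTo_inclusion (hv : v ∈ B₁) (hB : B₁ ⊆ B) (p : B₁) :
    retractTo B₁ hv B (Set.inclusion hB p) = p := dif_pos p.2

theorem retractTo_of_mem (hv : v ∈ B₁) {p : B} (hp : (p : V) ∈ B₁) :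
    retractTo B₁ hv B p = ⟨p, hp⟩ := dif_pos hp

theorem retractTo_of_notMem (hv : v ∈ B₁) {p : B} (hp : (p : V) ∉ B₁) :
    retractTo B₁ hv B p = ⟨v, hv⟩ := dif_neg hp

theorem reachable_retractTo (hB : B ⊆ B₁ ∪ B₂) (hv : v ∈ B₁)
    (hcross : ∀ p ∈ B₁ \ {v}, ∀ q ∈ B₂ \ {v}, H.Adj p q → H.Adj v p) ⦃p q : B⦄
    (hpq : (H.induce B).Adj p q) :
    (H.induce B₁).Reachable (retractTo B₁ hv B p) (retractTo B₁ hv B q) := by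
  have toV : ∀ p q : B, H.Adj p q → (p : V) ∈ B₁ → (q : V) ∉ B₁ →
      (H.induce B₁).Reachable (retractTo B₁ hv B p) (retractTo B₁ hv B q) := by
    intro p q hpq hp hq
    rw [retractTo_of_mem hv hp, retractTo_of_notMem hv hq]
    by_cases hpv : (p : V) = v
    · rw [show (⟨p, hp⟩ : B₁) = ⟨v, hv⟩ from Subtype.ext hpv]
    have hq₂ : (q : V) ∈ B₂ \ {v} := ⟨(hB q.2).resolve_left hq, fun h => hq (h ▸ hv)⟩
    exact (Adj.reachable (show (H.induce B₁).Adj ⟨v, hv⟩ ⟨p, hp⟩ from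
      hcross p ⟨hp, hpv⟩ q hq₂ hpq)).symm
  by_cases hp : (p : V) ∈ B₁ <;> by_cases hq : (q : V) ∈ B₁
  · rw [retractTo_of_mem hv hp, retractTo_of_mem hv hq]
    exact Adj.reachable hpq
  · exact toV p q hpq hp hq
  · exact (toV q p hpq.symm hq hp).symm
  · rw [retractTo_of_notMem hv hp, retractTo_of_notMem hv hq]

theorem cComp_union_add_one [Finite V] (hI : B₁ ∩ B₂ = {v})
    (hcross : ∀ p ∈ B₁ \ {v}, ∀ q ∈ B₂ \ {v}, H.Adj p q → H.Adj v p ∧ H.Adj v q) :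
    cComp H (B₁ ∪ B₂) + 1 = cComp H B₁ + cComp H B₂ := by
  obtain ⟨hv₁, hv₂⟩ : v ∈ B₁ ∩ B₂ := hI ▸ rfl
  set i₁ := ConnectedComponent.map (H.induceHomOfLE (Set.subset_union_left : B₁ ⊆ B₁ ∪ B₂)).toHom
  set i₂ := ConnectedComponent.map (H.induceHomOfLE (Set.subset_union_right : B₂ ⊆ B₁ ∪ B₂)).toHom
  have adj₁ := reachable_retractTo (B := B₁ ∪ B₂) subset_rfl hv₁
    fun p hp q hq h => (hcross p hp q hq h).1
  have adj₂ := reachable_retractTo (B := B₁ ∪ B₂) (Set.union_comm B₁ B₂).subset hv₂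
    fun q hq p hp h => (hcross p hp q hq h.symm).2
  have hinj₁ : Injective i₁ :=
    injective_map_induceHomOfLE _ _ (retractTo_inclusion _ _) adj₁
  have hinj₂ : Injective i₂ :=
    injective_map_induceHomOfLE _ _ (retractTo_inclusion _ _) adj₂
  have hcover : Set.range i₁ ∪ Set.range i₂ = Set.univ := by
    refine Set.eq_univ_of_forall fun c => c.ind fun ⟨p, hp⟩ => ?_
    rcases hp with hp | hp
    · exact Or.inl ⟨(H.induce B₁).connectedComponentMk ⟨p, hp⟩, rfl⟩
    · exact Or.inr ⟨(H.induce B₂).connectedComponentMk ⟨p, hp⟩, rfl⟩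
  have hinter : Set.range i₁ ∩ Set.range i₂ =
      {i₁ ((H.induce B₁).connectedComponentMk ⟨v, hv₁⟩)} := by
    refine Set.Subset.antisymm ?_ fun c hc =>
      ⟨⟨_, hc.symm⟩, ⟨(H.induce B₂).connectedComponentMk ⟨v, hv₂⟩, hc ▸ rfl⟩⟩
    rintro _ ⟨⟨c₁, rfl⟩, ⟨c₂, hc⟩⟩
    induction c₁ using ConnectedComponent.ind with | _ a => ?_
    induction c₂ using ConnectedComponent.ind with | _ b => ?_
    refine congrArg i₁ (ConnectedComponent.eq.mpr ?_)
    simp only [i₁, i₂, ConnectedComponent.map_mk, ConnectedComponent.eq,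
      RelEmbedding.coe_toRelHom, induceHomOfLE_apply] at hc
    have hb : retractTo B₁ hv₁ (B₁ ∪ B₂) (Set.inclusion Set.subset_union_right b) = ⟨v, hv₁⟩ := by
      by_cases hb₁ : (b : V) ∈ B₁
      · rw [retractTo_of_mem (B := B₁ ∪ B₂) hv₁ (p := Set.inclusion Set.subset_union_right b) hb₁]
        exact Subtype.ext (hI.subset ⟨hb₁, b.2⟩)
      · exact retractTo_of_notMem hv₁ hb₁
    have := hc.symm.map_of_adj _ adj₁
    rwa [retractTo_inclusion, hb] at this
  have := Set.ncard_union_add_ncard_inter (Set.range i₁) (Set.range i₂)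
  rwa [hcover, hinter, Set.ncard_univ, Set.ncard_singleton, Set.ncard_range_of_injective hinj₁,
    Set.ncard_range_of_injective hinj₂] at this

end Retraction

/-- The shape of `G_v` for `G = G₁ ∪ G₂` with `V(G₁) ∩ V(G₂) = {v}`, seen from `A₁ ∪ A₂`. -/
structure IsSplitAt (H : SimpleGraph V) (A₁ A₂ : Set V) (v : V) : Prop where
  inter_eq : A₁ ∩ A₂ = {v}
  isClique : H.IsClique (H.neighborSet v ∩ (A₁ ∪ A₂))
  adj_of_crossing : ∀ p ∈ A₁ \ {v}, ∀ q ∈ A₂ \ {v}, H.Adj p q → H.Adj v p ∧ H.Adj v q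

theorem isSplitAt_cliqueAtOn {G : SimpleGraph V} {A₁ A₂ : Set V} {v : V}
    (hI : A₁ ∩ A₂ = {v})
    (hedge : ∀ a b : V, G.Adj a b → (a ∈ A₁ ∧ b ∈ A₁) ∨ (a ∈ A₂ ∧ b ∈ A₂)) :
    IsSplitAt (cliqueAtOn G (A₁ ∪ A₂) v) A₁ A₂ v where
  inter_eq := hI
  isClique := isClique_cliqueAtOn.subset fun _ ha => Or.inr ⟨cliqueAtOn_adj_self.mp ha.1, ha.2⟩
  adj_of_crossing p hp q hq hpq := by
    rcases cliqueAtOn_adj.mp hpq with hpq | ⟨-, -, -, hvp, hvq⟩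
    · exfalso
      rcases hedge p q hpq with ⟨-, hq₁⟩ | ⟨hp₂, -⟩
      · exact hq.2 (hI ▸ ⟨hq₁, hq.1⟩)
      · exact hp.2 (hI ▸ ⟨hp.1, hp₂⟩)
    · exact ⟨le_cliqueAtOn hvp, le_cliqueAtOn hvq⟩

namespace IsSplitAt

variable {H : SimpleGraph V} {A₁ A₂ S : Set V} {v x : V}

theorem symm (h : IsSplitAt H A₁ A₂ v) : IsSplitAt H A₂ A₁ v where
  inter_eq := Set.inter_comm A₁ A₂ ▸ h.inter_eq
  isClique := Set.union_comm A₁ A₂ ▸ h.isClique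
  adj_of_crossing p hp q hq hpq := (h.adj_of_crossing q hq p hp hpq.symm).symm

theorem eq_of_mem (h : IsSplitAt H A₁ A₂ v) (h₁ : x ∈ A₁) (h₂ : x ∈ A₂) : x = v :=
  h.inter_eq.subset ⟨h₁, h₂⟩

theorem sdiff_left (h : IsSplitAt H A₁ A₂ v) (hvS : v ∉ S) : IsSplitAt H (A₁ \ S) A₂ v where
  inter_eq := by
    rw [← Set.inter_sdiff_right_comm, h.inter_eq]
    exact sdiff_eq_left.mpr (Set.disjoint_singleton_left.mpr hvS)
  isClique := h.isClique.subset
    (Set.inter_subset_inter_right _ (Set.union_subset_union_left _ Set.sdiff_subset))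
  adj_of_crossing p hp q hq := h.adj_of_crossing p ⟨hp.1.1, hp.2⟩ q hq

theorem not_cutVertexOn [Finite V] (h : IsSplitAt H A₁ A₂ v) {B : Set V} (hB : B ⊆ A₁ ∪ A₂) :
    ¬ CutVertexOn H B v :=
  not_cutVertexOn_of_isClique (h.isClique.subset (Set.inter_subset_inter_right _ hB))

theorem cliqueAtOn (h : IsSplitAt H A₁ A₂ v) (hx₁ : x ∈ A₁) (hxv : x ≠ v) :
    IsSplitAt (cliqueAtOn H (A₁ ∪ A₂) x) A₁ A₂ v where
  inter_eq := h.inter_eq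
  isClique := by
    by_cases hvx : H.Adj v x
    · -- all `H_x`-neighbours of `v` lie in the closed neighbourhood of `x`
      refine isClique_cliqueAtOn.subset ?_
      rintro a ⟨hva, ha⟩
      rcases cliqueAtOn_adj.mp hva with hva | ⟨-, -, -, -, hxa⟩
      · by_cases hax : a = x
        · exact hax ▸ Set.mem_insert a _
        · exact Set.mem_insert_of_mem _ ⟨h.isClique ⟨hvx, Or.inl hx₁⟩ ⟨hva, ha⟩ (Ne.symm hax), ha⟩
      · exact Set.mem_insert_of_mem _ ⟨hxa, ha⟩
    · -- `v` gains no neighbours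
      refine (h.isClique.mono le_cliqueAtOn).subset ?_
      rintro a ⟨hva, ha⟩
      refine ⟨?_, ha⟩
      rcases cliqueAtOn_adj.mp hva with hva | ⟨-, -, -, hxv', -⟩
      · exact hva
      · exact (hvx hxv'.symm).elim
  adj_of_crossing p hp q hq hpq := by
    rcases cliqueAtOn_adj.mp hpq with hpq | ⟨-, -, -, hxp, hxq⟩
    · exact (h.adj_of_crossing p hp q hq hpq).imp (le_cliqueAtOn ·) (le_cliqueAtOn ·)
    · obtain ⟨hvx, hvq⟩ := h.adj_of_crossing x ⟨hx₁, hxv⟩ q hq hxq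
      exact ⟨cliqueAtOn_adj.mpr (Or.inr ⟨fun e => hp.2 e.symm, Or.inl (h.inter_eq.superset rfl).1,
        Or.inl hp.1, hvx.symm, hxp⟩), le_cliqueAtOn hvq⟩

variable [Finite V]

theorem cComp_union_sdiff_add_one (h : IsSplitAt H A₁ A₂ v) (hS : S ⊆ A₁ \ {v}) :
    cComp H ((A₁ ∪ A₂) \ S) + 1 = cComp H (A₁ \ S) + cComp H A₂ := by
  have hS₂ : ∀ s ∈ S, s ∉ A₂ := fun s hs hs₂ => (hS hs).2 (h.eq_of_mem (hS hs).1 hs₂)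
  have hsplit : (A₁ ∪ A₂) \ S = A₁ \ S ∪ A₂ := by
    ext a
    simp only [Set.mem_sdiff, Set.mem_union]
    by_cases ha : a ∈ S <;> have := hS₂ a <;> tauto
  have h' := h.sdiff_left fun hv => (hS hv).2 rfl
  rw [hsplit]
  exact cComp_union_add_one h'.inter_eq h'.adj_of_crossing

theorem cutVertexOn_union_sdiff_iff (h : IsSplitAt H A₁ A₂ v) (hS : S ⊆ A₁ \ {v}) {t : V}
    (ht : t ∈ A₁ \ {v}) (htS : t ∉ S) :
    CutVertexOn H ((A₁ ∪ A₂) \ S) t ↔ CutVertexOn H (A₁ \ S) t := by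
  have e₁ := h.cComp_union_sdiff_add_one hS
  have e₂ := h.cComp_union_sdiff_add_one (Set.union_subset hS (Set.singleton_subset_iff.mpr ht))
  rw [← Set.sdiff_sdiff, ← Set.sdiff_sdiff] at e₂
  have ht₁ : t ∈ A₁ \ S := ⟨ht.1, htS⟩
  have ht₁₂ : t ∈ (A₁ ∪ A₂) \ S := ⟨Or.inl ht.1, htS⟩
  unfold CutVertexOn
  constructor <;> rintro ⟨-, hlt⟩
  · exact ⟨ht₁, by omega⟩
  · exact ⟨ht₁₂, by omega⟩

theorem cutVertexOn_left (h : IsSplitAt H A₁ A₂ v) (hx : CutVertexOn H (A₁ ∪ A₂) x)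
    (hx₁ : x ∈ A₁) (hxv : x ≠ v) : CutVertexOn H A₁ x := by
  simpa using (h.cutVertexOn_union_sdiff_iff (Set.empty_subset _) ⟨hx₁, hxv⟩ (Set.notMem_empty x)).mp
    (by simpa using hx)

variable [DecidableEq V] {T : Finset V}

theorem subset_diff_of_cutsetOn (h : IsSplitAt H A₁ A₂ v) (hT : CutsetOn H A₁ T) :
    ↑T ⊆ A₁ \ {v} := by
  intro t ht
  refine ⟨hT.1 ht, fun htv => ?_⟩
  rw [Set.mem_singleton_iff.mp htv] at ht
  exact h.not_cutVertexOn (Set.sdiff_subset.trans Set.subset_union_left) (hT.2 v ht)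

theorem cutsetOn_union (h : IsSplitAt H A₁ A₂ v) (hT : CutsetOn H A₁ T) :
    CutsetOn H (A₁ ∪ A₂) T := by
  have hTA := h.subset_diff_of_cutsetOn hT
  refine ⟨hT.1.trans Set.subset_union_left, fun t ht => ?_⟩
  have hS : ↑(T.erase t) ⊆ A₁ \ {v} := (Finset.coe_subset.mpr (T.erase_subset t)).trans hTA
  exact (h.cutVertexOn_union_sdiff_iff hS (hTA ht) (by simp)).mpr (hT.2 t ht)

theorem unmixedOn_left (h : IsSplitAt H A₁ A₂ v) (hU : UnmixedOn H (A₁ ∪ A₂)) :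
    UnmixedOn H A₁ := by
  intro T hT
  have e₁ := h.cComp_union_sdiff_add_one (h.subset_diff_of_cutsetOn hT)
  have e₂ := h.cComp_union_sdiff_add_one (Set.empty_subset (A₁ \ {v}))
  rw [Set.sdiff_empty, Set.sdiff_empty] at e₂
  have := hU T (h.cutsetOn_union hT)
  omega

end IsSplitAt

theorem StronglyUnmixedOn.left_of_isSplitAt [Finite V] [DecidableEq V] {H : SimpleGraph V}
    {A A₁ A₂ : Set V} {v : V} (hsu : StronglyUnmixedOn H A) (hA : A₁ ∪ A₂ = A)
    (h : IsSplitAt H A₁ A₂ v) : StronglyUnmixedOn H A₁ := by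
  induction hsu generalizing A₁ A₂ with
  | complete H A hc =>
    exact .complete H A₁ (adj_of_reachable_of_subset (hA ▸ Set.subset_union_left) hc)
  | cut H A hU x hx _ _ _ ih₁ ih₂ ih₃ =>
    subst hA
    have hxv : x ≠ v := by
      rintro rfl
      exact h.not_cutVertexOn subset_rfl hx
    have hvx : v ∉ ({x} : Set V) := Ne.symm hxv
    rcases hx.1 with hx₁ | hx₂
    · have hdiff : A₁ \ {x} ∪ A₂ = (A₁ ∪ A₂) \ {x} := by
        rw [Set.union_sdiff_distrib,
          Set.sdiff_singleton_eq_self fun hx₂ => hxv (h.eq_of_mem hx₁ hx₂)]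
      have hK := h.cliqueAtOn hx₁ hxv
      refine .cut H A₁ (h.unmixedOn_left hU) x (h.cutVertexOn_left hx hx₁ hxv)
        (ih₁ hdiff (h.sdiff_left hvx)) ?_ ?_
      · exact (ih₂ rfl hK).congr (induce_cliqueAtOn_congr Set.subset_union_left subset_rfl)
      · exact (ih₃ hdiff (hK.sdiff_left hvx)).congr
          (induce_cliqueAtOn_congr (Set.sdiff_subset.trans Set.subset_union_left) Set.sdiff_subset)
    · have hdiff : A₁ ∪ A₂ \ {x} = (A₁ ∪ A₂) \ {x} := by
        rw [Set.union_sdiff_distrib,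
          Set.sdiff_singleton_eq_self fun hx₁ => hxv (h.eq_of_mem hx₁ hx₂)]
      exact ih₁ hdiff (h.symm.sdiff_left hvx).symm

/-- for `G = G₁ ∪ G₂` with `V(G₁) ∩ V(G₂) = {v}`, if `J_{G_v}` is
strongly unmixed, then `J_{(G₁)_v}` and `J_{(G₂)_v}` are strongly unmixed. -/
theorem stronglyUnmixed_cliqueAt_of_union {V : Type u} [Fintype V] [DecidableEq V]
    (G : SimpleGraph V) (A₁ A₂ : Set V) (v : V)
    (hunion : A₁ ∪ A₂ = Set.univ) (hinter : A₁ ∩ A₂ = {v})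
    (hedge : ∀ a b : V, G.Adj a b → (a ∈ A₁ ∧ b ∈ A₁) ∨ (a ∈ A₂ ∧ b ∈ A₂))
    (hsu : StronglyUnmixedOn (cliqueAtOn G Set.univ v) Set.univ) :
    StronglyUnmixedOn (cliqueAtOn G A₁ v) A₁ ∧
      StronglyUnmixedOn (cliqueAtOn G A₂ v) A₂ := by
  rw [← hunion] at hsu
  have h := isSplitAt_cliqueAtOn hinter hedge
  exact ⟨(hsu.left_of_isSplitAt rfl h).congr
      (induce_cliqueAtOn_congr Set.subset_union_left subset_rfl),
    (hsu.left_of_isSplitAt (Set.union_comm A₂ A₁) h.symm).congr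
      (induce_cliqueAtOn_congr Set.subset_union_right subset_rfl)⟩
end

section
/- Let G = G₁ ∪ G₂ be a graph with V(G₁) ∩ V(G₂) = {v}. If J_{(G₁)_v} and J_{(G₂)_v} are strongly unmixed, then J_{G_v} is strongly unmixed. -/
open SimpleGraph

universe u u'

namespace SU6
variable {V : Type u}

/-- adjacency of `cliqueAtOn` unfolded. -/
lemma cliqueAtOn_adj (G : SimpleGraph V) (A : Set V) (x a b : V) :
    (cliqueAtOn G A x).Adj a b ↔
      G.Adj a b ∨ (a ≠ b ∧ a ∈ A ∧ b ∈ A ∧ G.Adj x a ∧ G.Adj x b) := by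
  simp only [cliqueAtOn, SimpleGraph.sup_adj, SimpleGraph.fromRel_adj]
  tauto

lemma cliqueAtOn_adj_apex (G : SimpleGraph V) (A : Set V) (x c : V) :
    (cliqueAtOn G A x).Adj x c ↔ G.Adj x c := by
  rw [cliqueAtOn_adj]
  constructor
  · rintro (h | ⟨-, -, -, h, -⟩) <;> [exact h; exact (G.irrefl h).elim]
  · exact Or.inl

def AgreeOn (G G' : SimpleGraph V) (A : Set V) : Prop :=
  ∀ a b, a ∈ A → b ∈ A → (G.Adj a b ↔ G'.Adj a b)

lemma AgreeOn.refl (G : SimpleGraph V) (A : Set V) : AgreeOn G G A := fun _ _ _ _ => Iff.rfl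

lemma AgreeOn.symm {G G' : SimpleGraph V} {A : Set V} (h : AgreeOn G G' A) : AgreeOn G' G A :=
  fun a b ha hb => (h a b ha hb).symm

lemma AgreeOn.trans {G G' G'' : SimpleGraph V} {A : Set V} (h : AgreeOn G G' A)
    (h' : AgreeOn G' G'' A) : AgreeOn G G'' A :=
  fun a b ha hb => (h a b ha hb).trans (h' a b ha hb)

lemma AgreeOn.mono {G G' : SimpleGraph V} {A B : Set V} (h : AgreeOn G G' A) (hBA : B ⊆ A) :
    AgreeOn G G' B := fun a b ha hb => h a b (hBA ha) (hBA hb)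

lemma AgreeOn.induce_eq {G G' : SimpleGraph V} {A : Set V} (h : AgreeOn G G' A) :
    G.induce A = G'.induce A := by
  ext ⟨a, ha⟩ ⟨b, hb⟩
  exact h a b ha hb

lemma AgreeOn.cliqueAtOn {G G' : SimpleGraph V} {A : Set V} (h : AgreeOn G G' A) {x : V}
    (hx : x ∈ A) : AgreeOn (_root_.cliqueAtOn G A x) (_root_.cliqueAtOn G' A x) A := by
  intro a b ha hb
  have h1 := h a b ha hb
  have h2 := h x a hx ha
  have h3 := h x b hx hb
  rw [cliqueAtOn_adj, cliqueAtOn_adj]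
  tauto

lemma cComp_congr {G G' : SimpleGraph V} {A B : Set V} (h : AgreeOn G G' A) (hBA : B ⊆ A) :
    cComp G B = cComp G' B := by
  unfold cComp
  rw [(h.mono hBA).induce_eq]

lemma cutVertexOn_congr {G G' : SimpleGraph V} {A B : Set V} (h : AgreeOn G G' A) (hBA : B ⊆ A)
    {x : V} : CutVertexOn G B x ↔ CutVertexOn G' B x := by
  unfold CutVertexOn
  rw [cComp_congr h hBA, cComp_congr h (le_trans (Set.diff_subset) hBA)]

lemma cutsetOn_congr [DecidableEq V] {G G' : SimpleGraph V} {A B : Set V} (h : AgreeOn G G' A)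
    (hBA : B ⊆ A) {T : Finset V} : CutsetOn G B T ↔ CutsetOn G' B T := by
  unfold CutsetOn
  refine and_congr Iff.rfl (forall_congr' fun t => forall_congr' fun ht => ?_)
  exact cutVertexOn_congr h (le_trans (Set.diff_subset) hBA)

lemma unmixedOn_congr [DecidableEq V] {G G' : SimpleGraph V} {A B : Set V} (h : AgreeOn G G' A)
    (hBA : B ⊆ A) : UnmixedOn G B ↔ UnmixedOn G' B := by
  unfold UnmixedOn
  refine forall_congr' fun T => ?_
  rw [cutsetOn_congr h hBA, cComp_congr h (le_trans (Set.diff_subset) hBA), cComp_congr h hBA]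

lemma su_congr [DecidableEq V] {G : SimpleGraph V} {A : Set V}
    (hsu : StronglyUnmixedOn G A) :
    ∀ G' : SimpleGraph V, AgreeOn G G' A → StronglyUnmixedOn G' A := by
  induction hsu with
  | complete G A h =>
    intro G' hag
    exact StronglyUnmixedOn.complete G' A (by rw [← hag.induce_eq]; exact h)
  | cut G A hU x hx h1 h2 h3 ih1 ih2 ih3 =>
    intro G' hag
    refine StronglyUnmixedOn.cut G' A ((unmixedOn_congr hag le_rfl).1 hU) x
      ((cutVertexOn_congr hag le_rfl).1 hx) (ih1 G' (hag.mono Set.diff_subset))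
      (ih2 _ (hag.cliqueAtOn hx.1)) (ih3 _ ((hag.cliqueAtOn hx.1).mono Set.diff_subset))

end SU6
namespace SU6
variable {V : Type u}

lemma reachIn_iff {G : SimpleGraph V} {A : Set V} {a b : V} (ha : a ∈ A) (hb : b ∈ A) :
    ReachIn G A a b ↔ (G.induce A).Reachable ⟨a, ha⟩ ⟨b, hb⟩ := by
  constructor
  · rintro ⟨ha', hb', hr⟩; exact hr
  · intro hr; exact ⟨ha, hb, hr⟩

lemma reachIn_refl {G : SimpleGraph V} {A : Set V} {a : V} (ha : a ∈ A) : ReachIn G A a a :=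
  ⟨ha, ha, Reachable.refl _⟩

lemma reachIn_adj {G : SimpleGraph V} {A : Set V} {a b : V} (ha : a ∈ A) (hb : b ∈ A)
    (h : G.Adj a b) : ReachIn G A a b :=
  ⟨ha, hb, SimpleGraph.Adj.reachable (by exact h)⟩

lemma reachIn_symm {G : SimpleGraph V} {A : Set V} {a b : V} (h : ReachIn G A a b) :
    ReachIn G A b a := by
  obtain ⟨ha, hb, hr⟩ := h
  exact ⟨hb, ha, hr.symm⟩

lemma reachIn_trans {G : SimpleGraph V} {A : Set V} {a b c : V} (h : ReachIn G A a b)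
    (h' : ReachIn G A b c) : ReachIn G A a c := by
  obtain ⟨ha, hb, hr⟩ := h
  obtain ⟨hb', hc, hr'⟩ := h'
  exact ⟨ha, hc, hr.trans hr'⟩

lemma reachIn_of_eq {G : SimpleGraph V} {A B : Set V} (h : A = B) {a b : V}
    (hr : ReachIn G A a b) : ReachIn G B a b := by
  subst h
  exact hr

/-- inclusion hom between induced subgraphs. -/
def incHom (G : SimpleGraph V) {A B : Set V} (hAB : A ⊆ B) : G.induce A →g G.induce B :=
  ⟨fun u => ⟨u.1, hAB u.2⟩, fun {u w} h => h⟩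

lemma reachIn_mono {G : SimpleGraph V} {A B : Set V} (hAB : A ⊆ B) {a b : V}
    (h : ReachIn G A a b) : ReachIn G B a b := by
  obtain ⟨ha, hb, hr⟩ := h
  exact ⟨hAB ha, hAB hb, hr.map (incHom G hAB)⟩

lemma reachIn_congr {G G' : SimpleGraph V} {A B : Set V} (h : AgreeOn G G' A) (hBA : B ⊆ A)
    {a b : V} : ReachIn G B a b ↔ ReachIn G' B a b := by
  unfold ReachIn
  rw [(h.mono hBA).induce_eq]

section Glue
variable {K : SimpleGraph V} {B₁ B₂ : Set V} {v : V}

lemma glue_walk (hv1 : v ∈ B₁) (hv2 : v ∈ B₂) (hint : B₁ ∩ B₂ ⊆ {v})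
    (hcross : ∀ a b, a ∈ B₁ → b ∈ B₂ → a ∉ B₂ → b ∉ B₁ → K.Adj a b → K.Adj v a ∧ K.Adj v b)
    :
    ∀ {y bb : ↑(B₁ ∪ B₂)} (_ : (K.induce (B₁ ∪ B₂)).Walk y bb), ↑bb ∈ B₁ →
      (↑y ∈ B₁ → ReachIn K B₁ ↑y ↑bb) ∧
      (↑y ∈ B₂ → ReachIn K B₂ ↑y v ∧ ReachIn K B₁ v ↑bb) := by
  intro y bb w
  induction w with
  | @nil z =>
    intro hb
    refine ⟨fun hy => reachIn_refl hb, fun hy => ?_⟩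
    have hbv : (↑z : V) = v := hint ⟨hb, hy⟩
    rw [hbv]
    exact ⟨reachIn_refl hv2, reachIn_refl hv1⟩
  | @cons y c bb h p ih' =>
    intro hb
    have ih := ih' hb
    have hyc : K.Adj ↑y ↑c := h
    have part1 : (↑y : V) ∈ B₁ → ReachIn K B₁ ↑y ↑bb := by
      intro hy
      by_cases hcB1 : (↑c : V) ∈ B₁
      · exact reachIn_trans (reachIn_adj hy hcB1 hyc) (ih.1 hcB1)
      · have hcB2 : (↑c : V) ∈ B₂ := c.2.resolve_left hcB1
        by_cases hyv : (↑y : V) = v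
        · rw [hyv]
          exact (ih.2 hcB2).2
        · have hyB2 : (↑y : V) ∉ B₂ := fun h2 => hyv (hint ⟨hy, h2⟩)
          obtain ⟨hva, hvc⟩ := hcross ↑y ↑c hy hcB2 hyB2 hcB1 hyc
          exact reachIn_trans (reachIn_adj hy hv1 hva.symm) ((ih.2 hcB2).2)
    refine ⟨part1, fun hy2 => ?_⟩
    by_cases hyB1 : (↑y : V) ∈ B₁
    · have hyv : (↑y : V) = v := hint ⟨hyB1, hy2⟩
      rw [hyv]
      refine ⟨reachIn_refl hv2, ?_⟩
      have := part1 hyB1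
      rwa [hyv] at this
    · by_cases hcB2 : (↑c : V) ∈ B₂
      · exact ⟨reachIn_trans (reachIn_adj hy2 hcB2 hyc) ((ih.2 hcB2).1), (ih.2 hcB2).2⟩
      · have hcB1 : (↑c : V) ∈ B₁ := c.2.resolve_right hcB2
        obtain ⟨hvc, hvy⟩ := hcross ↑c ↑y hcB1 hy2 hcB2 hyB1 hyc.symm
        exact ⟨reachIn_adj hy2 hv2 hvy.symm, reachIn_trans (reachIn_adj hv1 hcB1 hvc) (ih.1 hcB1)⟩

lemma glue_reach₁ (hv1 : v ∈ B₁) (hv2 : v ∈ B₂) (hint : B₁ ∩ B₂ ⊆ {v})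
    (hcross : ∀ a b, a ∈ B₁ → b ∈ B₂ → a ∉ B₂ → b ∉ B₁ → K.Adj a b → K.Adj v a ∧ K.Adj v b)
    {a b : V} (h : ReachIn K (B₁ ∪ B₂) a b) (ha : a ∈ B₁) (hb : b ∈ B₁) :
    ReachIn K B₁ a b := by
  obtain ⟨ha', hb', hr⟩ := h
  obtain ⟨w⟩ := hr
  exact (glue_walk hv1 hv2 hint hcross w hb).1 ha

lemma glue_reach₂ (hv1 : v ∈ B₁) (hv2 : v ∈ B₂) (hint : B₁ ∩ B₂ ⊆ {v})
    (hcross : ∀ a b, a ∈ B₁ → b ∈ B₂ → a ∉ B₂ → b ∉ B₁ → K.Adj a b → K.Adj v a ∧ K.Adj v b)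
    {a b : V} (h : ReachIn K (B₁ ∪ B₂) a b) (ha : a ∈ B₂) (hb : b ∈ B₁) :
    ReachIn K B₂ a v ∧ ReachIn K B₁ v b := by
  obtain ⟨ha', hb', hr⟩ := h
  obtain ⟨w⟩ := hr
  exact (glue_walk hv1 hv2 hint hcross w hb).2 ha

end Glue
end SU6
namespace SU6
variable {V : Type u}

lemma mk_eq_iff_reachIn {K : SimpleGraph V} {B : Set V} (u w : ↥B) :
    (K.induce B).connectedComponentMk u = (K.induce B).connectedComponentMk w ↔
      ReachIn K B ↑u ↑w := by
  rw [ConnectedComponent.eq]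
  constructor
  · intro h; exact ⟨u.2, w.2, h⟩
  · rintro ⟨_, _, h⟩; exact h

section Glue
variable {K : SimpleGraph V} {B₁ B₂ : Set V} {v : V}

lemma glue_cComp [Finite V] (hv1 : v ∈ B₁) (hv2 : v ∈ B₂) (hint : B₁ ∩ B₂ ⊆ {v})
    (hcross : ∀ a b, a ∈ B₁ → b ∈ B₂ → a ∉ B₂ → b ∉ B₁ → K.Adj a b → K.Adj v a ∧ K.Adj v b) :
    cComp K (B₁ ∪ B₂) + 1 = cComp K B₁ + cComp K B₂ := by
  classical
  have hint' : B₂ ∩ B₁ ⊆ {v} := by rwa [Set.inter_comm]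
  have hcross' : ∀ a b, a ∈ B₂ → b ∈ B₁ → a ∉ B₁ → b ∉ B₂ → K.Adj a b →
      K.Adj v a ∧ K.Adj v b := by
    intro a b ha hb ha' hb' hadj
    obtain ⟨h1, h2⟩ := hcross b a hb ha hb' ha' hadj.symm
    exact ⟨h2, h1⟩
  set C2v : (K.induce B₂).ConnectedComponent := (K.induce B₂).connectedComponentMk ⟨v, hv2⟩
    with hC2v
  let ι₁ : K.induce B₁ →g K.induce (B₁ ∪ B₂) := incHom K Set.subset_union_left
  let ι₂ : K.induce B₂ →g K.induce (B₁ ∪ B₂) := incHom K Set.subset_union_right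
  let ψ : (K.induce B₁).ConnectedComponent ⊕ {c : (K.induce B₂).ConnectedComponent // c ≠ C2v} →
      (K.induce (B₁ ∪ B₂)).ConnectedComponent :=
    Sum.elim (ConnectedComponent.map ι₁) (fun c => ConnectedComponent.map ι₂ c.1)
  have reach_of_eq : ∀ (z w : ↥(B₁ ∪ B₂)),
      (K.induce (B₁ ∪ B₂)).connectedComponentMk z = (K.induce (B₁ ∪ B₂)).connectedComponentMk w →
      ReachIn K (B₁ ∪ B₂) ↑z ↑w := fun z w h => (mk_eq_iff_reachIn z w).1 h
  have hinj : Function.Injective ψ := by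
    rintro (c | ⟨c, hc⟩) (c' | ⟨c', hc'⟩) h
    · revert h
      induction c using ConnectedComponent.ind with | _ u => ?_
      induction c' using ConnectedComponent.ind with | _ u' => ?_
      intro h
      simp only [ψ, Sum.elim_inl, ConnectedComponent.map_mk] at h
      have hr := glue_reach₁ hv1 hv2 hint hcross (reach_of_eq _ _ h) u.2 u'.2
      exact congrArg Sum.inl ((mk_eq_iff_reachIn u u').2 hr)
    · exfalso
      revert h hc'
      induction c using ConnectedComponent.ind with | _ u => ?_
      induction c' using ConnectedComponent.ind with | _ u' => ?_
      intro hc' h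
      simp only [ψ, Sum.elim_inl, Sum.elim_inr, ConnectedComponent.map_mk] at h
      have := (glue_reach₂ hv1 hv2 hint hcross (reachIn_symm (reach_of_eq _ _ h)) u'.2 u.2).1
      exact hc' ((mk_eq_iff_reachIn u' ⟨v, hv2⟩).2 this)
    · exfalso
      revert h hc
      induction c using ConnectedComponent.ind with | _ u => ?_
      induction c' using ConnectedComponent.ind with | _ u' => ?_
      intro hc h
      simp only [ψ, Sum.elim_inl, Sum.elim_inr, ConnectedComponent.map_mk] at h
      have := (glue_reach₂ hv1 hv2 hint hcross (reach_of_eq _ _ h) u.2 u'.2).1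
      exact hc ((mk_eq_iff_reachIn u ⟨v, hv2⟩).2 this)
    · revert h hc hc'
      induction c using ConnectedComponent.ind with | _ u => ?_
      induction c' using ConnectedComponent.ind with | _ u' => ?_
      intro hc hc' h
      simp only [ψ, Sum.elim_inr, ConnectedComponent.map_mk] at h
      have hr0 : ReachIn K (B₂ ∪ B₁) ↑u ↑u' := by
        rw [Set.union_comm]
        exact reach_of_eq _ _ h
      have hr := glue_reach₁ hv2 hv1 hint' hcross' hr0 u.2 u'.2
      exact congrArg Sum.inr (Subtype.ext ((mk_eq_iff_reachIn u u').2 hr))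
  have hsurj : Function.Surjective ψ := by
    intro c
    induction c using ConnectedComponent.ind with | _ z => ?_
    rcases z.2 with h1 | h2
    · exact ⟨Sum.inl ((K.induce B₁).connectedComponentMk ⟨↑z, h1⟩),
        congrArg _ (Subtype.ext rfl)⟩
    · by_cases hr : ReachIn K B₂ ↑z v
      · refine ⟨Sum.inl ((K.induce B₁).connectedComponentMk ⟨v, hv1⟩), ?_⟩
        simp only [ψ, Sum.elim_inl, ConnectedComponent.map_mk]
        obtain ⟨_, _, hrr⟩ := reachIn_mono (Set.subset_union_right (s := B₁)) (reachIn_symm hr)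
        exact ConnectedComponent.sound hrr
      · refine ⟨Sum.inr ⟨(K.induce B₂).connectedComponentMk ⟨↑z, h2⟩, fun he => ?_⟩, ?_⟩
        · exact hr ((mk_eq_iff_reachIn ⟨↑z, h2⟩ ⟨v, hv2⟩).1 he)
        · exact congrArg _ (Subtype.ext rfl)
  have hcard := Nat.card_congr (Equiv.ofBijective ψ ⟨hinj, hsurj⟩)
  rw [Nat.card_sum] at hcard
  have hone : Nat.card {c : (K.induce B₂).ConnectedComponent // c = C2v} = 1 := by
    haveI : Unique {c : (K.induce B₂).ConnectedComponent // c = C2v} :=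
      ⟨⟨⟨C2v, rfl⟩⟩, by rintro ⟨c, rfl⟩; rfl⟩
    exact Nat.card_unique
  have hsplit : Nat.card {c : (K.induce B₂).ConnectedComponent // c = C2v} +
      Nat.card {c : (K.induce B₂).ConnectedComponent // ¬ c = C2v} =
      Nat.card (K.induce B₂).ConnectedComponent := by
    rw [← Nat.card_sum]
    exact Nat.card_congr (Equiv.sumCompl _)
  unfold cComp
  simp only [ne_eq] at hcard hsplit hone ⊢
  omega
end Glue
end SU6
namespace SU6
variable {V : Type u}

lemma simp_walk {K : SimpleGraph V} {B : Set V} {v : V}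
    (hsimp : ∀ a b, a ∈ B → b ∈ B → K.Adj v a → K.Adj v b → a ≠ b → K.Adj a b) :
    ∀ {y bb : ↥B} (_ : (K.induce B).Walk y bb), (↑bb : V) ≠ v →
      ∀ u, u ∈ B → u ≠ v → (u = ↑y ∨ ((↑y : V) = v ∧ K.Adj u v)) →
        ReachIn K (B \ {v}) u ↑bb := by
  intro y bb w
  induction w with
  | @nil z =>
    intro hbv u hu huv hcase
    rcases hcase with rfl | ⟨hzv, _⟩
    · exact reachIn_refl ⟨hu, huv⟩
    · exact absurd hzv hbv
  | @cons y c bb h p ih =>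
    intro hbv u hu huv hcase
    have hyc : K.Adj ↑y ↑c := h
    rcases hcase with rfl | ⟨hyv, huvadj⟩
    · by_cases hcv : (↑c : V) = v
      · refine ih hbv ↑y hu huv (Or.inr ⟨hcv, ?_⟩)
        rwa [← hcv]
      · exact reachIn_trans (reachIn_adj ⟨hu, huv⟩ ⟨c.2, hcv⟩ hyc)
          (ih hbv ↑c c.2 hcv (Or.inl rfl))
    · have hcv : (↑c : V) ≠ v := by
        intro e
        rw [hyv, e] at hyc
        exact K.irrefl hyc
      have hreach_c : ReachIn K (B \ {v}) ↑c ↑bb := ih hbv ↑c c.2 hcv (Or.inl rfl)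
      by_cases huc : u = ↑c
      · rwa [huc]
      · have hadj : K.Adj u ↑c := hsimp u ↑c hu c.2 huvadj.symm (by rw [← hyv]; exact hyc) huc
        exact reachIn_trans (reachIn_adj ⟨hu, huv⟩ ⟨c.2, hcv⟩ hadj) hreach_c

lemma simplicial_cComp_le [Finite V] {K : SimpleGraph V} {B : Set V} {v : V}
    (hsimp : ∀ a b, a ∈ B → b ∈ B → K.Adj v a → K.Adj v b → a ≠ b → K.Adj a b) :
    cComp K (B \ {v}) ≤ cComp K B := by
  apply Nat.card_le_card_of_injective
    (f := ConnectedComponent.map (incHom K (Set.diff_subset (s := B) (t := {v}))))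
  intro c c' h
  revert h
  induction c using ConnectedComponent.ind with | _ u => ?_
  induction c' using ConnectedComponent.ind with | _ u' => ?_
  intro h
  simp only [ConnectedComponent.map_mk] at h
  obtain ⟨_, _, hr⟩ := (mk_eq_iff_reachIn _ _).1 h
  obtain ⟨w⟩ := hr
  have := simp_walk hsimp w u'.2.2 ↑u u.2.1 u.2.2 (Or.inl rfl)
  exact (mk_eq_iff_reachIn u u').2 this

lemma simplicial_not_cut [Finite V] {K : SimpleGraph V} {B : Set V} {v : V}
    (hsimp : ∀ a b, a ∈ B → b ∈ B → K.Adj v a → K.Adj v b → a ≠ b → K.Adj a b) :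
    ¬ CutVertexOn K B v := by
  rintro ⟨hvB, hlt⟩
  exact absurd (simplicial_cComp_le hsimp) (not_le_of_gt hlt)

lemma apex_simp {G : SimpleGraph V} {A B : Set V} {v : V} (hBA : B ⊆ A) :
    ∀ a b, a ∈ B → b ∈ B → (cliqueAtOn G A v).Adj v a → (cliqueAtOn G A v).Adj v b →
      a ≠ b → (cliqueAtOn G A v).Adj a b := by
  intro a b ha hb h1 h2 hne
  rw [cliqueAtOn_adj_apex] at h1 h2
  rw [cliqueAtOn_adj]
  exact Or.inr ⟨hne, hBA ha, hBA hb, h1, h2⟩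

lemma apex_not_cut [Finite V] {G : SimpleGraph V} {A B : Set V} {v : V} (hBA : B ⊆ A) :
    ¬ CutVertexOn (cliqueAtOn G A v) B v :=
  simplicial_not_cut (apex_simp hBA)

end SU6
namespace SU6
variable {V : Type u}

/-- If the induced graph on `A` has all connected components complete, then every vertex is
simplicial on every subset of `A`. -/
lemma complete_simp {G : SimpleGraph V} {A B : Set V} (hBA : B ⊆ A)
    (hcomp : ∀ a b : A, (G.induce A).Reachable a b → a ≠ b → (G.induce A).Adj a b) (t : V)
    (htA : t ∈ A) :
    ∀ a b, a ∈ B → b ∈ B → G.Adj t a → G.Adj t b → a ≠ b → G.Adj a b := by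
  intro a b ha hb h1 h2 hne
  have hr : (G.induce A).Reachable ⟨a, hBA ha⟩ ⟨b, hBA hb⟩ := by
    have e1 : (G.induce A).Adj ⟨t, htA⟩ ⟨a, hBA ha⟩ := h1
    have e2 : (G.induce A).Adj ⟨t, htA⟩ ⟨b, hBA hb⟩ := h2
    exact (e1.symm.reachable).trans e2.reachable
  exact hcomp _ _ hr (fun he => hne (congrArg Subtype.val he))

lemma complete_unmixed [Finite V] [DecidableEq V] {G : SimpleGraph V} {A : Set V}
    (hcomp : ∀ a b : A, (G.induce A).Reachable a b → a ≠ b → (G.induce A).Adj a b) :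
    UnmixedOn G A := by
  intro T hT
  rcases eq_or_ne T ∅ with rfl | hne
  · simp
  · exfalso
    obtain ⟨t, ht⟩ := Finset.nonempty_iff_ne_empty.2 hne
    have hcv := hT.2 t ht
    have htA : t ∈ A := hT.1 ht
    exact simplicial_not_cut (complete_simp Set.diff_subset hcomp t htA) hcv

lemma su_unmixed [Finite V] [DecidableEq V] {G : SimpleGraph V} {A : Set V}
    (hsu : StronglyUnmixedOn G A) : UnmixedOn G A := by
  cases hsu with
  | complete G A h => exact complete_unmixed h
  | cut G A hU x hx h1 h2 h3 => exact hU

/-- restricting the clique set. -/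
lemma cliqueAtOn_agree_sub (G : SimpleGraph V) {B B' : Set V} (hBB' : B' ⊆ B) (v : V) :
    AgreeOn (cliqueAtOn G B v) (cliqueAtOn G B' v) B' := by
  intro a b ha hb
  rw [cliqueAtOn_adj, cliqueAtOn_adj]
  constructor
  · rintro (h | ⟨hne, -, -, h4, h5⟩)
    · exact Or.inl h
    · exact Or.inr ⟨hne, ha, hb, h4, h5⟩
  · rintro (h | ⟨hne, -, -, h4, h5⟩)
    · exact Or.inl h
    · exact Or.inr ⟨hne, hBB' ha, hBB' hb, h4, h5⟩

/-- `(H')_v` agrees with `H' := ((G_S)_v)_x` on subsets of `S`. -/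
lemma clq_agree {G : SimpleGraph V} {S B : Set V} {v x : V} (hBS : B ⊆ S) (hxS : x ∈ S) :
    AgreeOn (cliqueAtOn (cliqueAtOn (cliqueAtOn G S v) S x) B v)
      (cliqueAtOn (cliqueAtOn G S v) S x) B := by
  set K1 := cliqueAtOn G S v with hK1
  set H' := cliqueAtOn K1 S x with hH'
  intro a b ha hb
  constructor
  · intro h
    rw [cliqueAtOn_adj] at h
    rcases h with h | ⟨hne, -, -, hva, hvb⟩
    · exact h
    · -- analyse H'.Adj v a and H'.Adj v b
      have expand : ∀ c, H'.Adj v c → G.Adj v c ∨ (v ≠ c ∧ v ∈ S ∧ c ∈ S ∧ K1.Adj x v ∧ K1.Adj x c) := by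
        intro c hc
        rw [hH', cliqueAtOn_adj] at hc
        rcases hc with hc | hc
        · exact Or.inl ((cliqueAtOn_adj_apex G S v c).1 hc)
        · exact Or.inr hc
      rcases expand a hva with h1 | ⟨-, -, haS, hxv1, hxa1⟩ <;>
        rcases expand b hvb with h2 | ⟨-, -, hbS, hxv2, hxb1⟩
      · -- both G-adjacent to v
        rw [hH', cliqueAtOn_adj]
        refine Or.inl ?_
        rw [hK1, cliqueAtOn_adj]
        exact Or.inr ⟨hne, hBS ha, hBS hb, h1, h2⟩
      · -- a via nv, b via x-clause
        rcases eq_or_ne a x with rfl | hax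
        · rw [hH', cliqueAtOn_adj]
          exact Or.inl hxb1
        · rw [hH', cliqueAtOn_adj]
          refine Or.inr ⟨hne, hBS ha, hBS hb, ?_, hxb1⟩
          rw [hK1, cliqueAtOn_adj]
          have hgvx : G.Adj v x := (cliqueAtOn_adj_apex G S v x).1 hxv2.symm
          exact Or.inr ⟨fun he => hax he.symm, hxS, hBS ha, hgvx, h1⟩
      · rcases eq_or_ne b x with rfl | hbx
        · rw [hH', cliqueAtOn_adj]
          exact Or.inl hxa1.symm
        · rw [hH', cliqueAtOn_adj]
          refine Or.inr ⟨hne, hBS ha, hBS hb, hxa1, ?_⟩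
          rw [hK1, cliqueAtOn_adj]
          have hgvx : G.Adj v x := (cliqueAtOn_adj_apex G S v x).1 hxv1.symm
          exact Or.inr ⟨fun he => hbx he.symm, hxS, hBS hb, hgvx, h2⟩
      · rw [hH', cliqueAtOn_adj]
        exact Or.inr ⟨hne, hBS ha, hBS hb, hxa1, hxb1⟩
  · intro h
    rw [cliqueAtOn_adj]
    exact Or.inl h

end SU6
namespace SU6
variable {V : Type u}

/-- The key identity: `(G_v)_x` agrees on `A` with `(H')_v`, where
`H' = ((G|_S)_v)_x` only adds edges inside the side `S` containing `x`. -/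
lemma ident_agree {G : SimpleGraph V} {A S : Set V} {v x : V} (hSA : S ⊆ A) (hxS : x ∈ S)
    (hvS : v ∈ S) (hclosure : ∀ c, c ∈ A → G.Adj x c → c ∈ S) :
    AgreeOn (cliqueAtOn (cliqueAtOn G A v) A x)
      (cliqueAtOn (cliqueAtOn (cliqueAtOn G S v) S x) A v) A := by
  have hxA : x ∈ A := hSA hxS
  -- abbreviations recorded as facts
  have hKx : ∀ c, c ∈ A → ((cliqueAtOn G A v).Adj x c ↔
      G.Adj x c ∨ (x ≠ c ∧ G.Adj v x ∧ G.Adj v c)) := by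
    intro c hc
    rw [cliqueAtOn_adj]
    constructor
    · rintro (h | ⟨h1, -, -, h4, h5⟩)
      · exact Or.inl h
      · exact Or.inr ⟨h1, h4, h5⟩
    · rintro (h | ⟨h1, h4, h5⟩)
      · exact Or.inl h
      · exact Or.inr ⟨h1, hxA, hc, h4, h5⟩
  have hH'v : ∀ c, ((cliqueAtOn (cliqueAtOn G S v) S x).Adj v c ↔
      G.Adj v c ∨ (v ≠ c ∧ c ∈ S ∧ G.Adj x v ∧ (cliqueAtOn G S v).Adj x c)) := by
    intro c
    rw [cliqueAtOn_adj]
    constructor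
    · rintro (h | ⟨h1, -, h3, h4, h5⟩)
      · exact Or.inl ((cliqueAtOn_adj_apex G S v c).1 h)
      · exact Or.inr ⟨h1, h3, ((cliqueAtOn_adj_apex G S v x).1 h4.symm).symm, h5⟩
    · rintro (h | ⟨h1, h3, h4, h5⟩)
      · exact Or.inl ((cliqueAtOn_adj_apex G S v c).2 h)
      · exact Or.inr ⟨h1, hvS, h3, ((cliqueAtOn_adj_apex G S v x).2 h4.symm).symm, h5⟩
  have hK1x_imp : ∀ c, (cliqueAtOn G S v).Adj x c → (cliqueAtOn G A v).Adj x c := by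
    intro c hc
    rw [cliqueAtOn_adj] at hc ⊢
    rcases hc with hc | ⟨h1, h2, h3, h4, h5⟩
    · exact Or.inl hc
    · exact Or.inr ⟨h1, hSA h2, hSA h3, h4, h5⟩
  have hGK1 : ∀ c d, G.Adj c d → (cliqueAtOn G S v).Adj c d := by
    intro c d h
    rw [cliqueAtOn_adj]
    exact Or.inl h
  have hGH' : ∀ c d, G.Adj c d → (cliqueAtOn (cliqueAtOn G S v) S x).Adj c d := by
    intro c d h
    rw [cliqueAtOn_adj]
    exact Or.inl (hGK1 c d h)
  have hK1H' : ∀ c d, (cliqueAtOn G S v).Adj c d → (cliqueAtOn (cliqueAtOn G S v) S x).Adj c d := by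
    intro c d h
    rw [cliqueAtOn_adj]
    exact Or.inl h
  intro a b ha hb
  by_cases hne : a = b
  · subst hne
    exact iff_of_false (fun h => h.ne rfl) (fun h => h.ne rfl)
  constructor
  · intro h
    rw [cliqueAtOn_adj] at h
    rcases h with h | ⟨-, -, -, hxa, hxb⟩
    · rw [cliqueAtOn_adj] at h
      rcases h with h | ⟨-, -, -, hva, hvb⟩
      · rw [cliqueAtOn_adj]
        exact Or.inl (hGH' a b h)
      · rw [cliqueAtOn_adj]
        exact Or.inr ⟨hne, ha, hb, (hH'v a).2 (Or.inl hva), (hH'v b).2 (Or.inl hvb)⟩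
    · rcases (hKx a ha).1 hxa with h1 | ⟨hxa_ne, hvx, hva⟩ <;>
        rcases (hKx b hb).1 hxb with h2 | ⟨hxb_ne, hvx', hvb⟩
      · have haS := hclosure a ha h1
        have hbS := hclosure b hb h2
        rw [cliqueAtOn_adj]
        refine Or.inl ?_
        rw [cliqueAtOn_adj]
        exact Or.inr ⟨hne, haS, hbS, hGK1 x a h1, hGK1 x b h2⟩
      · have haS := hclosure a ha h1
        rcases eq_or_ne a v with rfl | hav
        · rw [cliqueAtOn_adj]
          exact Or.inl ((hH'v b).2 (Or.inl hvb))
        · rw [cliqueAtOn_adj]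
          refine Or.inr ⟨hne, ha, hb,
            (hH'v a).2 (Or.inr ⟨fun e => hav e.symm, haS, hvx'.symm, hGK1 x a h1⟩),
            (hH'v b).2 (Or.inl hvb)⟩
      · have hbS := hclosure b hb h2
        rcases eq_or_ne b v with rfl | hbv
        · rw [cliqueAtOn_adj]
          exact Or.inl (((hH'v a).2 (Or.inl hva)).symm)
        · rw [cliqueAtOn_adj]
          refine Or.inr ⟨hne, ha, hb, (hH'v a).2 (Or.inl hva),
            (hH'v b).2 (Or.inr ⟨fun e => hbv e.symm, hbS, hvx.symm, hGK1 x b h2⟩)⟩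
      · rw [cliqueAtOn_adj]
        exact Or.inr ⟨hne, ha, hb, (hH'v a).2 (Or.inl hva), (hH'v b).2 (Or.inl hvb)⟩
  · intro h
    rw [cliqueAtOn_adj] at h
    rcases h with h | ⟨-, -, -, hva, hvb⟩
    · rw [cliqueAtOn_adj] at h
      rcases h with h | ⟨-, haS, hbS, hxa, hxb⟩
      · rw [cliqueAtOn_adj] at h
        rcases h with h | ⟨-, haS, hbS, hva, hvb⟩
        · rw [cliqueAtOn_adj]
          refine Or.inl ?_
          rw [cliqueAtOn_adj]
          exact Or.inl h
        · rw [cliqueAtOn_adj]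
          refine Or.inl ?_
          rw [cliqueAtOn_adj]
          exact Or.inr ⟨hne, hSA haS, hSA hbS, hva, hvb⟩
      · rw [cliqueAtOn_adj]
        exact Or.inr ⟨hne, ha, hb, hK1x_imp a hxa, hK1x_imp b hxb⟩
    · rcases (hH'v a).1 hva with h1 | ⟨hva_ne, haS, hxv, hxa⟩ <;>
        rcases (hH'v b).1 hvb with h2 | ⟨hvb_ne, hbS, hxv', hxb⟩
      · rw [cliqueAtOn_adj]
        refine Or.inl ?_
        rw [cliqueAtOn_adj]
        exact Or.inr ⟨hne, ha, hb, h1, h2⟩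
      · rcases eq_or_ne a x with rfl | hax
        · rw [cliqueAtOn_adj]
          exact Or.inl (hK1x_imp b hxb)
        · rw [cliqueAtOn_adj]
          refine Or.inr ⟨hne, ha, hb, (hKx a ha).2 (Or.inr ⟨fun e => hax e.symm, hxv'.symm, h1⟩),
            hK1x_imp b hxb⟩
      · rcases eq_or_ne b x with rfl | hbx
        · rw [cliqueAtOn_adj]
          exact Or.inl ((hK1x_imp a hxa).symm)
        · rw [cliqueAtOn_adj]
          refine Or.inr ⟨hne, ha, hb, hK1x_imp a hxa,
            (hKx b hb).2 (Or.inr ⟨fun e => hbx e.symm, hxv.symm, h2⟩)⟩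
      · rw [cliqueAtOn_adj]
        exact Or.inr ⟨hne, ha, hb, hK1x_imp a hxa, hK1x_imp b hxb⟩

end SU6
namespace SU6
variable {V : Type u}

section Union
variable [Finite V] {G : SimpleGraph V} {A₁ A₂ : Set V} {v : V}

lemma glueK (hint : A₁ ∩ A₂ ⊆ {v})
    (hedge : ∀ a b, a ∈ A₁ ∪ A₂ → b ∈ A₁ ∪ A₂ → G.Adj a b →
      (a ∈ A₁ ∧ b ∈ A₁) ∨ (a ∈ A₂ ∧ b ∈ A₂))
    {B₁ B₂ : Set V} (h1 : B₁ ⊆ A₁) (h2 : B₂ ⊆ A₂) (hvB1 : v ∈ B₁) (hvB2 : v ∈ B₂) :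
    cComp (cliqueAtOn G (A₁ ∪ A₂) v) (B₁ ∪ B₂) + 1 =
      cComp (cliqueAtOn G (A₁ ∪ A₂) v) B₁ + cComp (cliqueAtOn G (A₁ ∪ A₂) v) B₂ := by
  apply glue_cComp hvB1 hvB2
  · intro c hc
    exact hint ⟨h1 hc.1, h2 hc.2⟩
  · intro a b ha hb ha' hb' hadj
    have haA1 : a ∈ A₁ := h1 ha
    have hbA2 : b ∈ A₂ := h2 hb
    have hav : a ≠ v := fun e => ha' (e ▸ hvB2)
    have hbv : b ≠ v := fun e => hb' (e ▸ hvB1)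
    have haA2 : a ∉ A₂ := fun h => hav (hint ⟨haA1, h⟩)
    have hbA1 : b ∉ A₁ := fun h => hbv (hint ⟨h, hbA2⟩)
    rw [cliqueAtOn_adj] at hadj
    rcases hadj with h | ⟨-, -, -, h4, h5⟩
    · rcases hedge a b (Or.inl haA1) (Or.inr hbA2) h with ⟨-, hb1⟩ | ⟨ha2, -⟩
      · exact absurd hb1 hbA1
      · exact absurd ha2 haA2
    · constructor <;> rw [cliqueAtOn_adj]
      · exact Or.inl h4
      · exact Or.inl h5

lemma cutVertex_union (hv1 : v ∈ A₁) (hv2 : v ∈ A₂) (hint : A₁ ∩ A₂ ⊆ {v})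
    (hedge : ∀ a b, a ∈ A₁ ∪ A₂ → b ∈ A₁ ∪ A₂ → G.Adj a b →
      (a ∈ A₁ ∧ b ∈ A₁) ∨ (a ∈ A₂ ∧ b ∈ A₂))
    {x : V} (hx1 : x ∈ A₁) (hxv : x ≠ v)
    (hx : CutVertexOn (cliqueAtOn G (A₁ ∪ A₂) v) A₁ x) :
    CutVertexOn (cliqueAtOn G (A₁ ∪ A₂) v) (A₁ ∪ A₂) x := by
  have hxA2 : x ∉ A₂ := fun h => hxv (hint ⟨hx1, h⟩)
  refine ⟨Or.inl hx1, ?_⟩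
  have e0 := glueK hint hedge (le_refl A₁) (le_refl A₂) hv1 hv2
  have e1 := glueK hint hedge (Set.diff_subset (s := A₁) (t := {x})) (le_refl A₂)
    ⟨hv1, fun e => hxv (Set.eq_of_mem_singleton e).symm⟩ hv2
  rw [Set.union_diff_distrib, Set.diff_singleton_eq_self hxA2]
  have := hx.2
  omega

lemma unmixed_union [DecidableEq V] (hv1 : v ∈ A₁) (hv2 : v ∈ A₂) (hint : A₁ ∩ A₂ ⊆ {v})
    (hedge : ∀ a b, a ∈ A₁ ∪ A₂ → b ∈ A₁ ∪ A₂ → G.Adj a b →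
      (a ∈ A₁ ∧ b ∈ A₁) ∨ (a ∈ A₂ ∧ b ∈ A₂))
    (hU1 : UnmixedOn (cliqueAtOn G (A₁ ∪ A₂) v) A₁)
    (hU2 : UnmixedOn (cliqueAtOn G (A₁ ∪ A₂) v) A₂) :
    UnmixedOn (cliqueAtOn G (A₁ ∪ A₂) v) (A₁ ∪ A₂) := by
  intro T hT
  have hTA := hT.1
  have hvT : v ∉ T := fun hvT => apex_not_cut Set.diff_subset (hT.2 v hvT)
  classical
  set T₁ := T.filter (fun t => t ∈ A₁) with hT₁def
  set T₂ := T.filter (fun t => t ∉ A₁) with hT₂def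
  have hmem1 : ∀ c, c ∈ T₁ ↔ c ∈ T ∧ c ∈ A₁ := by intro c; simp [hT₁def]
  have hmem2 : ∀ c, c ∈ T₂ ↔ c ∈ T ∧ c ∉ A₁ := by intro c; simp [hT₂def]
  have hT2A2 : ∀ c, c ∈ T₂ → c ∈ A₂ := by
    intro c hc
    rcases hTA ((hmem2 c).1 hc).1 with h | h
    · exact absurd h ((hmem2 c).1 hc).2
    · exact h
  have hTv : ∀ c, c ∈ T → c ≠ v := fun c hc e => hvT (e ▸ hc)
  have hT1v : ∀ c, c ∈ T₁ → c ≠ v := fun c hc => hTv c ((hmem1 c).1 hc).1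
  have hT2v : ∀ c, c ∈ T₂ → c ≠ v := fun c hc => hTv c ((hmem2 c).1 hc).1
  have hTiff1 : ∀ c, c ∈ A₁ → (c ∈ T ↔ c ∈ T₁) := by
    intro c hc
    rw [hmem1]
    exact ⟨fun h => ⟨h, hc⟩, fun h => h.1⟩
  have hTiff2 : ∀ c, c ∈ A₂ → (c ∈ T ↔ c ∈ T₂) := by
    intro c hc
    rw [hmem2]
    refine ⟨fun h => ⟨h, fun hc1 => ?_⟩, fun h => h.1⟩
    exact hTv c h (hint ⟨hc1, hc⟩)
  have hcard : T₁.card + T₂.card = T.card := Finset.card_filter_add_card_filter_not _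
  -- set rewritings
  have eA1T : A₁ \ (↑T : Set V) = A₁ \ ↑T₁ := by
    ext c
    simp only [Set.mem_diff, Finset.mem_coe]
    exact and_congr_right fun hc => not_congr (hTiff1 c hc)
  have eA2T : A₂ \ (↑T : Set V) = A₂ \ ↑T₂ := by
    ext c
    simp only [Set.mem_diff, Finset.mem_coe]
    exact and_congr_right fun hc => not_congr (hTiff2 c hc)
  have eA1e : ∀ t, A₁ \ (↑(T.erase t) : Set V) = A₁ \ ↑(T₁.erase t) := by
    intro t
    ext c
    simp only [Set.mem_diff, Finset.mem_coe, Finset.mem_erase]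
    exact and_congr_right fun hc => not_congr (and_congr_right fun _ => hTiff1 c hc)
  have eA2e : ∀ t, A₂ \ (↑(T.erase t) : Set V) = A₂ \ ↑(T₂.erase t) := by
    intro t
    ext c
    simp only [Set.mem_diff, Finset.mem_coe, Finset.mem_erase]
    exact and_congr_right fun hc => not_congr (and_congr_right fun _ => hTiff2 c hc)
  have eErase1 : ∀ t ∈ T₁, A₂ \ (↑(T₂.erase t) : Set V) = A₂ \ ↑T₂ := by
    intro t ht
    have : t ∉ T₂ := fun h2 => ((hmem2 t).1 h2).2 ((hmem1 t).1 ht).2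
    rw [Finset.erase_eq_of_notMem this]
  have eErase2 : ∀ t ∈ T₂, A₁ \ (↑(T₁.erase t) : Set V) = A₁ \ ↑T₁ := by
    intro t ht
    have : t ∉ T₁ := fun h2 => ((hmem2 t).1 ht).2 ((hmem1 t).1 h2).2
    rw [Finset.erase_eq_of_notMem this]
  have hvNotT1 : v ∉ (↑T₁ : Set V) := fun h => hvT ((hmem1 v).1 h).1
  have hvNotT2 : v ∉ (↑T₂ : Set V) := fun h => hvT ((hmem2 v).1 h).1
  -- the two cutsets
  have cutset1 : CutsetOn (cliqueAtOn G (A₁ ∪ A₂) v) A₁ T₁ := by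
    refine ⟨fun c hc => ((hmem1 c).1 hc).2, fun t ht => ?_⟩
    have hcv := hT.2 t ((hmem1 t).1 ht).1
    rw [Set.union_diff_distrib, eA1e t, eA2e t, eErase1 t ht] at hcv
    have htA1 : t ∈ A₁ := ((hmem1 t).1 ht).2
    have htv : t ≠ v := hT1v t ht
    have htA2 : t ∉ A₂ := fun h => htv (hint ⟨htA1, h⟩)
    refine ⟨⟨htA1, Finset.notMem_erase t T₁⟩, ?_⟩
    have e1 := glueK hint hedge (B₁ := A₁ \ ↑(T₁.erase t)) (B₂ := A₂ \ ↑T₂)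
      Set.diff_subset Set.diff_subset
      ⟨hv1, fun h => hvNotT1 (Finset.erase_subset t T₁ h)⟩ ⟨hv2, hvNotT2⟩
    have e2 := glueK hint hedge (B₁ := (A₁ \ ↑(T₁.erase t)) \ {t}) (B₂ := A₂ \ ↑T₂)
      (le_trans Set.diff_subset Set.diff_subset) Set.diff_subset
      ⟨⟨hv1, fun h => hvNotT1 (Finset.erase_subset t T₁ h)⟩,
        fun h => htv (Set.eq_of_mem_singleton h).symm⟩ ⟨hv2, hvNotT2⟩
    have hrw : ((A₁ \ ↑(T₁.erase t)) ∪ (A₂ \ ↑T₂)) \ {t} =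
        ((A₁ \ ↑(T₁.erase t)) \ {t}) ∪ (A₂ \ ↑T₂) := by
      rw [Set.union_diff_distrib,
        Set.diff_singleton_eq_self (show t ∉ A₂ \ ↑T₂ from fun h => htA2 h.1)]
    have hlt := hcv.2
    rw [hrw] at hlt
    omega
  have cutset2 : CutsetOn (cliqueAtOn G (A₁ ∪ A₂) v) A₂ T₂ := by
    refine ⟨fun c hc => hT2A2 c hc, fun t ht => ?_⟩
    have hcv := hT.2 t ((hmem2 t).1 ht).1
    rw [Set.union_diff_distrib, eA1e t, eA2e t, eErase2 t ht] at hcv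
    have htA2 : t ∈ A₂ := hT2A2 t ht
    have htv : t ≠ v := hT2v t ht
    have htA1 : t ∉ A₁ := ((hmem2 t).1 ht).2
    refine ⟨⟨htA2, Finset.notMem_erase t T₂⟩, ?_⟩
    have e1 := glueK hint hedge (B₁ := A₁ \ ↑T₁) (B₂ := A₂ \ ↑(T₂.erase t))
      Set.diff_subset Set.diff_subset
      ⟨hv1, hvNotT1⟩ ⟨hv2, fun h => hvNotT2 (Finset.erase_subset t T₂ h)⟩
    have e2 := glueK hint hedge (B₁ := A₁ \ ↑T₁) (B₂ := (A₂ \ ↑(T₂.erase t)) \ {t})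
      Set.diff_subset (le_trans Set.diff_subset Set.diff_subset)
      ⟨hv1, hvNotT1⟩
      ⟨⟨hv2, fun h => hvNotT2 (Finset.erase_subset t T₂ h)⟩,
        fun h => htv (Set.eq_of_mem_singleton h).symm⟩
    have hrw : ((A₁ \ ↑T₁) ∪ (A₂ \ ↑(T₂.erase t))) \ {t} =
        (A₁ \ ↑T₁) ∪ ((A₂ \ ↑(T₂.erase t)) \ {t}) := by
      rw [Set.union_diff_distrib,
        Set.diff_singleton_eq_self (show t ∉ A₁ \ ↑T₁ from fun h => htA1 h.1)]
    have hlt := hcv.2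
    rw [hrw] at hlt
    omega
  have u1 := hU1 T₁ cutset1
  have u2 := hU2 T₂ cutset2
  rw [Set.union_diff_distrib, eA1T, eA2T]
  have g1 := glueK hint hedge (B₁ := A₁ \ ↑T₁) (B₂ := A₂ \ ↑T₂)
    Set.diff_subset Set.diff_subset ⟨hv1, hvNotT1⟩ ⟨hv2, hvNotT2⟩
  have g0 := glueK hint hedge (le_refl A₁) (le_refl A₂) hv1 hv2
  omega
end Union
end SU6
namespace SU6
variable {V : Type u}

lemma complete_transfer {G G' : SimpleGraph V} {A : Set V} (h : AgreeOn G G' A)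
    (hc : ∀ a b : A, (G.induce A).Reachable a b → a ≠ b → (G.induce A).Adj a b) :
    ∀ a b : A, (G'.induce A).Reachable a b → a ≠ b → (G'.induce A).Adj a b := by
  rw [← h.induce_eq]
  exact hc

lemma side_agree {G : SimpleGraph V} {S C : Set V} {v x : V}
    (h : ∀ c, c ∈ C → c ∈ S → c = v) :
    AgreeOn G (cliqueAtOn (cliqueAtOn G S v) S x) C := by
  intro a b ha hb
  constructor
  · intro h'
    rw [cliqueAtOn_adj]
    refine Or.inl ?_
    rw [cliqueAtOn_adj]
    exact Or.inl h'
  · intro h'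
    rw [cliqueAtOn_adj] at h'
    rcases h' with h' | ⟨hne, haS, hbS, -, -⟩
    · rw [cliqueAtOn_adj] at h'
      rcases h' with h' | ⟨hne, haS, hbS, -, -⟩
      · exact h'
      · exact absurd ((h a ha haS).trans (h b hb hbS).symm) hne
    · exact absurd ((h a ha haS).trans (h b hb hbS).symm) hne

section Union
variable {G : SimpleGraph V} {A₁ A₂ : Set V} {v : V}

lemma crossK (hint : A₁ ∩ A₂ ⊆ {v})
    (hedge : ∀ a b, a ∈ A₁ ∪ A₂ → b ∈ A₁ ∪ A₂ → G.Adj a b →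
      (a ∈ A₁ ∧ b ∈ A₁) ∨ (a ∈ A₂ ∧ b ∈ A₂)) :
    ∀ a b, a ∈ A₁ → b ∈ A₂ → a ∉ A₂ → b ∉ A₁ →
      (cliqueAtOn G (A₁ ∪ A₂) v).Adj a b →
      (cliqueAtOn G (A₁ ∪ A₂) v).Adj v a ∧ (cliqueAtOn G (A₁ ∪ A₂) v).Adj v b := by
  intro a b ha hb ha' hb' hadj
  rw [cliqueAtOn_adj] at hadj
  rcases hadj with h | ⟨-, -, -, h4, h5⟩
  · rcases hedge a b (Or.inl ha) (Or.inr hb) h with ⟨-, h1⟩ | ⟨h1, -⟩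
    · exact absurd h1 hb'
    · exact absurd h1 ha'
  · constructor <;> rw [cliqueAtOn_adj]
    · exact Or.inl h4
    · exact Or.inl h5

lemma complete_union (hv1 : v ∈ A₁) (hv2 : v ∈ A₂) (hint : A₁ ∩ A₂ ⊆ {v})
    (hedge : ∀ a b, a ∈ A₁ ∪ A₂ → b ∈ A₁ ∪ A₂ → G.Adj a b →
      (a ∈ A₁ ∧ b ∈ A₁) ∨ (a ∈ A₂ ∧ b ∈ A₂))
    (hc1 : ∀ a b : A₁, ((cliqueAtOn G (A₁ ∪ A₂) v).induce A₁).Reachable a b → a ≠ b →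
      ((cliqueAtOn G (A₁ ∪ A₂) v).induce A₁).Adj a b)
    (hc2 : ∀ a b : A₂, ((cliqueAtOn G (A₁ ∪ A₂) v).induce A₂).Reachable a b → a ≠ b →
      ((cliqueAtOn G (A₁ ∪ A₂) v).induce A₂).Adj a b) :
    ∀ a b : ↑(A₁ ∪ A₂), ((cliqueAtOn G (A₁ ∪ A₂) v).induce (A₁ ∪ A₂)).Reachable a b → a ≠ b →
      ((cliqueAtOn G (A₁ ∪ A₂) v).induce (A₁ ∪ A₂)).Adj a b := by
  intro a b hr hne
  have hcross := crossK hint hedge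
  have hint' : A₂ ∩ A₁ ⊆ {v} := by rwa [Set.inter_comm]
  have hcross' : ∀ a b, a ∈ A₂ → b ∈ A₁ → a ∉ A₁ → b ∉ A₂ →
      (cliqueAtOn G (A₁ ∪ A₂) v).Adj a b →
      (cliqueAtOn G (A₁ ∪ A₂) v).Adj v a ∧ (cliqueAtOn G (A₁ ∪ A₂) v).Adj v b := by
    intro c d hc hd hc' hd' hadj
    obtain ⟨p, q⟩ := hcross d c hd hc hd' hc' hadj.symm
    exact ⟨q, p⟩
  have hrr : ReachIn (cliqueAtOn G (A₁ ∪ A₂) v) (A₁ ∪ A₂) ↑a ↑b := ⟨a.2, b.2, hr⟩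
  have hvne : (↑a : V) ≠ ↑b := fun e => hne (Subtype.ext e)
  have adj_of_reach1 : ∀ c d : V, c ∈ A₁ → d ∈ A₁ →
      ReachIn (cliqueAtOn G (A₁ ∪ A₂) v) A₁ c d → c ≠ d →
      (cliqueAtOn G (A₁ ∪ A₂) v).Adj c d := by
    intro c d hc hd hrcd hcd
    obtain ⟨p, q, hx⟩ := hrcd
    exact hc1 ⟨c, p⟩ ⟨d, q⟩ hx (fun e => hcd (congrArg Subtype.val e))
  have adj_of_reach2 : ∀ c d : V, c ∈ A₂ → d ∈ A₂ →
      ReachIn (cliqueAtOn G (A₁ ∪ A₂) v) A₂ c d → c ≠ d →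
      (cliqueAtOn G (A₁ ∪ A₂) v).Adj c d := by
    intro c d hc hd hrcd hcd
    obtain ⟨p, q, hx⟩ := hrcd
    exact hc2 ⟨c, p⟩ ⟨d, q⟩ hx (fun e => hcd (congrArg Subtype.val e))
  have bothA2 : (↑a : V) ∈ A₂ → (↑b : V) ∈ A₂ → (cliqueAtOn G (A₁ ∪ A₂) v).Adj ↑a ↑b := by
    intro ha2 hb2
    have hrr' : ReachIn (cliqueAtOn G (A₁ ∪ A₂) v) (A₂ ∪ A₁) ↑a ↑b :=
      reachIn_of_eq (Set.union_comm A₁ A₂) hrr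
    exact adj_of_reach2 _ _ ha2 hb2 (glue_reach₁ hv2 hv1 hint' hcross' hrr' ha2 hb2) hvne
  show (cliqueAtOn G (A₁ ∪ A₂) v).Adj ↑a ↑b
  by_cases ha1 : (↑a : V) ∈ A₁ <;> by_cases hb1 : (↑b : V) ∈ A₁
  · exact adj_of_reach1 _ _ ha1 hb1 (glue_reach₁ hv1 hv2 hint hcross hrr ha1 hb1) hvne
  · have hb2 : (↑b : V) ∈ A₂ := b.2.resolve_left hb1
    by_cases ha2 : (↑a : V) ∈ A₂
    · exact bothA2 ha2 hb2
    · obtain ⟨hbv, hva⟩ := glue_reach₂ hv1 hv2 hint hcross (reachIn_symm hrr) hb2 ha1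
      have hane : v ≠ (↑a : V) := fun e => ha2 (e ▸ hv2)
      have hbne : (↑b : V) ≠ v := fun e => hb1 (e ▸ hv1)
      have hadjva := adj_of_reach1 _ _ hv1 ha1 hva hane
      have hadjbv := adj_of_reach2 _ _ hb2 hv2 hbv hbne
      have hgva : G.Adj v ↑a := (cliqueAtOn_adj_apex G (A₁ ∪ A₂) v ↑a).1 hadjva
      have hgvb : G.Adj v ↑b := (cliqueAtOn_adj_apex G (A₁ ∪ A₂) v ↑b).1 hadjbv.symm
      rw [cliqueAtOn_adj]
      exact Or.inr ⟨hvne, a.2, b.2, hgva, hgvb⟩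
  · have ha2 : (↑a : V) ∈ A₂ := a.2.resolve_left ha1
    by_cases hb2 : (↑b : V) ∈ A₂
    · exact bothA2 ha2 hb2
    · obtain ⟨hav, hvb⟩ := glue_reach₂ hv1 hv2 hint hcross hrr ha2 hb1
      have hbne : v ≠ (↑b : V) := fun e => hb2 (e ▸ hv2)
      have hane : (↑a : V) ≠ v := fun e => ha1 (e ▸ hv1)
      have hadjvb := adj_of_reach1 _ _ hv1 hb1 hvb hbne
      have hadjav := adj_of_reach2 _ _ ha2 hv2 hav hane
      have hgvb : G.Adj v ↑b := (cliqueAtOn_adj_apex G (A₁ ∪ A₂) v ↑b).1 hadjvb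
      have hgva : G.Adj v ↑a := (cliqueAtOn_adj_apex G (A₁ ∪ A₂) v ↑a).1 hadjav.symm
      rw [cliqueAtOn_adj]
      exact Or.inr ⟨hvne, a.2, b.2, hgva, hgvb⟩
  · have ha2 : (↑a : V) ∈ A₂ := a.2.resolve_left ha1
    have hb2 : (↑b : V) ∈ A₂ := b.2.resolve_left hb1
    exact bothA2 ha2 hb2

lemma cutVertex_union₂ [Finite V] (hv1 : v ∈ A₁) (hv2 : v ∈ A₂) (hint : A₁ ∩ A₂ ⊆ {v})
    (hedge : ∀ a b, a ∈ A₁ ∪ A₂ → b ∈ A₁ ∪ A₂ → G.Adj a b →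
      (a ∈ A₁ ∧ b ∈ A₁) ∨ (a ∈ A₂ ∧ b ∈ A₂))
    {x : V} (hx2 : x ∈ A₂) (hxv : x ≠ v)
    (hx : CutVertexOn (cliqueAtOn G (A₁ ∪ A₂) v) A₂ x) :
    CutVertexOn (cliqueAtOn G (A₁ ∪ A₂) v) (A₁ ∪ A₂) x := by
  have hxA1 : x ∉ A₁ := fun h => hxv (hint ⟨h, hx2⟩)
  refine ⟨Or.inr hx2, ?_⟩
  have e0 := glueK hint hedge (le_refl A₁) (le_refl A₂) hv1 hv2
  have e1 := glueK hint hedge (B₁ := A₁) (B₂ := A₂ \ {x}) (le_refl A₁) Set.diff_subset hv1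
    ⟨hv2, fun e => hxv (Set.eq_of_mem_singleton e).symm⟩
  rw [Set.union_diff_distrib, Set.diff_singleton_eq_self hxA1]
  have := hx.2
  omega
end Union

lemma hedge_restrict {A₁ B : Set V} {x : V} {H : SimpleGraph V} (hxA1 : x ∉ A₁)
    (hedge : ∀ a b, a ∈ A₁ ∪ B → b ∈ A₁ ∪ B → H.Adj a b →
      (a ∈ A₁ ∧ b ∈ A₁) ∨ (a ∈ B ∧ b ∈ B)) :
    ∀ a b, a ∈ A₁ ∪ (B \ {x}) → b ∈ A₁ ∪ (B \ {x}) → H.Adj a b →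
      (a ∈ A₁ ∧ b ∈ A₁) ∨ (a ∈ B \ {x} ∧ b ∈ B \ {x}) := by
  intro a b ha hb hadj
  have sub : A₁ ∪ (B \ {x}) ⊆ A₁ ∪ B := Set.union_subset_union_right _ Set.diff_subset
  have hax : a ≠ x := by
    rintro rfl
    rcases ha with h | h
    · exact hxA1 h
    · exact h.2 rfl
  have hbx : b ≠ x := by
    rintro rfl
    rcases hb with h | h
    · exact hxA1 h
    · exact h.2 rfl
  rcases hedge a b (sub ha) (sub hb) hadj with h | ⟨h5, h6⟩
  · exact Or.inl h
  · exact Or.inr ⟨⟨h5, hax⟩, ⟨h6, hbx⟩⟩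

/-- Inner induction: the `A₁` side is complete, induct on the `B`-side derivation. -/
lemma lemC [Finite V] [DecidableEq V] :
    ∀ (Γ : SimpleGraph V) (B : Set V), StronglyUnmixedOn Γ B →
    ∀ (G : SimpleGraph V) (A₁ : Set V) (v : V),
      v ∈ A₁ → v ∈ B → A₁ ∩ B ⊆ {v} →
      (∀ a b, a ∈ A₁ ∪ B → b ∈ A₁ ∪ B → G.Adj a b →
        (a ∈ A₁ ∧ b ∈ A₁) ∨ (a ∈ B ∧ b ∈ B)) →
      (∀ a b : A₁, ((cliqueAtOn G A₁ v).induce A₁).Reachable a b → a ≠ b →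
        ((cliqueAtOn G A₁ v).induce A₁).Adj a b) →
      AgreeOn Γ (cliqueAtOn G B v) B →
      StronglyUnmixedOn (cliqueAtOn G (A₁ ∪ B) v) (A₁ ∪ B) := by
  intro Γ B hsu
  induction hsu with
  | complete Γ B hcomp =>
    intro G A₁ v hv1 hv2 hint hedge hc1 hag
    have agB : AgreeOn (cliqueAtOn G (A₁ ∪ B) v) (cliqueAtOn G B v) B :=
      cliqueAtOn_agree_sub G Set.subset_union_right v
    have agA1 : AgreeOn (cliqueAtOn G A₁ v) (cliqueAtOn G (A₁ ∪ B) v) A₁ :=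
      (cliqueAtOn_agree_sub G Set.subset_union_left v).symm
    have agΓK : AgreeOn Γ (cliqueAtOn G (A₁ ∪ B) v) B := hag.trans agB.symm
    exact StronglyUnmixedOn.complete _ _
      (complete_union hv1 hv2 hint hedge (complete_transfer agA1 hc1)
        (complete_transfer agΓK hcomp))
  | cut Γ B hU x hx h1 h2 h3 ih1 ih2 ih3 =>
    intro G A₁ v hv1 hv2 hint hedge hc1 hag
    have agB : AgreeOn (cliqueAtOn G (A₁ ∪ B) v) (cliqueAtOn G B v) B :=
      cliqueAtOn_agree_sub G Set.subset_union_right v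
    have agA1 : AgreeOn (cliqueAtOn G A₁ v) (cliqueAtOn G (A₁ ∪ B) v) A₁ :=
      (cliqueAtOn_agree_sub G Set.subset_union_left v).symm
    have agΓK : AgreeOn Γ (cliqueAtOn G (A₁ ∪ B) v) B := hag.trans agB.symm
    have hxB : x ∈ B := hx.1
    have hxv : x ≠ v := by
      rintro rfl
      exact (by
        rw [cutVertexOn_congr agΓK le_rfl] at hx
        exact apex_not_cut Set.subset_union_right hx)
    have hxA1 : x ∉ A₁ := fun h => hxv (hint ⟨h, hxB⟩)
    have hvBx : v ∈ B \ {x} := ⟨hv2, fun e => hxv (Set.eq_of_mem_singleton e).symm⟩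
    have eset : A₁ ∪ (B \ {x}) = (A₁ ∪ B) \ {x} := by
      rw [Set.union_diff_distrib, Set.diff_singleton_eq_self hxA1]
    -- unmixedness of the union
    have hUK_B : UnmixedOn (cliqueAtOn G (A₁ ∪ B) v) B := (unmixedOn_congr agΓK le_rfl).1 hU
    have hUK_A1 : UnmixedOn (cliqueAtOn G (A₁ ∪ B) v) A₁ :=
      (unmixedOn_congr agA1 le_rfl).1 (complete_unmixed hc1)
    have hUnion := unmixed_union hv1 hv2 hint hedge hUK_A1 hUK_B
    -- cut vertex of the union
    have hcvB : CutVertexOn (cliqueAtOn G (A₁ ∪ B) v) B x := (cutVertexOn_congr agΓK le_rfl).1 hx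
    have hcvA := cutVertex_union₂ hv1 hv2 hint hedge hxB hxv hcvB
    -- the H' graph
    have hclosure : ∀ c, c ∈ A₁ ∪ B → G.Adj x c → c ∈ B := by
      intro c hc hadj
      rcases hedge x c (Or.inr hxB) hc hadj with ⟨hxa, -⟩ | ⟨-, hcB⟩
      · exact absurd hxa hxA1
      · exact hcB
    have hid := ident_agree (G := G) (A := A₁ ∪ B) (S := B) (v := v) (x := x)
      Set.subset_union_right hxB hv2 hclosure
    have agGH : AgreeOn G (cliqueAtOn (cliqueAtOn G B v) B x) A₁ :=
      side_agree (fun c hc hcS => hint ⟨hc, hcS⟩)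
    have hedgeH : ∀ a b, a ∈ A₁ ∪ B → b ∈ A₁ ∪ B →
        (cliqueAtOn (cliqueAtOn G B v) B x).Adj a b →
        (a ∈ A₁ ∧ b ∈ A₁) ∨ (a ∈ B ∧ b ∈ B) := by
      intro a b ha hb hadj
      rw [cliqueAtOn_adj] at hadj
      rcases hadj with hadj | ⟨-, haB, hbB, -, -⟩
      · rw [cliqueAtOn_adj] at hadj
        rcases hadj with hadj | ⟨-, haB, hbB, -, -⟩
        · exact hedge a b ha hb hadj
        · exact Or.inr ⟨haB, hbB⟩
      · exact Or.inr ⟨haB, hbB⟩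
    have hc1H : ∀ a b : A₁,
        ((cliqueAtOn (cliqueAtOn (cliqueAtOn G B v) B x) A₁ v).induce A₁).Reachable a b → a ≠ b →
        ((cliqueAtOn (cliqueAtOn (cliqueAtOn G B v) B x) A₁ v).induce A₁).Adj a b :=
      complete_transfer (agGH.cliqueAtOn hv1) hc1
    have hint' : A₁ ∩ (B \ {x}) ⊆ {v} := fun c hc => hint ⟨hc.1, hc.2.1⟩
    refine StronglyUnmixedOn.cut _ _ hUnion x hcvA ?_ ?_ ?_
    · -- G ∖ x
      have hrec := ih1 G A₁ v hv1 hvBx hint' (hedge_restrict hxA1 hedge) hc1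
        ((hag.mono Set.diff_subset).trans (cliqueAtOn_agree_sub G Set.diff_subset v))
      rw [eset] at hrec
      exact su_congr hrec _ (cliqueAtOn_agree_sub G Set.diff_subset v).symm
    · -- (G_v)_x on A
      have hrec := ih2 (cliqueAtOn (cliqueAtOn G B v) B x) A₁ v hv1 hv2 hint hedgeH hc1H
        ((hag.cliqueAtOn hxB).trans (clq_agree le_rfl hxB).symm)
      exact su_congr hrec _ hid.symm
    · -- (G_v)_x on A ∖ x
      have hrec := ih3 (cliqueAtOn (cliqueAtOn G B v) B x) A₁ v hv1 hvBx hint'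
        (hedge_restrict hxA1 hedgeH) hc1H
        (((hag.cliqueAtOn hxB).mono Set.diff_subset).trans (clq_agree Set.diff_subset hxB).symm)
      rw [eset] at hrec
      refine su_congr hrec _ ?_
      exact ((cliqueAtOn_agree_sub (cliqueAtOn (cliqueAtOn G B v) B x) Set.diff_subset v).symm).trans
        (hid.symm.mono Set.diff_subset)

/-- Outer induction on the first side. -/
lemma main [Finite V] [DecidableEq V] :
    ∀ (Γ : SimpleGraph V) (B : Set V), StronglyUnmixedOn Γ B →
    ∀ (G : SimpleGraph V) (A₂ : Set V) (v : V),
      v ∈ B → v ∈ A₂ → B ∩ A₂ ⊆ {v} →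
      (∀ a b, a ∈ B ∪ A₂ → b ∈ B ∪ A₂ → G.Adj a b →
        (a ∈ B ∧ b ∈ B) ∨ (a ∈ A₂ ∧ b ∈ A₂)) →
      AgreeOn Γ (cliqueAtOn G B v) B →
      StronglyUnmixedOn (cliqueAtOn G A₂ v) A₂ →
      StronglyUnmixedOn (cliqueAtOn G (B ∪ A₂) v) (B ∪ A₂) := by
  intro Γ B hsu
  induction hsu with
  | complete Γ B hcomp =>
    intro G A₂ v hv1 hv2 hint hedge hag hsu2
    have hint' : A₂ ∩ B ⊆ {v} := by
      rw [Set.inter_comm]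
      exact hint
    have hedge' : ∀ a b, a ∈ B ∪ A₂ → b ∈ B ∪ A₂ → G.Adj a b →
        (a ∈ B ∧ b ∈ B) ∨ (a ∈ A₂ ∧ b ∈ A₂) := hedge
    have hc1 : ∀ a b : B, ((cliqueAtOn G B v).induce B).Reachable a b → a ≠ b →
        ((cliqueAtOn G B v).induce B).Adj a b := complete_transfer hag hcomp
    have h := lemC (cliqueAtOn G A₂ v) A₂ hsu2 G B v hv1 hv2 hint
      (fun a b ha hb hadj => hedge a b ha hb hadj) hc1 (AgreeOn.refl _ _)
    exact h
  | cut Γ B hU x hx h1 h2 h3 ih1 ih2 ih3 =>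
    intro G A₂ v hv1 hv2 hint hedge hag hsu2
    have agB : AgreeOn (cliqueAtOn G (B ∪ A₂) v) (cliqueAtOn G B v) B :=
      cliqueAtOn_agree_sub G Set.subset_union_left v
    have agA2 : AgreeOn (cliqueAtOn G A₂ v) (cliqueAtOn G (B ∪ A₂) v) A₂ :=
      (cliqueAtOn_agree_sub G Set.subset_union_right v).symm
    have agΓK : AgreeOn Γ (cliqueAtOn G (B ∪ A₂) v) B := hag.trans agB.symm
    have hxB : x ∈ B := hx.1
    have hxv : x ≠ v := by
      rintro rfl
      exact (by
        rw [cutVertexOn_congr agΓK le_rfl] at hx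
        exact apex_not_cut Set.subset_union_left hx)
    have hxA2 : x ∉ A₂ := fun h => hxv (hint ⟨hxB, h⟩)
    have hvBx : v ∈ B \ {x} := ⟨hv1, fun e => hxv (Set.eq_of_mem_singleton e).symm⟩
    have eset : (B \ {x}) ∪ A₂ = (B ∪ A₂) \ {x} := by
      rw [Set.union_diff_distrib, Set.diff_singleton_eq_self hxA2]
    have hUK_B : UnmixedOn (cliqueAtOn G (B ∪ A₂) v) B := (unmixedOn_congr agΓK le_rfl).1 hU
    have hUK_A2 : UnmixedOn (cliqueAtOn G (B ∪ A₂) v) A₂ :=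
      (unmixedOn_congr agA2 le_rfl).1 (su_unmixed hsu2)
    have hUnion := unmixed_union hv1 hv2 hint hedge hUK_B hUK_A2
    have hcvB : CutVertexOn (cliqueAtOn G (B ∪ A₂) v) B x := (cutVertexOn_congr agΓK le_rfl).1 hx
    have hcvA := cutVertex_union hv1 hv2 hint hedge hxB hxv hcvB
    have hclosure : ∀ c, c ∈ B ∪ A₂ → G.Adj x c → c ∈ B := by
      intro c hc hadj
      rcases hedge x c (Or.inl hxB) hc hadj with ⟨-, hcB⟩ | ⟨hxa, -⟩
      · exact hcB
      · exact absurd hxa hxA2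
    have hid := ident_agree (G := G) (A := B ∪ A₂) (S := B) (v := v) (x := x)
      Set.subset_union_left hxB hv1 hclosure
    have agGH : AgreeOn G (cliqueAtOn (cliqueAtOn G B v) B x) A₂ :=
      side_agree (fun c hc hcS => hint ⟨hcS, hc⟩)
    have hedgeH : ∀ a b, a ∈ B ∪ A₂ → b ∈ B ∪ A₂ →
        (cliqueAtOn (cliqueAtOn G B v) B x).Adj a b →
        (a ∈ B ∧ b ∈ B) ∨ (a ∈ A₂ ∧ b ∈ A₂) := by
      intro a b ha hb hadj
      rw [cliqueAtOn_adj] at hadj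
      rcases hadj with hadj | ⟨-, haB, hbB, -, -⟩
      · rw [cliqueAtOn_adj] at hadj
        rcases hadj with hadj | ⟨-, haB, hbB, -, -⟩
        · exact hedge a b ha hb hadj
        · exact Or.inl ⟨haB, hbB⟩
      · exact Or.inl ⟨haB, hbB⟩
    have hsu2H : StronglyUnmixedOn
        (cliqueAtOn (cliqueAtOn (cliqueAtOn G B v) B x) A₂ v) A₂ :=
      su_congr hsu2 _ (agGH.cliqueAtOn hv2)
    have hint2 : (B \ {x}) ∩ A₂ ⊆ {v} := fun c hc => hint ⟨hc.1.1, hc.2⟩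
    -- mirrored edge restriction
    have hedge_restrict' : ∀ (H : SimpleGraph V),
        (∀ a b, a ∈ B ∪ A₂ → b ∈ B ∪ A₂ → H.Adj a b →
          (a ∈ B ∧ b ∈ B) ∨ (a ∈ A₂ ∧ b ∈ A₂)) →
        ∀ a b, a ∈ (B \ {x}) ∪ A₂ → b ∈ (B \ {x}) ∪ A₂ → H.Adj a b →
          (a ∈ B \ {x} ∧ b ∈ B \ {x}) ∨ (a ∈ A₂ ∧ b ∈ A₂) := by
      intro H hedgeH' a b ha hb hadj
      have sub : (B \ {x}) ∪ A₂ ⊆ B ∪ A₂ := Set.union_subset_union_left _ Set.diff_subset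
      have hax : a ≠ x := by
        rintro rfl
        rcases ha with h | h
        · exact h.2 rfl
        · exact hxA2 h
      have hbx : b ≠ x := by
        rintro rfl
        rcases hb with h | h
        · exact h.2 rfl
        · exact hxA2 h
      rcases hedgeH' a b (sub ha) (sub hb) hadj with ⟨h5, h6⟩ | h
      · exact Or.inl ⟨⟨h5, hax⟩, ⟨h6, hbx⟩⟩
      · exact Or.inr h
    refine StronglyUnmixedOn.cut _ _ hUnion x hcvA ?_ ?_ ?_
    · have hrec := ih1 G A₂ v hvBx hv2 hint2 (hedge_restrict' G hedge)
        ((hag.mono Set.diff_subset).trans (cliqueAtOn_agree_sub G Set.diff_subset v)) hsu2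
      rw [eset] at hrec
      exact su_congr hrec _ (cliqueAtOn_agree_sub G Set.diff_subset v).symm
    · have hrec := ih2 (cliqueAtOn (cliqueAtOn G B v) B x) A₂ v hv1 hv2 hint hedgeH
        ((hag.cliqueAtOn hxB).trans (clq_agree le_rfl hxB).symm) hsu2H
      exact su_congr hrec _ hid.symm
    · have hrec := ih3 (cliqueAtOn (cliqueAtOn G B v) B x) A₂ v hvBx hv2 hint2
        (hedge_restrict' _ hedgeH)
        (((hag.cliqueAtOn hxB).mono Set.diff_subset).trans (clq_agree Set.diff_subset hxB).symm)
        hsu2H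
      rw [eset] at hrec
      refine su_congr hrec _ ?_
      exact ((cliqueAtOn_agree_sub (cliqueAtOn (cliqueAtOn G B v) B x) Set.diff_subset v).symm).trans
        (hid.symm.mono Set.diff_subset)
end SU6

/-- for `G = G₁ ∪ G₂` with `V(G₁) ∩ V(G₂) = {v}`, if `J_{(G₁)_v}` and
`J_{(G₂)_v}` are strongly unmixed, then `J_{G_v}` is strongly unmixed. -/
theorem stronglyUnmixed_cliqueAt_union {V : Type u} [Fintype V] [DecidableEq V]
    (G : SimpleGraph V) (A₁ A₂ : Set V) (v : V)
    (hunion : A₁ ∪ A₂ = Set.univ) (hinter : A₁ ∩ A₂ = {v})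
    (hedge : ∀ a b : V, G.Adj a b → (a ∈ A₁ ∧ b ∈ A₁) ∨ (a ∈ A₂ ∧ b ∈ A₂))
    (h1 : StronglyUnmixedOn (cliqueAtOn G A₁ v) A₁)
    (h2 : StronglyUnmixedOn (cliqueAtOn G A₂ v) A₂) :
    StronglyUnmixedOn (cliqueAtOn G Set.univ v) Set.univ := by
  have hv : v ∈ A₁ ∩ A₂ := by
    rw [hinter]
    exact rfl
  have hint : A₁ ∩ A₂ ⊆ {v} := hinter.le
  have h := SU6.main (cliqueAtOn G A₁ v) A₁ h1 G A₂ v hv.1 hv.2 hint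
    (fun a b _ _ hadj => hedge a b hadj) (SU6.AgreeOn.refl _ _) h2
  rwa [hunion] at h
end
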